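/- arXiv:1208.3324 — 11 statements merged into one kernel-verified Lean document; each statement's English description precedes it below -/
import Mathlib

section
/- If the triangle P1P2P3 is nondegenerate (the points are noncollinear) and the weight conditions (W) hold, then the function F(x,y) = Σ_{j=1}^3 m_j √((x−x_j)² + (y−y_j)²) attains its minimum over ℝ² at a unique point P* = (x*, y*); this point lies strictly inside the triangle P1P2P3 and satisfies the stationarity equations Σ_{j=1}^3 m_j (x* − x_j)/√((x*−x_j)²+(y*−y_j)²) = 0 and Σ_{j=1}^3 m_j (y* − y_j)/√((x*−x_j)²+(y*−y_j)²) = 0. -/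
/-!
A minimizer exists because the weighted distance sum is continuous and coercive. Near a point `p`
the cost is `M ‖q - p‖` plus a smooth function whose gradient `g` at `p` is the weighted sum of the
unit vectors from the points `P i ≠ p` to `p`, where `M` is the total weight sitting at `p`. Moving
from a minimizer in the direction `-g` changes the cost at rate `‖g‖ (M - ‖g‖)`, hence `‖g‖ ≤ M`.
At the vertex `A` this reads `m₂² + m₃² + 2 m₂ m₃ cos ∠BAC ≤ m₁²`, which the weight conditions
forbid; so the minimizer is no vertex, `g = 0` there, and solving `g = 0` for `p` writes it as a
convex combination of the vertices with positive coefficients. If `p ≠ q` were two minimizers, the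
cost at their midpoint would force equality in every triangle inequality
`‖(p - P i) + (q - P i)‖ ≤ ‖p - P i‖ + ‖q - P i‖`, putting all three vertices on the line `pq`.
-/

open Real Set Filter Topology EuclideanGeometry
open scoped RealInnerProductSpace

section

variable {E : Type*} [NormedAddCommGroup E] [InnerProductSpace ℝ E]

theorem HasDerivAt.norm {f : ℝ → E} {f' : E} {x : ℝ} (hf : HasDerivAt f f' x) (h0 : f x ≠ 0) :
    HasDerivAt (fun t => ‖f t‖) (⟪f x, f'⟫ / ‖f x‖) x := by
  simpa [sqrt_sq (norm_nonneg _), mul_div_mul_left] using hf.norm_sq.sqrt (by positivity)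

theorem HasDerivAt.nonneg_of_isMinOn_Ici {f : ℝ → ℝ} {f' x : ℝ} (hf : HasDerivAt f f' x)
    (hmin : IsMinOn f (Ici x) x) : 0 ≤ f' := by
  by_contra! hf'
  obtain ⟨t, hslope, ht⟩ :=
    ((hf.hasDerivWithinAt.liminf_right_slope_le hf').and_eventually self_mem_nhdsWithin).exists
  refine hslope.not_ge ?_
  rw [slope_def_field]
  exact div_nonneg (sub_nonneg.2 (hmin (mem_Ici.2 ht.le))) (sub_nonneg.2 ht.le)

theorem InnerProductGeometry.norm_smul_inv_norm_add_smul_inv_norm_sq {x y : E} (hx : x ≠ 0)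
    (hy : y ≠ 0) (a b : ℝ) :
    ‖a • ‖x‖⁻¹ • x + b • ‖y‖⁻¹ • y‖ ^ 2
      = a ^ 2 + b ^ 2 + 2 * a * b * cos (InnerProductGeometry.angle x y) := by
  have hx' : ‖x‖ ≠ 0 := norm_ne_zero_iff.2 hx
  have hy' : ‖y‖ ≠ 0 := norm_ne_zero_iff.2 hy
  simp only [norm_add_sq_real, norm_smul, real_inner_smul_left, real_inner_smul_right,
    InnerProductGeometry.cos_angle, norm_inv, Real.norm_eq_abs, abs_norm, mul_pow, sq_abs]
  field_simp
  ring

end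

theorem SameRay.mem_affineSpan_pair {V : Type*} [AddCommGroup V] [Module ℝ V] {p q a : V}
    (h : SameRay ℝ (p - a) (q - a)) (hpq : p ≠ q) : a ∈ line[ℝ, p, q] := by
  rcases eq_or_ne (p - a) 0 with hpa | hpa
  · rw [← sub_eq_zero.1 hpa]
    exact left_mem_affineSpan_pair ℝ p q
  obtain ⟨r, -, hr⟩ := h.exists_nonneg_left hpa
  have hqp : q - p = (r - 1) • (p - a) := by rw [sub_smul, one_smul, hr]; abel
  have hr1 : r - 1 ≠ 0 := fun h1 => hpq (sub_eq_zero.1 (by rw [hqp, h1, zero_smul])).symm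
  convert AffineMap.lineMap_mem_affineSpan_pair (-(r - 1)⁻¹) p q using 1
  rw [AffineMap.lineMap_apply, vsub_eq_sub, vadd_eq_add, hqp, smul_smul, neg_mul,
    inv_mul_cancel₀ hr1]
  module

namespace FermatWeber

section Metric

variable {X : Type*} [PseudoMetricSpace X] {ι : Type*} [Fintype ι]

def cost (m : ι → ℝ) (P : ι → X) (q : X) : ℝ := ∑ i, m i * dist q (P i)

variable {m : ι → ℝ} {P : ι → X}

theorem continuous_cost : Continuous (cost m P) :=
  continuous_finsetSum _ fun _ _ => continuous_const.mul (continuous_id.dist continuous_const)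

theorem exists_isMinOn_cost [ProperSpace X] (hm : ∀ i, 0 ≤ m i) {k : ι}
    (hk : 0 < m k) : ∃ p, IsMinOn (cost m P) univ p := by
  have : Nonempty X := ⟨P k⟩
  have hcoercive : Tendsto (cost m P) (cocompact X) atTop := by
    refine tendsto_atTop_mono (fun q => ?_)
      ((tendsto_dist_right_cocompact_atTop (P k)).const_mul_atTop hk)
    exact Finset.single_le_sum (fun i _ => mul_nonneg (hm i) dist_nonneg) (Finset.mem_univ k)
  obtain ⟨p, hp⟩ := continuous_cost.exists_forall_le hcoercive
  exact ⟨p, fun q _ => hp q⟩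

end Metric

variable {E : Type*} [NormedAddCommGroup E] [InnerProductSpace ℝ E] {ι : Type*} [Fintype ι]

/-- For `p` distinct from all `P i` this is the gradient of `cost m P` at `p`; a term with
`P i = p` vanishes because `0⁻¹ = 0`. -/
noncomputable def resultant (m : ι → ℝ) (P : ι → E) (p : E) : E :=
  ∑ i, m i • ‖p - P i‖⁻¹ • (p - P i)

variable {m : ι → ℝ} {P : ι → E}

open Classical in
theorem norm_resultant_le_of_isMinOn (hm : ∀ i, 0 ≤ m i) {p : E}
    (hp : IsMinOn (cost m P) univ p) : ‖resultant m P p‖ ≤ ∑ i with P i = p, m i := by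
  set g := resultant m P p
  -- `cost m P (p - t • g)` for `t ≥ 0`, with the terms that are singular at `t = 0` made linear
  let ρ : ℝ → ℝ := fun t => ∑ i, m i * if P i = p then t * ‖g‖ else ‖p - P i - t • g‖
  have hρ : ∀ t, 0 ≤ t → ρ t = cost m P (p - t • g) := by
    intro t ht
    refine Finset.sum_congr rfl fun i _ => ?_
    split_ifs with h
    · rw [h, dist_eq_norm, sub_sub_cancel_left, norm_neg, norm_smul, norm_of_nonneg ht]
    · rw [dist_eq_norm, sub_right_comm]
  have hρ' : HasDerivAt ρ (∑ i, m i * if P i = p then ‖g‖ else ⟪p - P i, -g⟫ / ‖p - P i‖) 0 := by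
    refine HasDerivAt.fun_sum fun i _ => HasDerivAt.const_mul _ ?_
    split_ifs with h
    · simpa using (hasDerivAt_id (0 : ℝ)).mul_const ‖g‖
    · simpa using ((hasDerivAt_id (0 : ℝ)).smul_const g).const_sub (p - P i) |>.norm
        (by simpa [sub_eq_zero] using Ne.symm h)
  have hg : ‖g‖ ^ 2 = ∑ i, m i * (‖p - P i‖⁻¹ * ⟪p - P i, g⟫) := calc
    ‖g‖ ^ 2 = ⟪resultant m P p, g⟫ := (real_inner_self_eq_norm_sq g).symm
    _ = _ := by simp only [resultant, sum_inner, real_inner_smul_left]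
  have hderiv_eq : (∑ i, m i * if P i = p then ‖g‖ else ⟪p - P i, -g⟫ / ‖p - P i‖)
      = (∑ i with P i = p, m i) * ‖g‖ - ‖g‖ ^ 2 := by
    rw [hg, Finset.sum_filter, Finset.sum_mul, ← Finset.sum_sub_distrib]
    refine Finset.sum_congr rfl fun i _ => ?_
    split_ifs with h
    · simp [h]
    · rw [inner_neg_right]; ring
  have hM : 0 ≤ ∑ i with P i = p, m i := Finset.sum_nonneg fun i _ => hm i
  have hnonneg := hρ'.nonneg_of_isMinOn_Ici fun t ht => by
    rw [mem_ofPred_eq, hρ 0 le_rfl, hρ t ht, zero_smul, sub_zero]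
    exact hp (mem_univ _)
  rw [hderiv_eq] at hnonneg
  nlinarith [norm_nonneg g]

theorem resultant_eq_zero_of_isMinOn (hm : ∀ i, 0 ≤ m i) {p : E}
    (hp : IsMinOn (cost m P) univ p) (hP : ∀ i, P i ≠ p) : resultant m P p = 0 := by
  classical
  simpa [hP] using norm_resultant_le_of_isMinOn hm hp

theorem exists_pos_sum_smul_eq_of_resultant_eq_zero [Nonempty ι] (hm : ∀ i, 0 < m i) {p : E}
    (hP : ∀ i, P i ≠ p) (h : resultant m P p = 0) :
    ∃ l : ι → ℝ, (∀ i, 0 < l i) ∧ ∑ i, l i = 1 ∧ ∑ i, l i • P i = p := by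
  set w : ι → ℝ := fun i => m i / ‖p - P i‖
  have hw : ∀ i, 0 < w i := fun i => div_pos (hm i) (norm_pos_iff.2 (sub_ne_zero.2 (hP i).symm))
  set S := ∑ i, w i
  have hS : 0 < S := Finset.sum_pos (fun i _ => hw i) Finset.univ_nonempty
  have hres : resultant m P p = S • p - ∑ i, w i • P i := by
    simp only [resultant, smul_smul, smul_sub, Finset.sum_sub_distrib, ← Finset.sum_smul, S, w,
      div_eq_mul_inv]
  have hwP : ∑ i, w i • P i = S • p := (sub_eq_zero.1 (hres ▸ h)).symm
  refine ⟨fun i => w i / S, fun i => div_pos (hw i) hS, by rw [← Finset.sum_div, div_self hS.ne'],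
    ?_⟩
  simp_rw [div_eq_inv_mul, ← smul_smul, ← Finset.smul_sum, hwP, smul_smul, inv_mul_cancel₀ hS.ne',
    one_smul]

theorem sameRay_sub_of_isMinOn (hm : ∀ i, 0 < m i) {p q : E} (hp : IsMinOn (cost m P) univ p)
    (hq : IsMinOn (cost m P) univ q) (i : ι) : SameRay ℝ (p - P i) (q - P i) := by
  set c : E := (2 : ℝ)⁻¹ • (p + q)
  have hdefect : ∑ j, m j * (‖p - P j‖ + ‖q - P j‖ - ‖(p - P j) + (q - P j)‖)
      = cost m P p + cost m P q - 2 * cost m P c := by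
    simp only [cost, Finset.mul_sum, ← Finset.sum_add_distrib, ← Finset.sum_sub_distrib]
    refine Finset.sum_congr rfl fun j _ => ?_
    have : (p - P j) + (q - P j) = (2 : ℝ) • (c - P j) := by simp only [c]; module
    rw [this, norm_smul, dist_eq_norm, dist_eq_norm, dist_eq_norm, Real.norm_two]
    ring
  have hterm : ∀ j ∈ Finset.univ, 0 ≤ m j * (‖p - P j‖ + ‖q - P j‖ - ‖(p - P j) + (q - P j)‖) :=
    fun j _ => mul_nonneg (hm j).le (sub_nonneg.2 (norm_add_le _ _))
  have hsum : ∑ j, m j * (‖p - P j‖ + ‖q - P j‖ - ‖(p - P j) + (q - P j)‖) = 0 := by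
    refine le_antisymm ?_ (Finset.sum_nonneg hterm)
    rw [hdefect]
    linarith [isMinOn_univ_iff.1 hp c, isMinOn_univ_iff.1 hq c]
  have hzero := (Finset.sum_eq_zero_iff_of_nonneg hterm).1 hsum i (Finset.mem_univ i)
  rw [mul_eq_zero, or_iff_right (hm i).ne', sub_eq_zero] at hzero
  exact sameRay_iff_norm_add.2 hzero.symm

theorem ne_of_isMinOn_cost_of_sq_lt {A B C p : E} {m₁ m₂ m₃ : ℝ} (hm₁ : 0 ≤ m₁) (hm₂ : 0 ≤ m₂)
    (hm₃ : 0 ≤ m₃) (hBA : B ≠ A) (hCA : C ≠ A)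
    (hW : m₁ ^ 2 < m₂ ^ 2 + m₃ ^ 2 + 2 * m₂ * m₃ * cos (∠ B A C))
    (hp : IsMinOn (cost ![m₁, m₂, m₃] ![A, B, C]) univ p) : p ≠ A := by
  classical
  rintro rfl
  have hle := norm_resultant_le_of_isMinOn (by simp [Fin.forall_fin_succ, *]) hp
  have hM : ∑ i with ![p, B, C] i = p, ![m₁, m₂, m₃] i = m₁ := by
    simp [Finset.sum_filter, Fin.sum_univ_three, hBA, hCA]
  have hres : resultant ![m₁, m₂, m₃] ![p, B, C] p
      = m₂ • ‖p - B‖⁻¹ • (p - B) + m₃ • ‖p - C‖⁻¹ • (p - C) := by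
    simp [resultant, Fin.sum_univ_three]
  have hsq := InnerProductGeometry.norm_smul_inv_norm_add_smul_inv_norm_sq
    (sub_ne_zero.2 hBA.symm) (sub_ne_zero.2 hCA.symm) m₂ m₃
  have hangle : InnerProductGeometry.angle (p - B) (p - C) = ∠ B p C := by
    rw [← neg_sub B, ← neg_sub C, InnerProductGeometry.angle_neg_neg]; rfl
  rw [hangle] at hsq
  rw [hM, hres] at hle
  nlinarith [norm_nonneg (m₂ • ‖p - B‖⁻¹ • (p - B) + m₃ • ‖p - C‖⁻¹ • (p - C))]

theorem existsUnique_isMinOn_cost_of_not_collinear [ProperSpace E] {A B C : E} {m₁ m₂ m₃ : ℝ}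
    (hm₁ : 0 < m₁) (hm₂ : 0 < m₂) (hm₃ : 0 < m₃) (hABC : ¬ Collinear ℝ {A, B, C})
    (hA : m₁ ^ 2 < m₂ ^ 2 + m₃ ^ 2 + 2 * m₂ * m₃ * cos (∠ B A C))
    (hB : m₂ ^ 2 < m₁ ^ 2 + m₃ ^ 2 + 2 * m₁ * m₃ * cos (∠ A B C))
    (hC : m₃ ^ 2 < m₁ ^ 2 + m₂ ^ 2 + 2 * m₁ * m₂ * cos (∠ A C B)) :
    ∃ p, IsMinOn (cost ![m₁, m₂, m₃] ![A, B, C]) univ p ∧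
      (∀ q, IsMinOn (cost ![m₁, m₂, m₃] ![A, B, C]) univ q → q = p) ∧
      (∃ l : Fin 3 → ℝ, (∀ i, 0 < l i) ∧ ∑ i, l i = 1 ∧ ∑ i, l i • ![A, B, C] i = p) ∧
      resultant ![m₁, m₂, m₃] ![A, B, C] p = 0 := by
  have hm : ∀ i, 0 < ![m₁, m₂, m₃] i := by simp [Fin.forall_fin_succ, *]
  have hAB := ne₁₂_of_not_collinear hABC
  have hAC := ne₁₃_of_not_collinear hABC
  have hBC := ne₂₃_of_not_collinear hABC
  obtain ⟨p, hp⟩ := exists_isMinOn_cost (P := ![A, B, C]) (fun i => (hm i).le) (hm 0)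
  have hcost_B : cost ![m₂, m₁, m₃] ![B, A, C] = cost ![m₁, m₂, m₃] ![A, B, C] := by
    ext; simp [cost, Fin.sum_univ_three]; ring
  have hcost_C : cost ![m₃, m₁, m₂] ![C, A, B] = cost ![m₁, m₂, m₃] ![A, B, C] := by
    ext; simp [cost, Fin.sum_univ_three]; ring
  have hpA := ne_of_isMinOn_cost_of_sq_lt hm₁.le hm₂.le hm₃.le hAB.symm hAC.symm hA hp
  have hpB := ne_of_isMinOn_cost_of_sq_lt hm₂.le hm₁.le hm₃.le hAB hBC.symm hB (hcost_B ▸ hp)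
  have hpC := ne_of_isMinOn_cost_of_sq_lt hm₃.le hm₁.le hm₂.le hAC hBC hC (hcost_C ▸ hp)
  have hP : ∀ i, ![A, B, C] i ≠ p := by simp [Fin.forall_fin_succ, hpA.symm, hpB.symm, hpC.symm]
  have hres := resultant_eq_zero_of_isMinOn (fun i => (hm i).le) hp hP
  refine ⟨p, hp, fun q hq => ?_, exists_pos_sum_smul_eq_of_resultant_eq_zero hm hP hres, hres⟩
  by_contra hqp
  have hline i := (sameRay_sub_of_isMinOn hm hq hp i).mem_affineSpan_pair hqp
  exact hABC (collinear_triple_of_mem_affineSpan_pair (hline 0) (hline 1) (hline 2))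

theorem resultant_apply {n : Type*} [Fintype n] (m : ι → ℝ) (P : ι → EuclideanSpace ℝ n)
    (p : EuclideanSpace ℝ n) (j : n) :
    resultant m P p j = ∑ i, m i * (p j - P i j) / dist p (P i) := by
  simp only [resultant, WithLp.ofLp_sum, WithLp.ofLp_smul, WithLp.ofLp_sub, Finset.sum_apply,
    Pi.smul_apply, Pi.sub_apply, smul_eq_mul, dist_eq_norm]
  exact Finset.sum_congr rfl fun i _ => by ring

end FermatWeber

namespace EuclideanSpace

theorem exists_eq_toLp_fin_two (p : EuclideanSpace ℝ (Fin 2)) : ∃ x y, p = !₂[x, y] :=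
  ⟨p 0, p 1, by ext i; fin_cases i <;> rfl⟩

theorem dist_toLp_fin_two (a b c d : ℝ) :
    dist !₂[a, b] !₂[c, d] = √((a - c) ^ 2 + (b - d) ^ 2) := by
  simp [EuclideanSpace.dist_eq, Fin.sum_univ_two, Real.dist_eq]

theorem cos_angle_toLp_fin_two (a₁ b₁ a₂ b₂ a₃ b₃ : ℝ) :
    cos (∠ !₂[a₁, b₁] !₂[a₂, b₂] !₂[a₃, b₃])
      = ((a₁ - a₂) * (a₃ - a₂) + (b₁ - b₂) * (b₃ - b₂))
        / (dist !₂[a₁, b₁] !₂[a₂, b₂] * dist !₂[a₃, b₃] !₂[a₂, b₂]) := by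
  rw [EuclideanGeometry.angle, InnerProductGeometry.cos_angle, dist_eq_norm_vsub,
    dist_eq_norm_vsub]
  simp [PiLp.inner_apply, Fin.sum_univ_two]
  ring

theorem not_collinear_toLp_fin_two {x₁ y₁ x₂ y₂ x₃ y₃ : ℝ}
    (h : x₁ * y₂ + x₂ * y₃ + x₃ * y₁ - x₁ * y₃ - x₃ * y₂ - x₂ * y₁ ≠ 0) :
    ¬ Collinear ℝ {!₂[x₁, y₁], !₂[x₂, y₂], !₂[x₃, y₃]} := by
  rw [collinear_iff_of_mem (mem_insert _ _)]
  rintro ⟨v, hv⟩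
  obtain ⟨r₂, h₂⟩ := hv !₂[x₂, y₂] (by simp)
  obtain ⟨r₃, h₃⟩ := hv !₂[x₃, y₃] (by simp)
  have hx₂ := congrArg (· 0) h₂
  have hy₂ := congrArg (· 1) h₂
  have hx₃ := congrArg (· 0) h₃
  have hy₃ := congrArg (· 1) h₃
  simp only [Matrix.cons_val_zero, Matrix.cons_val_one, Matrix.cons_val_fin_one, vadd_eq_add,
    PiLp.add_apply, PiLp.smul_apply, smul_eq_mul] at hx₂ hy₂ hx₃ hy₃
  subst hx₂ hy₂ hx₃ hy₃
  exact h (by ring)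

end EuclideanSpace

open FermatWeber EuclideanSpace in
/-- Generalized Fermat–Torricelli problem: under the weight conditions (W),
`F` attains its minimum at a unique point, which lies strictly inside the
triangle and satisfies the stationarity equations. -/
theorem generalized_fermat_torricelli_existence_uniqueness
    (x1 y1 x2 y2 x3 y3 m1 m2 m3 : ℝ)
    (hm1 : 0 < m1) (hm2 : 0 < m2) (hm3 : 0 < m3)
    (hnd : x1*y2 + x2*y3 + x3*y1 - x1*y3 - x3*y2 - x2*y1 ≠ 0)
    (r12 r13 r23 : ℝ)
    (hr12 : r12 = Real.sqrt ((x1-x2)^2 + (y1-y2)^2))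
    (hr13 : r13 = Real.sqrt ((x1-x3)^2 + (y1-y3)^2))
    (hr23 : r23 = Real.sqrt ((x2-x3)^2 + (y2-y3)^2))
    (cosα1 cosα2 cosα3 : ℝ)
    (hc1 : cosα1 = ((x2-x1)*(x3-x1) + (y2-y1)*(y3-y1)) / (r12 * r13))
    (hc2 : cosα2 = ((x1-x2)*(x3-x2) + (y1-y2)*(y3-y2)) / (r12 * r23))
    (hc3 : cosα3 = ((x1-x3)*(x2-x3) + (y1-y3)*(y2-y3)) / (r13 * r23))
    (hW1 : m1^2 < m2^2 + m3^2 + 2*m2*m3*cosα1)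
    (hW2 : m2^2 < m1^2 + m3^2 + 2*m1*m3*cosα2)
    (hW3 : m3^2 < m1^2 + m2^2 + 2*m1*m2*cosα3)
    (F : ℝ → ℝ → ℝ)
    (hF : ∀ x y, F x y =
        m1 * Real.sqrt ((x-x1)^2 + (y-y1)^2)
      + m2 * Real.sqrt ((x-x2)^2 + (y-y2)^2)
      + m3 * Real.sqrt ((x-x3)^2 + (y-y3)^2)) :
    ∃ xs ys : ℝ,
      (∀ x y : ℝ, F xs ys ≤ F x y) ∧
      (∀ x y : ℝ, (∀ u v : ℝ, F x y ≤ F u v) → (x, y) = (xs, ys)) ∧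
      (∃ l1 l2 l3 : ℝ, 0 < l1 ∧ 0 < l2 ∧ 0 < l3 ∧ l1 + l2 + l3 = 1 ∧
        xs = l1*x1 + l2*x2 + l3*x3 ∧ ys = l1*y1 + l2*y2 + l3*y3) ∧
      (m1*(xs-x1)/Real.sqrt ((xs-x1)^2 + (ys-y1)^2)
        + m2*(xs-x2)/Real.sqrt ((xs-x2)^2 + (ys-y2)^2)
        + m3*(xs-x3)/Real.sqrt ((xs-x3)^2 + (ys-y3)^2) = 0) ∧
      (m1*(ys-y1)/Real.sqrt ((xs-x1)^2 + (ys-y1)^2)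
        + m2*(ys-y2)/Real.sqrt ((xs-x2)^2 + (ys-y2)^2)
        + m3*(ys-y3)/Real.sqrt ((xs-x3)^2 + (ys-y3)^2) = 0) := by
  have hFcost : ∀ x y,
      F x y = cost ![m1, m2, m3] ![!₂[x1, y1], !₂[x2, y2], !₂[x3, y3]] !₂[x, y] := by
    simp [hF, cost, Fin.sum_univ_three, dist_toLp_fin_two]
  rw [← dist_toLp_fin_two] at hr12 hr13 hr23
  set A : EuclideanSpace ℝ (Fin 2) := !₂[x1, y1]
  set B : EuclideanSpace ℝ (Fin 2) := !₂[x2, y2]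
  set C : EuclideanSpace ℝ (Fin 2) := !₂[x3, y3]
  obtain ⟨p, hmin, huniq, ⟨l, hl, hl1, hlp⟩, hres⟩ :=
    existsUnique_isMinOn_cost_of_not_collinear hm1 hm2 hm3 (not_collinear_toLp_fin_two hnd)
    (by rwa [cos_angle_toLp_fin_two, dist_comm B, dist_comm C, ← hr12, ← hr13, ← hc1])
    (by rwa [cos_angle_toLp_fin_two, dist_comm C, ← hr12, ← hr23, ← hc2])
    (by rwa [cos_angle_toLp_fin_two, ← hr13, ← hr23, ← hc3])
  obtain ⟨xs, ys, rfl⟩ := exists_eq_toLp_fin_two p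
  refine ⟨xs, ys, fun x y => ?_, fun x y hxy => ?_,
    ⟨l 0, l 1, l 2, hl 0, hl 1, hl 2, ?_, ?_, ?_⟩, ?_, ?_⟩
  · rw [hFcost, hFcost]
    exact hmin (mem_univ _)
  · have h := huniq !₂[x, y] <| isMinOn_univ_iff.2 fun q => by
      obtain ⟨u, v, rfl⟩ := exists_eq_toLp_fin_two q
      rw [← hFcost, ← hFcost]
      exact hxy u v
    simpa using h
  · simpa [Fin.sum_univ_three] using hl1
  · simpa [Fin.sum_univ_three] using (congrArg (· 0) hlp).symm
  · simpa [Fin.sum_univ_three] using (congrArg (· 1) hlp).symm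
  · simpa [resultant_apply, Fin.sum_univ_three, dist_toLp_fin_two] using congrArg (· 0) hres
  · simpa [resultant_apply, Fin.sum_univ_three, dist_toLp_fin_two] using congrArg (· 1) hres
end

section
/- If the triangle P1P2P3 is nondegenerate and the weight conditions (W) hold, then −m1⁴ − m2⁴ − m3⁴ + 2 m1² m2² + 2 m1² m3² + 2 m2² m3² > 0; equivalently, the positive numbers m1, m2, m3 satisfy the strict triangle inequalities, so that a nondegenerate triangle with side lengths m1, m2, m3 exists. -/
/-! Since the triangle is nondegenerate, no two of its sides are parallel, so the strict
Cauchy–Schwarz inequality gives `cos αⱼ < 1` at every corner. Then (W) at `P₁` yields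
`m₁² < m₂² + m₃² + 2 m₂ m₃ = (m₂ + m₃)²`, i.e. `m₁ < m₂ + m₃`, and likewise at the other corners.
The quartic is Heron's `(m₁+m₂+m₃)(−m₁+m₂+m₃)(m₁−m₂+m₃)(m₁+m₂−m₃)`, a product of positive factors. -/

/-- The hypothesis `p * q - s ^ 2 = c ^ 2` is Lagrange's identity
`‖u‖² ‖v‖² - ⟪u, v⟫² = (u × v)²` for plane vectors `u`, `v`. -/
lemma div_sqrt_mul_sqrt_lt_one {p q s c : ℝ} (hp : 0 ≤ p) (hlag : p * q - s ^ 2 = c ^ 2)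
    (hc : c ≠ 0) : s / (√p * √q) < 1 := by
  have hs : s ^ 2 < p * q := by linarith [pow_pos (abs_pos.mpr hc) 2, sq_abs c]
  have hpq : 0 < p * q := (sq_nonneg s).trans_lt hs
  rw [← Real.sqrt_mul hp, div_lt_one (Real.sqrt_pos.mpr hpq)]
  calc s ≤ |s| := le_abs_self s
    _ = √(s ^ 2) := (Real.sqrt_sq_eq_abs s).symm
    _ < √(p * q) := Real.sqrt_lt_sqrt (sq_nonneg s) hs

lemma lt_add_of_sq_lt_of_cos_lt_one {a b c k : ℝ} (hb : 0 < b) (hc : 0 < c) (hk : k < 1)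
    (h : a ^ 2 < b ^ 2 + c ^ 2 + 2 * b * c * k) : a < b + c := by
  have hsq : a ^ 2 < (b + c) ^ 2 := by nlinarith [mul_pos hb hc]
  exact (abs_lt_of_sq_lt_sq' hsq (by positivity)).2

lemma heron_pos {a b c : ℝ} (hab : a < b + c) (hba : b < a + c) (hca : c < a + b) :
    0 < -a ^ 4 - b ^ 4 - c ^ 4 + 2 * a ^ 2 * b ^ 2 + 2 * a ^ 2 * c ^ 2 + 2 * b ^ 2 * c ^ 2 := by
  have hsum : 0 < a + b + c := by linarith
  calc (0 : ℝ) < (a + b + c) * (b + c - a) * (a + c - b) * (a + b - c) := by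
        have := sub_pos.mpr hab; have := sub_pos.mpr hba; have := sub_pos.mpr hca
        positivity
    _ = _ := by ring

/-- Under the weight conditions (W) for a nondegenerate triangle, the weights
`m1, m2, m3` satisfy the strict triangle inequalities, equivalently the
quantity `−m1⁴ − m2⁴ − m3⁴ + 2m1²m2² + 2m1²m3² + 2m2²m3²` is positive. -/
theorem weights_form_triangle
    (x1 y1 x2 y2 x3 y3 m1 m2 m3 : ℝ)
    (hm1 : 0 < m1) (hm2 : 0 < m2) (hm3 : 0 < m3)
    (hnd : x1*y2 + x2*y3 + x3*y1 - x1*y3 - x3*y2 - x2*y1 ≠ 0)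
    (r12 r13 r23 : ℝ)
    (hr12 : r12 = Real.sqrt ((x1-x2)^2 + (y1-y2)^2))
    (hr13 : r13 = Real.sqrt ((x1-x3)^2 + (y1-y3)^2))
    (hr23 : r23 = Real.sqrt ((x2-x3)^2 + (y2-y3)^2))
    (cosα1 cosα2 cosα3 : ℝ)
    (hc1 : cosα1 = ((x2-x1)*(x3-x1) + (y2-y1)*(y3-y1)) / (r12 * r13))
    (hc2 : cosα2 = ((x1-x2)*(x3-x2) + (y1-y2)*(y3-y2)) / (r12 * r23))
    (hc3 : cosα3 = ((x1-x3)*(x2-x3) + (y1-y3)*(y2-y3)) / (r13 * r23))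
    (hW1 : m1^2 < m2^2 + m3^2 + 2*m2*m3*cosα1)
    (hW2 : m2^2 < m1^2 + m3^2 + 2*m1*m3*cosα2)
    (hW3 : m3^2 < m1^2 + m2^2 + 2*m1*m2*cosα3) :
    0 < -m1^4 - m2^4 - m3^4 + 2*m1^2*m2^2 + 2*m1^2*m3^2 + 2*m2^2*m3^2 ∧
    m1 < m2 + m3 ∧ m2 < m1 + m3 ∧ m3 < m1 + m2 := by
  have hcos1 : cosα1 < 1 := by
    rw [hc1, hr12, hr13]
    exact div_sqrt_mul_sqrt_lt_one (by positivity) (by ring) hnd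
  have hcos2 : cosα2 < 1 := by
    rw [hc2, hr12, hr23]
    exact div_sqrt_mul_sqrt_lt_one (by positivity) (by ring) hnd
  have hcos3 : cosα3 < 1 := by
    rw [hc3, hr13, hr23]
    exact div_sqrt_mul_sqrt_lt_one (by positivity) (by ring) hnd
  have h1 : m1 < m2 + m3 := lt_add_of_sq_lt_of_cos_lt_one hm2 hm3 hcos1 hW1
  have h2 : m2 < m1 + m3 := lt_add_of_sq_lt_of_cos_lt_one hm1 hm3 hcos2 hW2
  have h3 : m3 < m1 + m2 := lt_add_of_sq_lt_of_cos_lt_one hm1 hm2 hcos3 hW3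
  exact ⟨heron_pos h1 h2 h3, h1, h2, h3⟩
end

section
/- Under the assumption that −m1⁴ − m2⁴ − m3⁴ + 2m1²m2² + 2m1²m3² + 2m2²m3² ≥ 0 (so that σ is real), the identity K1·K2 + K1·K3 + K2·K3 = 4 σ S d holds, where d = (m1²K1 + m2²K2 + m3²K3)/(2σ); equivalently, K1·K2 + K1·K3 + K2·K3 = 2 S (m1²K1 + m2²K2 + m3²K3). -/
/-!
Write `Kᵢ = Aᵢ σ + aᵢ S`, where the `Aᵢ` are built from the squared side lengths and the `aᵢ`
from the squared masses in the same way. Expanding, the cross terms in `σ S` cancel and the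
difference of the two sides is `σ² H(r²) - S² H(m²)`, with
`H(u, v, w) = 2uv + 2uw + 2vw - u² - v² - w²`. Heron's formula says `H(r²) = 4 S²`, since `S` is
twice the area of the triangle, and `H(m²) = 4 σ²` by the definition of `σ`; so the difference
vanishes.
-/

section HeronForm

variable {R : Type*} [CommRing R]

def heronForm (u v w : R) : R :=
  2 * u * v + 2 * u * w + 2 * v * w - u ^ 2 - v ^ 2 - w ^ 2

theorem heronForm_dist_sq (x1 y1 x2 y2 x3 y3 : R) :
    heronForm ((x2 - x3) ^ 2 + (y2 - y3) ^ 2) ((x1 - x3) ^ 2 + (y1 - y3) ^ 2)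
      ((x1 - x2) ^ 2 + (y1 - y2) ^ 2) =
    4 * (x1 * y2 + x2 * y3 + x3 * y1 - x1 * y3 - x3 * y2 - x2 * y1) ^ 2 := by
  unfold heronForm
  ring

theorem pairwise_products_sub_eq_heronForm {u v w p q r σ S K1 K2 K3 : R}
    (hK1 : K1 = (w + v - u) * σ + (q + r - p) * S)
    (hK2 : K2 = (u + w - v) * σ + (p + r - q) * S)
    (hK3 : K3 = (v + u - w) * σ + (p + q - r) * S) :
    K1 * K2 + K1 * K3 + K2 * K3 - 2 * S * (p * K1 + q * K2 + r * K3) =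
      σ ^ 2 * heronForm u v w - S ^ 2 * heronForm p q r := by
  subst hK1 hK2 hK3
  unfold heronForm
  ring

end HeronForm

theorem identity_K1K2_sum_general
    (x1 y1 x2 y2 x3 y3 m1 m2 m3 : ℝ)
    (hrad : 0 ≤ -m1^4 - m2^4 - m3^4 + 2*m1^2*m2^2 + 2*m1^2*m3^2 + 2*m2^2*m3^2)
    (r12 r13 r23 S σ K1 K2 K3 : ℝ)
    (hr12 : r12 = Real.sqrt ((x1-x2)^2 + (y1-y2)^2))
    (hr13 : r13 = Real.sqrt ((x1-x3)^2 + (y1-y3)^2))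
    (hr23 : r23 = Real.sqrt ((x2-x3)^2 + (y2-y3)^2))
    (hS : S = |x1*y2 + x2*y3 + x3*y1 - x1*y3 - x3*y2 - x2*y1|)
    (hσ : σ = (1/2) * Real.sqrt
        (-m1^4 - m2^4 - m3^4 + 2*m1^2*m2^2 + 2*m1^2*m3^2 + 2*m2^2*m3^2))
    (hK1 : K1 = (r12^2 + r13^2 - r23^2)*σ + (m2^2 + m3^2 - m1^2)*S)
    (hK2 : K2 = (r23^2 + r12^2 - r13^2)*σ + (m1^2 + m3^2 - m2^2)*S)
    (hK3 : K3 = (r13^2 + r23^2 - r12^2)*σ + (m1^2 + m2^2 - m3^2)*S) :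
    K1*K2 + K1*K3 + K2*K3 = 2*S*(m1^2*K1 + m2^2*K2 + m3^2*K3) := by
  have h_sides : heronForm (r23 ^ 2) (r13 ^ 2) (r12 ^ 2) = 4 * S ^ 2 := by
    rw [hr12, hr13, hr23, hS, sq_abs, Real.sq_sqrt (by positivity), Real.sq_sqrt (by positivity),
      Real.sq_sqrt (by positivity)]
    exact heronForm_dist_sq x1 y1 x2 y2 x3 y3
  have h_masses : heronForm (m1 ^ 2) (m2 ^ 2) (m3 ^ 2) = 4 * σ ^ 2 := by
    rw [hσ, mul_pow, Real.sq_sqrt hrad, heronForm]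
    ring
  rw [← sub_eq_zero, pairwise_products_sub_eq_heronForm hK1 hK2 hK3, h_sides, h_masses]
  ring

/-- The identity `K1·K2 + K1·K3 + K2·K3 = 4σSd` where `d = (m1²K1+m2²K2+m3²K3)/(2σ)`;
equivalently `K1·K2 + K1·K3 + K2·K3 = 2S(m1²K1 + m2²K2 + m3²K3)`. -/
theorem identity_K1K2_sum
    (x1 y1 x2 y2 x3 y3 m1 m2 m3 : ℝ)
    (hm1 : 0 < m1) (hm2 : 0 < m2) (hm3 : 0 < m3)
    (hrad : 0 ≤ -m1^4 - m2^4 - m3^4 + 2*m1^2*m2^2 + 2*m1^2*m3^2 + 2*m2^2*m3^2)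
    (r12 r13 r23 S σ K1 K2 K3 : ℝ)
    (hr12 : r12 = Real.sqrt ((x1-x2)^2 + (y1-y2)^2))
    (hr13 : r13 = Real.sqrt ((x1-x3)^2 + (y1-y3)^2))
    (hr23 : r23 = Real.sqrt ((x2-x3)^2 + (y2-y3)^2))
    (hS : S = |x1*y2 + x2*y3 + x3*y1 - x1*y3 - x3*y2 - x2*y1|)
    (hσ : σ = (1/2) * Real.sqrt
        (-m1^4 - m2^4 - m3^4 + 2*m1^2*m2^2 + 2*m1^2*m3^2 + 2*m2^2*m3^2))
    (hK1 : K1 = (r12^2 + r13^2 - r23^2)*σ + (m2^2 + m3^2 - m1^2)*S)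
    (hK2 : K2 = (r23^2 + r12^2 - r13^2)*σ + (m1^2 + m3^2 - m2^2)*S)
    (hK3 : K3 = (r13^2 + r23^2 - r12^2)*σ + (m1^2 + m2^2 - m3^2)*S) :
    K1*K2 + K1*K3 + K2*K3 = 2*S*(m1^2*K1 + m2^2*K2 + m3^2*K3) :=
  identity_K1K2_sum_general x1 y1 x2 y2 x3 y3 m1 m2 m3 hrad r12 r13 r23 S σ K1 K2 K3 hr12 hr13 hr23
    hS hσ hK1 hK2 hK3
end

section
/- If the triangle P1P2P3 is nondegenerate and the weight conditions (W) hold, then K1 > 0, K2 > 0 and K3 > 0. -/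
lemma sumsq_eq_zero {a b : ℝ} (h : 0 = a^2 + b^2) : a = 0 ∧ b = 0 := by
  constructor <;> nlinarith [sq_nonneg a, sq_nonneg b]

lemma dot_le_prod {D S bc : ℝ} (h : D^2 + S^2 = bc^2) (hS : 0 < S) (hbc : 0 < bc) :
    D ≤ bc := by nlinarith [sq_nonneg (D - bc)]

lemma weight_tri {m a b c : ℝ} (ha : 0 < a) (hb : 0 < b) (hm : 0 < m)
    (hc : c ≤ 1) (hW : m^2 < a^2 + b^2 + 2*a*b*c) : m < a + b := by
  nlinarith [mul_pos ha hb]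

lemma tri_tu {m1 m2 m3 : ℝ} (h2 : m2 < m1 + m3) (h3 : m3 < m1 + m2) :
    m2^2 + m3^2 - m1^2 < 2*m2*m3 := by
  nlinarith [mul_pos (show (0:ℝ) < m1 + m2 - m3 by linarith)
    (show (0:ℝ) < m1 - m2 + m3 by linarith)]

lemma W_prod {t u cosv D bc : ℝ} (hbc : 0 < bc)
    (hcos : cosv = D / bc) (hW : -t < u * cosv) :
    -t * bc < u * D := by
  rw [hcos, mul_div_assoc'] at hW
  calc -t * bc < (u * D / bc) * bc := mul_lt_mul_of_pos_right hW hbc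
    _ = u * D := by field_simp

set_option maxHeartbeats 1000000

lemma Kpos_aux (D S bc u t σ K : ℝ)
    (hSp : 0 < S) (hbc : 0 < bc) (hu : 0 < u)
    (hlag : D^2 + S^2 = bc^2) (htu : t < u)
    (hW : -t * bc < u * D)
    (hσ : 2*σ = Real.sqrt (u^2 - t^2))
    (hK : K = 2*D*σ + t*S) : 0 < K := by
  have hDbc : D < bc := by nlinarith
  have hDbc' : -bc < D := by nlinarith
  have htu' : -t < u := by nlinarith
  have hs2 : 0 < u^2 - t^2 := by nlinarith
  have hs : 0 < Real.sqrt (u^2 - t^2) := Real.sqrt_pos.mpr hs2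
  have hss : (Real.sqrt (u^2 - t^2))^2 = u^2 - t^2 := Real.sq_sqrt hs2.le
  set s := Real.sqrt (u^2 - t^2) with hsdef
  have hK' : K = D*s + t*S := by rw [hK, ← hσ]; ring
  rw [hK']
  rcases le_or_gt 0 t with ht | ht
  · rcases le_or_gt 0 D with hD | hD
    · rcases eq_or_lt_of_le ht with h0 | h0
      · have hD' : 0 < D := by nlinarith
        nlinarith [mul_pos hD' hs]
      · nlinarith [mul_nonneg hD hs.le, mul_pos h0 hSp]
    · have ht' : 0 < t := by nlinarith
      have ha : 0 < t*bc - u*D := by nlinarith [mul_pos ht' hbc, mul_pos hu (neg_pos.mpr hD)]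
      have hb : 0 < t*bc + u*D := by linarith
      have h1 : ((-D)*s)^2 < (t*S)^2 := by
        have e : ((-D)*s)^2 = D^2*(u^2 - t^2) := by rw [mul_pow, hss]; ring
        have e2 : (t*S)^2 = t^2*(bc^2 - D^2) := by linear_combination t^2 * hlag
        rw [e, e2]; nlinarith [mul_pos ha hb]
      have h2 := lt_of_pow_lt_pow_left₀ 2 (mul_pos ht' hSp).le h1
      linarith
  · have hD : 0 < D := by nlinarith
    have ha : 0 < u*D - t*bc := by nlinarith [mul_pos hu hD, mul_pos (neg_pos.mpr ht) hbc]
    have hb : 0 < u*D + t*bc := by linarith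
    have h1 : ((-t)*S)^2 < (D*s)^2 := by
      have e : (D*s)^2 = D^2*(u^2 - t^2) := by rw [mul_pow, hss]
      have e2 : ((-t)*S)^2 = t^2*(bc^2 - D^2) := by linear_combination t^2 * hlag
      rw [e, e2]; nlinarith [mul_pos ha hb]
    have h2 := lt_of_pow_lt_pow_left₀ 2 (mul_pos hD hs).le h1
    linarith

/-- Under the weight conditions (W) for a nondegenerate triangle,
`K1, K2, K3` are all positive. -/
theorem K_positive
    (x1 y1 x2 y2 x3 y3 m1 m2 m3 : ℝ)
    (hm1 : 0 < m1) (hm2 : 0 < m2) (hm3 : 0 < m3)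
    (hnd : x1*y2 + x2*y3 + x3*y1 - x1*y3 - x3*y2 - x2*y1 ≠ 0)
    (r12 r13 r23 S σ K1 K2 K3 : ℝ)
    (hr12 : r12 = Real.sqrt ((x1-x2)^2 + (y1-y2)^2))
    (hr13 : r13 = Real.sqrt ((x1-x3)^2 + (y1-y3)^2))
    (hr23 : r23 = Real.sqrt ((x2-x3)^2 + (y2-y3)^2))
    (hS : S = |x1*y2 + x2*y3 + x3*y1 - x1*y3 - x3*y2 - x2*y1|)
    (hσ : σ = (1/2) * Real.sqrt
        (-m1^4 - m2^4 - m3^4 + 2*m1^2*m2^2 + 2*m1^2*m3^2 + 2*m2^2*m3^2))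
    (hK1 : K1 = (r12^2 + r13^2 - r23^2)*σ + (m2^2 + m3^2 - m1^2)*S)
    (hK2 : K2 = (r23^2 + r12^2 - r13^2)*σ + (m1^2 + m3^2 - m2^2)*S)
    (hK3 : K3 = (r13^2 + r23^2 - r12^2)*σ + (m1^2 + m2^2 - m3^2)*S)
    (cosα1 cosα2 cosα3 : ℝ)
    (hc1 : cosα1 = ((x2-x1)*(x3-x1) + (y2-y1)*(y3-y1)) / (r12 * r13))
    (hc2 : cosα2 = ((x1-x2)*(x3-x2) + (y1-y2)*(y3-y2)) / (r12 * r23))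
    (hc3 : cosα3 = ((x1-x3)*(x2-x3) + (y1-y3)*(y2-y3)) / (r13 * r23))
    (hW1 : m1^2 < m2^2 + m3^2 + 2*m2*m3*cosα1)
    (hW2 : m2^2 < m1^2 + m3^2 + 2*m1*m3*cosα2)
    (hW3 : m3^2 < m1^2 + m2^2 + 2*m1*m2*cosα3) :
    0 < K1 ∧ 0 < K2 ∧ 0 < K3 := by
  have hCne : x1*y2 + x2*y3 + x3*y1 - x1*y3 - x3*y2 - x2*y1 ≠ 0 := hnd
  have hSpos : 0 < S := by rw [hS]; exact abs_pos.mpr hCne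
  have hS2 : S^2 = (x1*y2 + x2*y3 + x3*y1 - x1*y3 - x3*y2 - x2*y1)^2 := by
    rw [hS, sq_abs]
  have hA12nn : (0:ℝ) ≤ (x1-x2)^2 + (y1-y2)^2 := by positivity
  have hA13nn : (0:ℝ) ≤ (x1-x3)^2 + (y1-y3)^2 := by positivity
  have hA23nn : (0:ℝ) ≤ (x2-x3)^2 + (y2-y3)^2 := by positivity
  have hr12sq : r12^2 = (x1-x2)^2 + (y1-y2)^2 := by rw [hr12]; exact Real.sq_sqrt hA12nn
  have hr13sq : r13^2 = (x1-x3)^2 + (y1-y3)^2 := by rw [hr13]; exact Real.sq_sqrt hA13nn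
  have hr23sq : r23^2 = (x2-x3)^2 + (y2-y3)^2 := by rw [hr23]; exact Real.sq_sqrt hA23nn
  -- Lagrange identities at the three vertices
  have lag1 : ((x2-x1)*(x3-x1) + (y2-y1)*(y3-y1))^2 + S^2 = (r12*r13)^2 := by
    rw [hS2, mul_pow, hr12sq, hr13sq]; ring
  have lag2 : ((x1-x2)*(x3-x2) + (y1-y2)*(y3-y2))^2 + S^2 = (r12*r23)^2 := by
    rw [hS2, mul_pow, hr12sq, hr23sq]; ring
  have lag3 : ((x1-x3)*(x2-x3) + (y1-y3)*(y2-y3))^2 + S^2 = (r13*r23)^2 := by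
    rw [hS2, mul_pow, hr13sq, hr23sq]; ring
  -- positivity of the squared side lengths
  have hA12pos : 0 < (x1-x2)^2 + (y1-y2)^2 := by
    rcases hA12nn.lt_or_eq with h | h
    · exact h
    · obtain ⟨hx, hy⟩ := sumsq_eq_zero h
      exfalso; apply hCne
      have hx' : x1 = x2 := by linarith [sub_eq_zero.mp hx]
      have hy' : y1 = y2 := by linarith [sub_eq_zero.mp hy]
      rw [hx', hy']; ring
  have hA13pos : 0 < (x1-x3)^2 + (y1-y3)^2 := by
    rcases hA13nn.lt_or_eq with h | h
    · exact h
    · obtain ⟨hx, hy⟩ := sumsq_eq_zero h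
      exfalso; apply hCne
      have hx' : x1 = x3 := by linarith [sub_eq_zero.mp hx]
      have hy' : y1 = y3 := by linarith [sub_eq_zero.mp hy]
      rw [hx', hy']; ring
  have hA23pos : 0 < (x2-x3)^2 + (y2-y3)^2 := by
    rcases hA23nn.lt_or_eq with h | h
    · exact h
    · obtain ⟨hx, hy⟩ := sumsq_eq_zero h
      exfalso; apply hCne
      have hx' : x2 = x3 := by linarith [sub_eq_zero.mp hx]
      have hy' : y2 = y3 := by linarith [sub_eq_zero.mp hy]
      rw [hx', hy']; ring
  have hr12p : 0 < r12 := by rw [hr12]; exact Real.sqrt_pos.mpr hA12pos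
  have hr13p : 0 < r13 := by rw [hr13]; exact Real.sqrt_pos.mpr hA13pos
  have hr23p : 0 < r23 := by rw [hr23]; exact Real.sqrt_pos.mpr hA23pos
  have hbc1 : 0 < r12*r13 := mul_pos hr12p hr13p
  have hbc2 : 0 < r12*r23 := mul_pos hr12p hr23p
  have hbc3 : 0 < r13*r23 := mul_pos hr13p hr23p
  -- the cosines are at most 1
  have hcos1 : cosα1 ≤ 1 := by
    rw [hc1, div_le_one hbc1]; exact dot_le_prod lag1 hSpos hbc1
  have hcos2 : cosα2 ≤ 1 := by
    rw [hc2, div_le_one hbc2]; exact dot_le_prod lag2 hSpos hbc2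
  have hcos3 : cosα3 ≤ 1 := by
    rw [hc3, div_le_one hbc3]; exact dot_le_prod lag3 hSpos hbc3
  -- triangle inequalities for the weights
  have tri1 : m1 < m2 + m3 := weight_tri hm2 hm3 hm1 hcos1 hW1
  have tri2 : m2 < m1 + m3 := weight_tri hm1 hm3 hm2 hcos2 hW2
  have tri3 : m3 < m1 + m2 := weight_tri hm1 hm2 hm3 hcos3 hW3
  have htu1 : m2^2 + m3^2 - m1^2 < 2*m2*m3 := tri_tu tri2 tri3
  have htu2 : m1^2 + m3^2 - m2^2 < 2*m1*m3 := tri_tu (by linarith) (by linarith)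
  have htu3 : m1^2 + m2^2 - m3^2 < 2*m1*m2 := tri_tu (by linarith) (by linarith)
  -- conditions (W) in product form
  have hWc1 : -(m2^2 + m3^2 - m1^2) * (r12*r13)
      < (2*m2*m3) * ((x2-x1)*(x3-x1) + (y2-y1)*(y3-y1)) :=
    W_prod hbc1 hc1 (by linarith)
  have hWc2 : -(m1^2 + m3^2 - m2^2) * (r12*r23)
      < (2*m1*m3) * ((x1-x2)*(x3-x2) + (y1-y2)*(y3-y2)) :=
    W_prod hbc2 hc2 (by linarith)
  have hWc3 : -(m1^2 + m2^2 - m3^2) * (r13*r23)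
      < (2*m1*m2) * ((x1-x3)*(x2-x3) + (y1-y3)*(y2-y3)) :=
    W_prod hbc3 hc3 (by linarith)
  -- σ in the form needed for each vertex
  have hσ1 : 2*σ = Real.sqrt ((2*m2*m3)^2 - (m2^2 + m3^2 - m1^2)^2) := by
    rw [hσ, show (2*m2*m3)^2 - (m2^2 + m3^2 - m1^2)^2
      = -m1^4 - m2^4 - m3^4 + 2*m1^2*m2^2 + 2*m1^2*m3^2 + 2*m2^2*m3^2 by ring]; ring
  have hσ2 : 2*σ = Real.sqrt ((2*m1*m3)^2 - (m1^2 + m3^2 - m2^2)^2) := by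
    rw [hσ, show (2*m1*m3)^2 - (m1^2 + m3^2 - m2^2)^2
      = -m1^4 - m2^4 - m3^4 + 2*m1^2*m2^2 + 2*m1^2*m3^2 + 2*m2^2*m3^2 by ring]; ring
  have hσ3 : 2*σ = Real.sqrt ((2*m1*m2)^2 - (m1^2 + m2^2 - m3^2)^2) := by
    rw [hσ, show (2*m1*m2)^2 - (m1^2 + m2^2 - m3^2)^2
      = -m1^4 - m2^4 - m3^4 + 2*m1^2*m2^2 + 2*m1^2*m3^2 + 2*m2^2*m3^2 by ring]; ring
  -- K in the form needed
  have hK1' : K1 = 2*((x2-x1)*(x3-x1) + (y2-y1)*(y3-y1))*σ + (m2^2 + m3^2 - m1^2)*S := by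
    rw [hK1, hr12sq, hr13sq, hr23sq]; ring
  have hK2' : K2 = 2*((x1-x2)*(x3-x2) + (y1-y2)*(y3-y2))*σ + (m1^2 + m3^2 - m2^2)*S := by
    rw [hK2, hr12sq, hr13sq, hr23sq]; ring
  have hK3' : K3 = 2*((x1-x3)*(x2-x3) + (y1-y3)*(y2-y3))*σ + (m1^2 + m2^2 - m3^2)*S := by
    rw [hK3, hr12sq, hr13sq, hr23sq]; ring
  exact ⟨Kpos_aux _ S (r12*r13) (2*m2*m3) (m2^2 + m3^2 - m1^2) σ K1
      hSpos hbc1 (by positivity) lag1 htu1 hWc1 hσ1 hK1',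
    Kpos_aux _ S (r12*r23) (2*m1*m3) (m1^2 + m3^2 - m2^2) σ K2
      hSpos hbc2 (by positivity) lag2 htu2 hWc2 hσ2 hK2',
    Kpos_aux _ S (r13*r23) (2*m1*m2) (m1^2 + m2^2 - m3^2) σ K3
      hSpos hbc3 (by positivity) lag3 htu3 hWc3 hσ3 hK3'⟩
end

section
/- If the triangle P1P2P3 is nondegenerate and the weight conditions (W) hold, then the point P* = (x*, y*) with x* = (K1K2K3/(4 S σ d))·(x1/K1 + x2/K2 + x3/K3) and y* = (K1K2K3/(4 S σ d))·(y1/K1 + y2/K2 + y3/K3) satisfies the distance formulas √((x*−x_j)² + (y*−y_j)²) = m_j K_j / (2 σ √d) for each j ∈ {1,2,3}. -/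
private lemma aux_two_sq_zero (a b : ℝ) (h : 0 = a^2 + b^2) : a = 0 ∧ b = 0 := by
  constructor <;> nlinarith [sq_nonneg a, sq_nonneg b]

private lemma aux_ult (U R S : ℝ) (hR : 0 < R) (hS2 : 0 < S^2)
    (h : R^2 = U^2 + S^2) : U < R := by nlinarith

private lemma aux_uge (U R S : ℝ) (hR : 0 < R) (h : R^2 = U^2 + S^2) : -R ≤ U := by
  nlinarith [sq_nonneg S]

private lemma aux_wf (a b c p U R : ℝ) (hR : 0 < R) (h : a < b + c + p*(U/R)) :
    0 < p*U + (b+c-a)*R := by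
  have h1 : a - (b+c) < p*U/R := by rw [mul_div_assoc]; linarith
  have h2 := (lt_div_iff₀ hR).mp h1
  nlinarith [h2]

private lemma aux_pq (p q U R : ℝ) (hWf : 0 < p*U + q*R) (hUlt : U < R)
    (hR : 0 < R) (hp : 0 < p) : 0 < p + q := by nlinarith

private lemma aux_mlt (mj mo1 mo2 : ℝ) (h : 0 < 2*mo1*mo2 + (mo1^2+mo2^2-mj^2))
    (h1 : 0 < mj) (h2 : 0 < mo1) (h3 : 0 < mo2) : mj < mo1 + mo2 := by nlinarith

private lemma aux_Qpos (m1 m2 m3 : ℝ) (hm1 : 0 < m1) (hm2 : 0 < m2) (hm3 : 0 < m3)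
    (h1 : m1 < m2+m3) (h2 : m2 < m1+m3) (h3 : m3 < m1+m2) :
    0 < -m1^4 - m2^4 - m3^4 + 2*m1^2*m2^2 + 2*m1^2*m3^2 + 2*m2^2*m3^2 := by
  nlinarith [mul_pos (mul_pos (mul_pos (show (0:ℝ) < m1+m2+m3 by linarith)
    (show (0:ℝ) < m2+m3-m1 by linarith)) (show (0:ℝ) < m1+m3-m2 by linarith))
    (show (0:ℝ) < m1+m2-m3 by linarith)]

private lemma aux_qle (p q σ : ℝ) (hp : 0 < p) (h : p^2 = q^2 + 4*σ^2) : q ≤ p := by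
  nlinarith [sq_nonneg σ]

private lemma aux_qge (p q σ : ℝ) (hp : 0 < p) (h : p^2 = q^2 + 4*σ^2) : -p ≤ q := by
  nlinarith [sq_nonneg σ]

private lemma aux_fac (U R p q σ S : ℝ) (hU1 : U ≤ R) (hU2 : -R ≤ U)
    (hq1 : q ≤ p) (hq2 : -p ≤ q) (hσ : 0 < σ) (hS : 0 < S) :
    0 < R*p - U*q + 2*σ*S := by
  nlinarith [mul_nonneg (by linarith : (0:ℝ) ≤ R-U) (by linarith : (0:ℝ) ≤ p+q),
    mul_nonneg (by linarith : (0:ℝ) ≤ R+U) (by linarith : (0:ℝ) ≤ p-q),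
    mul_pos hσ hS]

private lemma aux_den (S p σ R : ℝ) (hS : 0 < S) (hp : 0 < p) (hσ : 0 < σ)
    (hR : 0 < R) : 0 < S*p + 2*σ*R := by
  nlinarith [mul_pos hS hp, mul_pos hσ hR]

private lemma aux_Kpos (K D F1 F2 : ℝ) (hid : K*D = F1*F2) (h1 : 0 < F1)
    (h2 : 0 < F2) (hD : 0 < D) : 0 < K := by nlinarith [mul_pos h1 h2]

private lemma aux_Tpos (σ T : ℝ) (h : 0 < σ*T) (hσ : 0 < σ) : 0 < T := by nlinarith

set_option maxHeartbeats 1000000 in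
/-- The point `P* = (x*, y*)` given by the explicit formulas satisfies the
distance formulas `|P*P_j| = m_j K_j / (2σ√d)` for `j = 1, 2, 3`. -/
theorem distance_formulas
        (x1 y1 x2 y2 x3 y3 m1 m2 m3 : ℝ)
    (hm1 : 0 < m1) (hm2 : 0 < m2) (hm3 : 0 < m3)
    (hnd : x1*y2 + x2*y3 + x3*y1 - x1*y3 - x3*y2 - x2*y1 ≠ 0)
    (r12 r13 r23 S σ K1 K2 K3 : ℝ)
    (hr12 : r12 = Real.sqrt ((x1-x2)^2 + (y1-y2)^2))
    (hr13 : r13 = Real.sqrt ((x1-x3)^2 + (y1-y3)^2))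
    (hr23 : r23 = Real.sqrt ((x2-x3)^2 + (y2-y3)^2))
    (hS : S = |x1*y2 + x2*y3 + x3*y1 - x1*y3 - x3*y2 - x2*y1|)
    (hσ : σ = (1/2) * Real.sqrt
        (-m1^4 - m2^4 - m3^4 + 2*m1^2*m2^2 + 2*m1^2*m3^2 + 2*m2^2*m3^2))
    (hK1 : K1 = (r12^2 + r13^2 - r23^2)*σ + (m2^2 + m3^2 - m1^2)*S)
    (hK2 : K2 = (r23^2 + r12^2 - r13^2)*σ + (m1^2 + m3^2 - m2^2)*S)
    (hK3 : K3 = (r13^2 + r23^2 - r12^2)*σ + (m1^2 + m2^2 - m3^2)*S)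
    (cosα1 cosα2 cosα3 : ℝ)
    (hc1 : cosα1 = ((x2-x1)*(x3-x1) + (y2-y1)*(y3-y1)) / (r12 * r13))
    (hc2 : cosα2 = ((x1-x2)*(x3-x2) + (y1-y2)*(y3-y2)) / (r12 * r23))
    (hc3 : cosα3 = ((x1-x3)*(x2-x3) + (y1-y3)*(y2-y3)) / (r13 * r23))
    (hW1 : m1^2 < m2^2 + m3^2 + 2*m2*m3*cosα1)
    (hW2 : m2^2 < m1^2 + m3^2 + 2*m1*m3*cosα2)
    (hW3 : m3^2 < m1^2 + m2^2 + 2*m1*m2*cosα3)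
    (d : ℝ)
    (hd : d = (m1^2*K1 + m2^2*K2 + m3^2*K3) / (2*σ))
    (xs ys : ℝ)
    (hxs : xs = (K1*K2*K3/(4*S*σ*d)) * (x1/K1 + x2/K2 + x3/K3))
    (hys : ys = (K1*K2*K3/(4*S*σ*d)) * (y1/K1 + y2/K2 + y3/K3)) :
    Real.sqrt ((xs-x1)^2 + (ys-y1)^2) = m1*K1/(2*σ*Real.sqrt d) ∧
    Real.sqrt ((xs-x2)^2 + (ys-y2)^2) = m2*K2/(2*σ*Real.sqrt d) ∧
    Real.sqrt ((xs-x3)^2 + (ys-y3)^2) = m3*K3/(2*σ*Real.sqrt d) := by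
  have hA12 : 0 < (x1-x2)^2+(y1-y2)^2 := by
    rcases lt_or_eq_of_le (by positivity : (0:ℝ) ≤ (x1-x2)^2+(y1-y2)^2) with h | h
    · exact h
    · exfalso
      obtain ⟨hx, hy⟩ := aux_two_sq_zero _ _ h
      exact hnd (by rw [sub_eq_zero.mp hx, sub_eq_zero.mp hy]; ring)
  have ha12 : r12^2 = (x1-x2)^2+(y1-y2)^2 := by
    rw [hr12]; exact Real.sq_sqrt hA12.le
  have hr12p : 0 < r12 := by rw [hr12]; exact Real.sqrt_pos.mpr hA12
  have hA13 : 0 < (x1-x3)^2+(y1-y3)^2 := by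
    rcases lt_or_eq_of_le (by positivity : (0:ℝ) ≤ (x1-x3)^2+(y1-y3)^2) with h | h
    · exact h
    · exfalso
      obtain ⟨hx, hy⟩ := aux_two_sq_zero _ _ h
      exact hnd (by rw [sub_eq_zero.mp hx, sub_eq_zero.mp hy]; ring)
  have ha13 : r13^2 = (x1-x3)^2+(y1-y3)^2 := by
    rw [hr13]; exact Real.sq_sqrt hA13.le
  have hr13p : 0 < r13 := by rw [hr13]; exact Real.sqrt_pos.mpr hA13
  have hA23 : 0 < (x2-x3)^2+(y2-y3)^2 := by
    rcases lt_or_eq_of_le (by positivity : (0:ℝ) ≤ (x2-x3)^2+(y2-y3)^2) with h | h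
    · exact h
    · exfalso
      obtain ⟨hx, hy⟩ := aux_two_sq_zero _ _ h
      exact hnd (by rw [sub_eq_zero.mp hx, sub_eq_zero.mp hy]; ring)
  have ha23 : r23^2 = (x2-x3)^2+(y2-y3)^2 := by
    rw [hr23]; exact Real.sq_sqrt hA23.le
  have hr23p : 0 < r23 := by rw [hr23]; exact Real.sqrt_pos.mpr hA23
  have hSpos : 0 < S := by rw [hS]; exact abs_pos.mpr hnd
  have hS2 : S^2 = (x1*y2 + x2*y3 + x3*y1 - x1*y3 - x3*y2 - x2*y1)^2 := by rw [hS]; exact sq_abs _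
  have hRp1 : 0 < r12*r13 := mul_pos hr12p hr13p
  have hLag1 : (r12*r13)^2 = ((x2-x1)*(x3-x1) + (y2-y1)*(y3-y1))^2 + S^2 := by
    rw [mul_pow, ha12, ha13]; linear_combination -hS2
  have hUlt1 := aux_ult _ _ _ hRp1 (pow_pos hSpos 2) hLag1
  have hUge1 := aux_uge _ _ _ hRp1 hLag1
  have hWf1 : 0 < 2*m2*m3*((x2-x1)*(x3-x1) + (y2-y1)*(y3-y1)) + (m2^2+m3^2-m1^2)*(r12*r13) := by
    have hWr := hW1
    rw [hc1] at hWr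
    exact aux_wf _ _ _ _ _ _ hRp1 hWr
  have hpq1 := aux_pq _ _ _ _ hWf1 hUlt1 hRp1 (by positivity)
  have hmlt1 : m1 < m2 + m3 :=
    aux_mlt _ _ _ hpq1 hm1 hm2 hm3
  have hRp2 : 0 < r12*r23 := mul_pos hr12p hr23p
  have hLag2 : (r12*r23)^2 = ((x1-x2)*(x3-x2) + (y1-y2)*(y3-y2))^2 + S^2 := by
    rw [mul_pow, ha12, ha23]; linear_combination -hS2
  have hUlt2 := aux_ult _ _ _ hRp2 (pow_pos hSpos 2) hLag2
  have hUge2 := aux_uge _ _ _ hRp2 hLag2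
  have hWf2 : 0 < 2*m1*m3*((x1-x2)*(x3-x2) + (y1-y2)*(y3-y2)) + (m1^2+m3^2-m2^2)*(r12*r23) := by
    have hWr := hW2
    rw [hc2] at hWr
    exact aux_wf _ _ _ _ _ _ hRp2 hWr
  have hpq2 := aux_pq _ _ _ _ hWf2 hUlt2 hRp2 (by positivity)
  have hmlt2 : m2 < m1 + m3 :=
    aux_mlt _ _ _ hpq2 hm2 hm1 hm3
  have hRp3 : 0 < r13*r23 := mul_pos hr13p hr23p
  have hLag3 : (r13*r23)^2 = ((x1-x3)*(x2-x3) + (y1-y3)*(y2-y3))^2 + S^2 := by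
    rw [mul_pow, ha13, ha23]; linear_combination -hS2
  have hUlt3 := aux_ult _ _ _ hRp3 (pow_pos hSpos 2) hLag3
  have hUge3 := aux_uge _ _ _ hRp3 hLag3
  have hWf3 : 0 < 2*m1*m2*((x1-x3)*(x2-x3) + (y1-y3)*(y2-y3)) + (m1^2+m2^2-m3^2)*(r13*r23) := by
    have hWr := hW3
    rw [hc3] at hWr
    exact aux_wf _ _ _ _ _ _ hRp3 hWr
  have hpq3 := aux_pq _ _ _ _ hWf3 hUlt3 hRp3 (by positivity)
  have hmlt3 : m3 < m1 + m2 :=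
    aux_mlt _ _ _ hpq3 hm3 hm1 hm2
  have hQpos := aux_Qpos _ _ _ hm1 hm2 hm3 hmlt1 hmlt2 hmlt3
  have hσpos : 0 < σ := by
    rw [hσ]; exact mul_pos (by norm_num) (Real.sqrt_pos.mpr hQpos)
  have hσ4 : 4*σ^2 = (-m1^4 - m2^4 - m3^4 + 2*m1^2*m2^2 + 2*m1^2*m3^2 + 2*m2^2*m3^2) := by
    rw [hσ, mul_pow, Real.sq_sqrt hQpos.le]; ring
  have hKu1 : K1 = 2*((x2-x1)*(x3-x1) + (y2-y1)*(y3-y1))*σ + (m2^2+m3^2-m1^2)*S := by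
    rw [hK1, ha12, ha13, ha23]; ring
  have hpsq1 : (2*m2*m3)^2 = (m2^2+m3^2-m1^2)^2 + 4*σ^2 := by linear_combination -hσ4
  have hqle1 := aux_qle _ _ _ (by positivity : (0:ℝ) < 2*m2*m3) hpsq1
  have hqge1 := aux_qge _ _ _ (by positivity : (0:ℝ) < 2*m2*m3) hpsq1
  have hfac1 := aux_fac _ _ _ _ _ _ hUlt1.le hUge1 hqle1 hqge1 hσpos hSpos
  have hden1 := aux_den _ _ _ _ hSpos (by positivity : (0:ℝ) < 2*m2*m3) hσpos hRp1
  have hKid1 : K1*(S*(2*m2*m3) + 2*σ*(r12*r13))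
      = (2*m2*m3*((x2-x1)*(x3-x1) + (y2-y1)*(y3-y1)) + (m2^2+m3^2-m1^2)*(r12*r13))*((r12*r13)*(2*m2*m3) - ((x2-x1)*(x3-x1) + (y2-y1)*(y3-y1))*(m2^2+m3^2-m1^2) + 2*σ*S) := by
    linear_combination (S*(2*m2*m3) + 2*σ*(r12*r13))*hKu1 - ((x2-x1)*(x3-x1) + (y2-y1)*(y3-y1))*(r12*r13)*hpsq1 - (m2^2+m3^2-m1^2)*(2*m2*m3)*hLag1
  have hK1pos : 0 < K1 := aux_Kpos _ _ _ _ hKid1 hWf1 hfac1 hden1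
  have hKu2 : K2 = 2*((x1-x2)*(x3-x2) + (y1-y2)*(y3-y2))*σ + (m1^2+m3^2-m2^2)*S := by
    rw [hK2, ha12, ha13, ha23]; ring
  have hpsq2 : (2*m1*m3)^2 = (m1^2+m3^2-m2^2)^2 + 4*σ^2 := by linear_combination -hσ4
  have hqle2 := aux_qle _ _ _ (by positivity : (0:ℝ) < 2*m1*m3) hpsq2
  have hqge2 := aux_qge _ _ _ (by positivity : (0:ℝ) < 2*m1*m3) hpsq2
  have hfac2 := aux_fac _ _ _ _ _ _ hUlt2.le hUge2 hqle2 hqge2 hσpos hSpos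
  have hden2 := aux_den _ _ _ _ hSpos (by positivity : (0:ℝ) < 2*m1*m3) hσpos hRp2
  have hKid2 : K2*(S*(2*m1*m3) + 2*σ*(r12*r23))
      = (2*m1*m3*((x1-x2)*(x3-x2) + (y1-y2)*(y3-y2)) + (m1^2+m3^2-m2^2)*(r12*r23))*((r12*r23)*(2*m1*m3) - ((x1-x2)*(x3-x2) + (y1-y2)*(y3-y2))*(m1^2+m3^2-m2^2) + 2*σ*S) := by
    linear_combination (S*(2*m1*m3) + 2*σ*(r12*r23))*hKu2 - ((x1-x2)*(x3-x2) + (y1-y2)*(y3-y2))*(r12*r23)*hpsq2 - (m1^2+m3^2-m2^2)*(2*m1*m3)*hLag2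
  have hK2pos : 0 < K2 := aux_Kpos _ _ _ _ hKid2 hWf2 hfac2 hden2
  have hKu3 : K3 = 2*((x1-x3)*(x2-x3) + (y1-y3)*(y2-y3))*σ + (m1^2+m2^2-m3^2)*S := by
    rw [hK3, ha12, ha13, ha23]; ring
  have hpsq3 : (2*m1*m2)^2 = (m1^2+m2^2-m3^2)^2 + 4*σ^2 := by linear_combination -hσ4
  have hqle3 := aux_qle _ _ _ (by positivity : (0:ℝ) < 2*m1*m2) hpsq3
  have hqge3 := aux_qge _ _ _ (by positivity : (0:ℝ) < 2*m1*m2) hpsq3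
  have hfac3 := aux_fac _ _ _ _ _ _ hUlt3.le hUge3 hqle3 hqge3 hσpos hSpos
  have hden3 := aux_den _ _ _ _ hSpos (by positivity : (0:ℝ) < 2*m1*m2) hσpos hRp3
  have hKid3 : K3*(S*(2*m1*m2) + 2*σ*(r13*r23))
      = (2*m1*m2*((x1-x3)*(x2-x3) + (y1-y3)*(y2-y3)) + (m1^2+m2^2-m3^2)*(r13*r23))*((r13*r23)*(2*m1*m2) - ((x1-x3)*(x2-x3) + (y1-y3)*(y2-y3))*(m1^2+m2^2-m3^2) + 2*σ*S) := by
    linear_combination (S*(2*m1*m2) + 2*σ*(r13*r23))*hKu3 - ((x1-x3)*(x2-x3) + (y1-y3)*(y2-y3))*(r13*r23)*hpsq3 - (m1^2+m2^2-m3^2)*(2*m1*m2)*hLag3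
  have hK3pos : 0 < K3 := aux_Kpos _ _ _ _ hKid3 hWf3 hfac3 hden3
  obtain ⟨T, hTdef⟩ : ∃ t : ℝ, t = (m1^2*((x1-x2)^2+(y1-y2)^2 + ((x1-x3)^2+(y1-y3)^2) - ((x2-x3)^2+(y2-y3)^2)) + m2^2*((x2-x3)^2+(y2-y3)^2 + ((x1-x2)^2+(y1-y2)^2) - ((x1-x3)^2+(y1-y3)^2)) + m3^2*((x1-x3)^2+(y1-y3)^2 + ((x2-x3)^2+(y2-y3)^2) - ((x1-x2)^2+(y1-y2)^2)) + 4*σ*S) := ⟨_, rfl⟩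
  have hN : m1^2*K1 + m2^2*K2 + m3^2*K3 = σ*T := by
    rw [hTdef, hK1, hK2, hK3, ha12, ha13, ha23]; linear_combination (-S)*hσ4
  have hσT : 0 < σ*T := by
    rw [← hN]
    exact add_pos (add_pos (mul_pos (by positivity) hK1pos)
      (mul_pos (by positivity) hK2pos)) (mul_pos (by positivity) hK3pos)
  have hTpos := aux_Tpos _ _ hσT hσpos
  have hd' : d = T/2 := by
    rw [hd, hN, div_eq_div_iff (ne_of_gt (mul_pos two_pos hσpos)) two_ne_zero]; ring
  have hdpos : 0 < d := by rw [hd']; exact div_pos hTpos two_pos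
  have hsum : K1*K2 + K2*K3 + K3*K1 = 2*S*σ*T := by
    rw [hTdef, hK1, hK2, hK3, ha12, ha13, ha23]
    linear_combination ((-2)*S^2 + (1)*y2^2*x3^2 + (-2)*x2*y2*x3*y3 + (1)*x2^2*y3^2 + (-2)*y1*y2*x3^2 + (2)*y1*x2*x3*y3 + (2)*y1*x2*y2*x3 + (-2)*y1*x2^2*y3 + (1)*y1^2*x3^2 + (-2)*y1^2*x2*x3 + (1)*y1^2*x2^2 + (2)*x1*y2*x3*y3 + (-2)*x1*y2^2*x3 + (-2)*x1*x2*y3^2 + (2)*x1*x2*y2*y3 + (-2)*x1*y1*x3*y3 + (2)*x1*y1*y2*x3 + (2)*x1*y1*x2*y3 + (-2)*x1*y1*x2*y2 + (1)*x1^2*y3^2 + (-2)*x1^2*y2*y3 + (1)*x1^2*y2^2)*hσ4 + ((1)*m3^4 + (-2)*m2^2*m3^2 + (1)*m2^4 + (-2)*m1^2*m3^2 + (-2)*m1^2*m2^2 + (1)*m1^4)*hS2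
  have hT2 : 0 < 2*S*σ*T := mul_pos (mul_pos (mul_pos two_pos hSpos) hσpos) hTpos
  have hdn2 : (0:ℝ) < 2*σ^2*T := mul_pos (mul_pos two_pos (pow_pos hσpos 2)) hTpos
  have hdn3 : (0:ℝ) < 2*S^2*T := mul_pos (mul_pos two_pos (pow_pos hSpos 2)) hTpos
  have e1 : xs = (x1*K2*K3 + x2*K1*K3 + x3*K1*K2)/(2*S*σ*T) := by
    rw [hxs, hd']
    field_simp [hK1pos.ne', hK2pos.ne', hK3pos.ne', hSpos.ne', hσpos.ne', hTpos.ne']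
    ring
  have e2 : ys = (y1*K2*K3 + y2*K1*K3 + y3*K1*K2)/(2*S*σ*T) := by
    rw [hys, hd']
    field_simp [hK1pos.ne', hK2pos.ne', hK3pos.ne', hSpos.ne', hσpos.ne', hTpos.ne']
    ring
  have hI1 : ((x2-x1)*K3 + (x3-x1)*K2)^2 + ((y2-y1)*K3 + (y3-y1)*K2)^2 = 2*m1^2*S^2*T := by
    rw [hTdef, hK2, hK3, ha12, ha13, ha23]
    linear_combination ((1)*y2^2*x3^2*y3^2 + (1)*y2^2*x3^4 + (-2)*y2^3*x3^2*y3 + (1)*y2^4*x3^2 + (-2)*x2*y2*x3*y3^3 + (-2)*x2*y2*x3^3*y3 + (4)*x2*y2^2*x3*y3^2 + (-2)*x2*y2^2*x3^3 + (-2)*x2*y2^3*x3*y3 + (1)*x2^2*y3^4 + (1)*x2^2*x3^2*y3^2 + (-2)*x2^2*y2*y3^3 + (4)*x2^2*y2*x3^2*y3 + (1)*x2^2*y2^2*y3^2 + (1)*x2^2*y2^2*x3^2 + (-2)*x2^3*x3*y3^2 + (-2)*x2^3*y2*x3*y3 + (1)*x2^4*y3^2 + (-2)*y1*y2*x3^2*y3^2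 + (-2)*y1*y2*x3^4 + (4)*y1*y2^2*x3^2*y3 + (-2)*y1*y2^3*x3^2 + (2)*y1*x2*x3*y3^3 + (2)*y1*x2*x3^3*y3 + (-2)*y1*x2*y2*x3*y3^2 + (6)*y1*x2*y2*x3^3 + (-2)*y1*x2*y2^2*x3*y3 + (2)*y1*x2*y2^3*x3 + (-2)*y1*x2^2*y3^3 + (-6)*y1*x2^2*x3^2*y3 + (4)*y1*x2^2*y2*y3^2 + (-6)*y1*x2^2*y2*x3^2 + (-2)*y1*x2^2*y2^2*y3 + (6)*y1*x2^3*x3*y3 + (2)*y1*x2^3*y2*x3 + (-2)*y1*x2^4*y3 + (1)*y1^2*x3^2*y3^2 + (1)*y1^2*x3^4 + (-2)*y1^2*y2*x3^2*y3 + (1)*y1^2*y2^2*x3^2 + (-2)*y1^2*x2*x3*y3^2 + (-4)*y1^2*x2*x3^3 + (4)*y1^2*x2*y2*x3*y3 + (-2)*y1^2*x2*y2^2*x3 + (1)*y1^2*x2^2*y3^2 + (6)*y1^2*x2^2*x3^2 + (-2)*y1^2*x2^2*y2*y3 + (1)*y1^2*x2^2*y2^2 + (-4)*y1^2*x2^3*x3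 + (1)*y1^2*x2^4 + (2)*x1*y2*x3*y3^3 + (2)*x1*y2*x3^3*y3 + (-6)*x1*y2^2*x3*y3^2 + (-2)*x1*y2^2*x3^3 + (6)*x1*y2^3*x3*y3 + (-2)*x1*y2^4*x3 + (-2)*x1*x2*y3^4 + (-2)*x1*x2*x3^2*y3^2 + (6)*x1*x2*y2*y3^3 + (-2)*x1*x2*y2*x3^2*y3 + (-6)*x1*x2*y2^2*y3^2 + (4)*x1*x2*y2^2*x3^2 + (2)*x1*x2*y2^3*y3 + (4)*x1*x2^2*x3*y3^2 + (-2)*x1*x2^2*y2*x3*y3 + (-2)*x1*x2^2*y2^2*x3 + (-2)*x1*x2^3*y3^2 + (2)*x1*x2^3*y2*y3 + (-2)*x1*y1*x3*y3^3 + (-2)*x1*y1*x3^3*y3 + (6)*x1*y1*y2*x3*y3^2 + (2)*x1*y1*y2*x3^3 + (-6)*x1*y1*y2^2*x3*y3 + (2)*x1*y1*y2^3*x3 + (2)*x1*y1*x2*y3^3 + (6)*x1*y1*x2*x3^2*y3 + (-6)*x1*y1*x2*y2*y3^2 + (-6)*x1*y1*x2*y2*x3^2 + (6)*x1*y1*x2*y2^2*y3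 + (-2)*x1*y1*x2*y2^3 + (-6)*x1*y1*x2^2*x3*y3 + (6)*x1*y1*x2^2*y2*x3 + (2)*x1*y1*x2^3*y3 + (-2)*x1*y1*x2^3*y2 + (1)*x1^2*y3^4 + (1)*x1^2*x3^2*y3^2 + (-4)*x1^2*y2*y3^3 + (-2)*x1^2*y2*x3^2*y3 + (6)*x1^2*y2^2*y3^2 + (1)*x1^2*y2^2*x3^2 + (-4)*x1^2*y2^3*y3 + (1)*x1^2*y2^4 + (-2)*x1^2*x2*x3*y3^2 + (4)*x1^2*x2*y2*x3*y3 + (-2)*x1^2*x2*y2^2*x3 + (1)*x1^2*x2^2*y3^2 + (-2)*x1^2*x2^2*y2*y3 + (1)*x1^2*x2^2*y2^2)*hσ4 + ((-8)*m1^2*S*σ + (1)*y3^2*m3^4 + (-2)*y3^2*m2^2*m3^2 + (1)*y3^2*m2^4 + (-2)*y3^2*m1^2*m3^2 + (-2)*y3^2*m1^2*m2^2 + (1)*y3^2*m1^4 + (1)*x3^2*m3^4 + (-2)*x3^2*m2^2*m3^2 + (1)*x3^2*m2^4 + (-2)*x3^2*m1^2*m3^2 + (-2)*x3^2*m1^2*m2^2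 + (1)*x3^2*m1^4 + (-2)*y2*y3*m3^4 + (4)*y2*y3*m2^2*m3^2 + (-2)*y2*y3*m2^4 + (4)*y2*y3*m1^2*m3^2 + (4)*y2*y3*m1^2*m2^2 + (-2)*y2*y3*m1^4 + (1)*y2^2*m3^4 + (-2)*y2^2*m2^2*m3^2 + (1)*y2^2*m2^4 + (-2)*y2^2*m1^2*m3^2 + (-2)*y2^2*m1^2*m2^2 + (1)*y2^2*m1^4 + (-2)*x2*x3*m3^4 + (4)*x2*x3*m2^2*m3^2 + (-2)*x2*x3*m2^4 + (4)*x2*x3*m1^2*m3^2 + (4)*x2*x3*m1^2*m2^2 + (-2)*x2*x3*m1^4 + (1)*x2^2*m3^4 + (-2)*x2^2*m2^2*m3^2 + (1)*x2^2*m2^4 + (-2)*x2^2*m1^2*m3^2 + (-2)*x2^2*m1^2*m2^2 + (1)*x2^2*m1^4)*hS2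
  have gx1 : (xs - x1)*(2*S*σ*T) = K1*((x2-x1)*K3 + (x3-x1)*K2) := by
    rw [e1, sub_mul, div_mul_cancel₀ _ hT2.ne']
    linear_combination x1*hsum
  have gy1 : (ys - y1)*(2*S*σ*T) = K1*((y2-y1)*K3 + (y3-y1)*K2) := by
    rw [e2, sub_mul, div_mul_cancel₀ _ hT2.ne']
    linear_combination y1*hsum
  have k1 : ((xs-x1)*(2*S*σ*T))^2 + ((ys-y1)*(2*S*σ*T))^2 = K1^2*(2*m1^2*S^2*T) := by
    rw [gx1, gy1]; linear_combination K1^2*hI1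
  have hdist1 : (xs-x1)^2 + (ys-y1)^2 = m1^2*K1^2/(2*σ^2*T) := by
    rw [eq_div_iff hdn2.ne']
    apply mul_left_cancel₀ hdn3.ne'
    linear_combination k1
  have hrhs1 : (m1*K1/(2*σ*Real.sqrt d))^2 = m1^2*K1^2/(2*σ^2*T) := by
    rw [div_pow, mul_pow, mul_pow, Real.sq_sqrt hdpos.le, hd']
    rw [div_eq_div_iff (ne_of_gt (mul_pos (pow_pos (mul_pos two_pos hσpos) 2)
      (div_pos hTpos two_pos))) hdn2.ne']
    ring
  have hrn1 : 0 ≤ m1*K1/(2*σ*Real.sqrt d) :=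
    div_nonneg (mul_nonneg hm1.le hK1pos.le)
      (mul_nonneg (mul_nonneg (by norm_num : (0:ℝ) ≤ 2) hσpos.le) (Real.sqrt_nonneg d))
  have goal1 : Real.sqrt ((xs-x1)^2 + (ys-y1)^2) = m1*K1/(2*σ*Real.sqrt d) := by
    rw [hdist1, ← hrhs1, Real.sqrt_sq hrn1]
  have hI2 : ((x1-x2)*K3 + (x3-x2)*K1)^2 + ((y1-y2)*K3 + (y3-y2)*K1)^2 = 2*m2^2*S^2*T := by
    rw [hTdef, hK1, hK3, ha12, ha13, ha23]
    linear_combination ((1)*y2^2*x3^2*y3^2 + (1)*y2^2*x3^4 + (-2)*x2*y2*x3*y3^3 + (-2)*x2*y2*x3^3*y3 + (1)*x2^2*y3^4 + (1)*x2^2*x3^2*y3^2 + (-2)*y1*y2*x3^2*y3^2 + (-2)*y1*y2*x3^4 + (-2)*y1*y2^2*x3^2*y3 + (2)*y1*x2*x3*y3^3 + (2)*y1*x2*x3^3*y3 + (6)*y1*x2*y2*x3*y3^2 + (2)*y1*x2*y2*x3^3 + (-4)*y1*x2^2*y3^3 + (-2)*y1*x2^2*x3^2*y3 + (1)*y1^2*x3^2*y3^2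 + (1)*y1^2*x3^4 + (4)*y1^2*y2*x3^2*y3 + (1)*y1^2*y2^2*x3^2 + (-6)*y1^2*x2*x3*y3^2 + (-2)*y1^2*x2*x3^3 + (-6)*y1^2*x2*y2*x3*y3 + (6)*y1^2*x2^2*y3^2 + (1)*y1^2*x2^2*x3^2 + (-2)*y1^3*x3^2*y3 + (-2)*y1^3*y2*x3^2 + (6)*y1^3*x2*x3*y3 + (2)*y1^3*x2*y2*x3 + (-4)*y1^3*x2^2*y3 + (1)*y1^4*x3^2 + (-2)*y1^4*x2*x3 + (1)*y1^4*x2^2 + (2)*x1*y2*x3*y3^3 + (2)*x1*y2*x3^3*y3 + (-2)*x1*y2^2*x3*y3^2 + (-4)*x1*y2^2*x3^3 + (-2)*x1*x2*y3^4 + (-2)*x1*x2*x3^2*y3^2 + (2)*x1*x2*y2*y3^3 + (6)*x1*x2*y2*x3^2*y3 + (-2)*x1*x2^2*x3*y3^2 + (-2)*x1*y1*x3*y3^3 + (-2)*x1*y1*x3^3*y3 + (-2)*x1*y1*y2*x3*y3^2 + (6)*x1*y1*y2*x3^3 + (4)*x1*y1*y2^2*x3*y3 + (6)*x1*y1*x2*y3^3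 + (-2)*x1*y1*x2*x3^2*y3 + (-6)*x1*y1*x2*y2*y3^2 + (-6)*x1*y1*x2*y2*x3^2 + (4)*x1*y1*x2^2*x3*y3 + (4)*x1*y1^2*x3*y3^2 + (-2)*x1*y1^2*x3^3 + (-2)*x1*y1^2*y2*x3*y3 + (-2)*x1*y1^2*y2^2*x3 + (-6)*x1*y1^2*x2*y3^2 + (4)*x1*y1^2*x2*x3^2 + (6)*x1*y1^2*x2*y2*y3 + (-2)*x1*y1^2*x2^2*x3 + (-2)*x1*y1^3*x3*y3 + (2)*x1*y1^3*y2*x3 + (2)*x1*y1^3*x2*y3 + (-2)*x1*y1^3*x2*y2 + (1)*x1^2*y3^4 + (1)*x1^2*x3^2*y3^2 + (-2)*x1^2*y2*y3^3 + (-6)*x1^2*y2*x3^2*y3 + (1)*x1^2*y2^2*y3^2 + (6)*x1^2*y2^2*x3^2 + (4)*x1^2*x2*x3*y3^2 + (-6)*x1^2*x2*y2*x3*y3 + (1)*x1^2*x2^2*y3^2 + (-2)*x1^2*y1*y3^3 + (4)*x1^2*y1*x3^2*y3 + (4)*x1^2*y1*y2*y3^2 + (-6)*x1^2*y1*y2*x3^2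 + (-2)*x1^2*y1*y2^2*y3 + (-2)*x1^2*y1*x2*x3*y3 + (6)*x1^2*y1*x2*y2*x3 + (-2)*x1^2*y1*x2^2*y3 + (1)*x1^2*y1^2*y3^2 + (1)*x1^2*y1^2*x3^2 + (-2)*x1^2*y1^2*y2*y3 + (1)*x1^2*y1^2*y2^2 + (-2)*x1^2*y1^2*x2*x3 + (1)*x1^2*y1^2*x2^2 + (-2)*x1^3*x3*y3^2 + (6)*x1^3*y2*x3*y3 + (-4)*x1^3*y2^2*x3 + (-2)*x1^3*x2*y3^2 + (2)*x1^3*x2*y2*y3 + (-2)*x1^3*y1*x3*y3 + (2)*x1^3*y1*y2*x3 + (2)*x1^3*y1*x2*y3 + (-2)*x1^3*y1*x2*y2 + (1)*x1^4*y3^2 + (-2)*x1^4*y2*y3 + (1)*x1^4*y2^2)*hσ4 + ((-8)*m2^2*S*σ + (1)*y3^2*m3^4 + (-2)*y3^2*m2^2*m3^2 + (1)*y3^2*m2^4 + (-2)*y3^2*m1^2*m3^2 + (-2)*y3^2*m1^2*m2^2 + (1)*y3^2*m1^4 + (1)*x3^2*m3^4 + (-2)*x3^2*m2^2*m3^2 +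 (1)*x3^2*m2^4 + (-2)*x3^2*m1^2*m3^2 + (-2)*x3^2*m1^2*m2^2 + (1)*x3^2*m1^4 + (-2)*y1*y3*m3^4 + (4)*y1*y3*m2^2*m3^2 + (-2)*y1*y3*m2^4 + (4)*y1*y3*m1^2*m3^2 + (4)*y1*y3*m1^2*m2^2 + (-2)*y1*y3*m1^4 + (1)*y1^2*m3^4 + (-2)*y1^2*m2^2*m3^2 + (1)*y1^2*m2^4 + (-2)*y1^2*m1^2*m3^2 + (-2)*y1^2*m1^2*m2^2 + (1)*y1^2*m1^4 + (-2)*x1*x3*m3^4 + (4)*x1*x3*m2^2*m3^2 + (-2)*x1*x3*m2^4 + (4)*x1*x3*m1^2*m3^2 + (4)*x1*x3*m1^2*m2^2 + (-2)*x1*x3*m1^4 + (1)*x1^2*m3^4 + (-2)*x1^2*m2^2*m3^2 + (1)*x1^2*m2^4 + (-2)*x1^2*m1^2*m3^2 + (-2)*x1^2*m1^2*m2^2 + (1)*x1^2*m1^4)*hS2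
  have gx2 : (xs - x2)*(2*S*σ*T) = K2*((x1-x2)*K3 + (x3-x2)*K1) := by
    rw [e1, sub_mul, div_mul_cancel₀ _ hT2.ne']
    linear_combination x2*hsum
  have gy2 : (ys - y2)*(2*S*σ*T) = K2*((y1-y2)*K3 + (y3-y2)*K1) := by
    rw [e2, sub_mul, div_mul_cancel₀ _ hT2.ne']
    linear_combination y2*hsum
  have k2 : ((xs-x2)*(2*S*σ*T))^2 + ((ys-y2)*(2*S*σ*T))^2 = K2^2*(2*m2^2*S^2*T) := by
    rw [gx2, gy2]; linear_combination K2^2*hI2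
  have hdist2 : (xs-x2)^2 + (ys-y2)^2 = m2^2*K2^2/(2*σ^2*T) := by
    rw [eq_div_iff hdn2.ne']
    apply mul_left_cancel₀ hdn3.ne'
    linear_combination k2
  have hrhs2 : (m2*K2/(2*σ*Real.sqrt d))^2 = m2^2*K2^2/(2*σ^2*T) := by
    rw [div_pow, mul_pow, mul_pow, Real.sq_sqrt hdpos.le, hd']
    rw [div_eq_div_iff (ne_of_gt (mul_pos (pow_pos (mul_pos two_pos hσpos) 2)
      (div_pos hTpos two_pos))) hdn2.ne']
    ring
  have hrn2 : 0 ≤ m2*K2/(2*σ*Real.sqrt d) :=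
    div_nonneg (mul_nonneg hm2.le hK2pos.le)
      (mul_nonneg (mul_nonneg (by norm_num : (0:ℝ) ≤ 2) hσpos.le) (Real.sqrt_nonneg d))
  have goal2 : Real.sqrt ((xs-x2)^2 + (ys-y2)^2) = m2*K2/(2*σ*Real.sqrt d) := by
    rw [hdist2, ← hrhs2, Real.sqrt_sq hrn2]
  have hI3 : ((x1-x3)*K2 + (x2-x3)*K1)^2 + ((y1-y3)*K2 + (y2-y3)*K1)^2 = 2*m3^2*S^2*T := by
    rw [hTdef, hK1, hK2, ha12, ha13, ha23]
    linear_combination ((1)*y2^4*x3^2 + (-2)*x2*y2^3*x3*y3 + (1)*x2^2*y2^2*y3^2 + (1)*x2^2*y2^2*x3^2 + (-2)*x2^3*y2*x3*y3 + (1)*x2^4*y3^2 + (-4)*y1*y2^3*x3^2 + (6)*y1*x2*y2^2*x3*y3 + (2)*y1*x2*y2^3*x3 + (-2)*y1*x2^2*y2*y3^2 + (-2)*y1*x2^2*y2*x3^2 + (-2)*y1*x2^2*y2^2*y3 + (2)*y1*x2^3*x3*y3 + (2)*y1*x2^3*y2*x3 + (-2)*y1*x2^4*y3 + (6)*y1^2*y2^2*x3^2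 + (-6)*y1^2*x2*y2*x3*y3 + (-6)*y1^2*x2*y2^2*x3 + (1)*y1^2*x2^2*y3^2 + (1)*y1^2*x2^2*x3^2 + (4)*y1^2*x2^2*y2*y3 + (1)*y1^2*x2^2*y2^2 + (-2)*y1^2*x2^3*x3 + (1)*y1^2*x2^4 + (-4)*y1^3*y2*x3^2 + (2)*y1^3*x2*x3*y3 + (6)*y1^3*x2*y2*x3 + (-2)*y1^3*x2^2*y3 + (-2)*y1^3*x2^2*y2 + (1)*y1^4*x3^2 + (-2)*y1^4*x2*x3 + (1)*y1^4*x2^2 + (2)*x1*y2^3*x3*y3 + (-2)*x1*y2^4*x3 + (-2)*x1*x2*y2^2*y3^2 + (-2)*x1*x2*y2^2*x3^2 + (2)*x1*x2*y2^3*y3 + (6)*x1*x2^2*y2*x3*y3 + (-2)*x1*x2^2*y2^2*x3 + (-4)*x1*x2^3*y3^2 + (2)*x1*x2^3*y2*y3 + (-6)*x1*y1*y2^2*x3*y3 + (6)*x1*y1*y2^3*x3 + (4)*x1*y1*x2*y2*y3^2 + (4)*x1*y1*x2*y2*x3^2 + (-2)*x1*y1*x2*y2^2*y3 + (-2)*x1*y1*x2*y2^3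 + (-6)*x1*y1*x2^2*x3*y3 + (-2)*x1*y1*x2^2*y2*x3 + (6)*x1*y1*x2^3*y3 + (-2)*x1*y1*x2^3*y2 + (6)*x1*y1^2*y2*x3*y3 + (-6)*x1*y1^2*y2^2*x3 + (-2)*x1*y1^2*x2*y3^2 + (-2)*x1*y1^2*x2*x3^2 + (-2)*x1*y1^2*x2*y2*y3 + (4)*x1*y1^2*x2*y2^2 + (4)*x1*y1^2*x2^2*x3 + (-2)*x1*y1^2*x2^3 + (-2)*x1*y1^3*x3*y3 + (2)*x1*y1^3*y2*x3 + (2)*x1*y1^3*x2*y3 + (-2)*x1*y1^3*x2*y2 + (1)*x1^2*y2^2*y3^2 + (1)*x1^2*y2^2*x3^2 + (-2)*x1^2*y2^3*y3 + (1)*x1^2*y2^4 + (-6)*x1^2*x2*y2*x3*y3 + (4)*x1^2*x2*y2^2*x3 + (6)*x1^2*x2^2*y3^2 + (-6)*x1^2*x2^2*y2*y3 + (1)*x1^2*x2^2*y2^2 + (-2)*x1^2*y1*y2*y3^2 + (-2)*x1^2*y1*y2*x3^2 + (4)*x1^2*y1*y2^2*y3 + (-2)*x1^2*y1*y2^3 +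 (6)*x1^2*y1*x2*x3*y3 + (-2)*x1^2*y1*x2*y2*x3 + (-6)*x1^2*y1*x2^2*y3 + (4)*x1^2*y1*x2^2*y2 + (1)*x1^2*y1^2*y3^2 + (1)*x1^2*y1^2*x3^2 + (-2)*x1^2*y1^2*y2*y3 + (1)*x1^2*y1^2*y2^2 + (-2)*x1^2*y1^2*x2*x3 + (1)*x1^2*y1^2*x2^2 + (2)*x1^3*y2*x3*y3 + (-2)*x1^3*y2^2*x3 + (-4)*x1^3*x2*y3^2 + (6)*x1^3*x2*y2*y3 + (-2)*x1^3*x2*y2^2 + (-2)*x1^3*y1*x3*y3 + (2)*x1^3*y1*y2*x3 + (2)*x1^3*y1*x2*y3 + (-2)*x1^3*y1*x2*y2 + (1)*x1^4*y3^2 + (-2)*x1^4*y2*y3 + (1)*x1^4*y2^2)*hσ4 + ((-8)*m3^2*S*σ + (1)*y2^2*m3^4 + (-2)*y2^2*m2^2*m3^2 + (1)*y2^2*m2^4 + (-2)*y2^2*m1^2*m3^2 + (-2)*y2^2*m1^2*m2^2 + (1)*y2^2*m1^4 + (1)*x2^2*m3^4 + (-2)*x2^2*m2^2*m3^2 + (1)*x2^2*m2^4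 + (-2)*x2^2*m1^2*m3^2 + (-2)*x2^2*m1^2*m2^2 + (1)*x2^2*m1^4 + (-2)*y1*y2*m3^4 + (4)*y1*y2*m2^2*m3^2 + (-2)*y1*y2*m2^4 + (4)*y1*y2*m1^2*m3^2 + (4)*y1*y2*m1^2*m2^2 + (-2)*y1*y2*m1^4 + (1)*y1^2*m3^4 + (-2)*y1^2*m2^2*m3^2 + (1)*y1^2*m2^4 + (-2)*y1^2*m1^2*m3^2 + (-2)*y1^2*m1^2*m2^2 + (1)*y1^2*m1^4 + (-2)*x1*x2*m3^4 + (4)*x1*x2*m2^2*m3^2 + (-2)*x1*x2*m2^4 + (4)*x1*x2*m1^2*m3^2 + (4)*x1*x2*m1^2*m2^2 + (-2)*x1*x2*m1^4 + (1)*x1^2*m3^4 + (-2)*x1^2*m2^2*m3^2 + (1)*x1^2*m2^4 + (-2)*x1^2*m1^2*m3^2 + (-2)*x1^2*m1^2*m2^2 + (1)*x1^2*m1^4)*hS2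
  have gx3 : (xs - x3)*(2*S*σ*T) = K3*((x1-x3)*K2 + (x2-x3)*K1) := by
    rw [e1, sub_mul, div_mul_cancel₀ _ hT2.ne']
    linear_combination x3*hsum
  have gy3 : (ys - y3)*(2*S*σ*T) = K3*((y1-y3)*K2 + (y2-y3)*K1) := by
    rw [e2, sub_mul, div_mul_cancel₀ _ hT2.ne']
    linear_combination y3*hsum
  have k3 : ((xs-x3)*(2*S*σ*T))^2 + ((ys-y3)*(2*S*σ*T))^2 = K3^2*(2*m3^2*S^2*T) := by
    rw [gx3, gy3]; linear_combination K3^2*hI3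
  have hdist3 : (xs-x3)^2 + (ys-y3)^2 = m3^2*K3^2/(2*σ^2*T) := by
    rw [eq_div_iff hdn2.ne']
    apply mul_left_cancel₀ hdn3.ne'
    linear_combination k3
  have hrhs3 : (m3*K3/(2*σ*Real.sqrt d))^2 = m3^2*K3^2/(2*σ^2*T) := by
    rw [div_pow, mul_pow, mul_pow, Real.sq_sqrt hdpos.le, hd']
    rw [div_eq_div_iff (ne_of_gt (mul_pos (pow_pos (mul_pos two_pos hσpos) 2)
      (div_pos hTpos two_pos))) hdn2.ne']
    ring
  have hrn3 : 0 ≤ m3*K3/(2*σ*Real.sqrt d) :=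
    div_nonneg (mul_nonneg hm3.le hK3pos.le)
      (mul_nonneg (mul_nonneg (by norm_num : (0:ℝ) ≤ 2) hσpos.le) (Real.sqrt_nonneg d))
  have goal3 : Real.sqrt ((xs-x3)^2 + (ys-y3)^2) = m3*K3/(2*σ*Real.sqrt d) := by
    rw [hdist3, ← hrhs3, Real.sqrt_sq hrn3]
  exact ⟨goal1, goal2, goal3⟩
end

section
/- If the triangle P1P2P3 is nondegenerate and the weight conditions (W) hold, then the point P* = (x*, y*) with x* = (K1K2K3/(4 S σ d))·(x1/K1 + x2/K2 + x3/K3) and y* = (K1K2K3/(4 S σ d))·(y1/K1 + y2/K2 + y3/K3) is a stationary point of F, i.e. Σ_{j=1}^3 m_j (x* − x_j)/√((x*−x_j)²+(y*−y_j)²) = 0 and Σ_{j=1}^3 m_j (y* − y_j)/√((x*−x_j)²+(y*−y_j)²) = 0. -/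
/-!
By Heron's formula, `S` and `σ` are the doubled areas of the triangle `P₁P₂P₃` and of a triangle
with sides `m₁, m₂, m₃`; if `θ_j` is the angle of the latter opposite `m_j`, then
`K_j = 2 m_k m_l r_jk r_jl sin (α_j + θ_j)`. Condition (W) reads `cos α_j + cos θ_j > 0`, i.e.
`α_j + θ_j < π`, so every `K_j > 0`; since `cos α_j ≤ 1` it also gives the triangle inequalities
for the `m_j`, so `σ > 0`. Two polynomial identities, consequences of
`σ² heron(r²) = S² heron(m²)`, finish the proof: `K₁K₂ + K₁K₃ + K₂K₃ = 2S Σ m_j² K_j = 4Sσd`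
says that `P*` is the barycentre of the vertices with weights `1/K_j`, and
`|P* - P_j| = m_j K_j / √(2σ Σ m_k² K_k)`. Hence `m_j (P* - P_j) / |P* - P_j|` is a common
multiple of `(P* - P_j) / K_j`, and these vectors sum to zero at that barycentre.
-/

open Real

/-- Sixteen times the squared area of a triangle whose squared side lengths are `a, b, c`. -/
def heron (a b c : ℝ) : ℝ := 2*a*b + 2*a*c + 2*b*c - a^2 - b^2 - c^2

theorem heron_swap (a b c : ℝ) : heron b a c = heron a b c := by unfold heron; ring

theorem heron_rotate (a b c : ℝ) : heron b c a = heron a b c := by unfold heron; ring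

theorem heron_sq_pos {a b c : ℝ} (ha : a < b + c) (hb : b < a + c) (hc : c < a + b) :
    0 < heron (a^2) (b^2) (c^2) := by
  have hfactor : heron (a^2) (b^2) (c^2) = (a + b + c)*(b + c - a)*(a + c - b)*(a + b - c) := by
    unfold heron; ring
  rw [hfactor]
  have : 0 < a + b + c := by linarith
  have := sub_pos.2 ha; have := sub_pos.2 hb; have := sub_pos.2 hc
  positivity

theorem sigma_pos_and_sq {σ m₁ m₂ m₃ : ℝ}
    (h₁ : m₁ < m₂ + m₃) (h₂ : m₂ < m₁ + m₃) (h₃ : m₃ < m₁ + m₂)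
    (hσ : σ = (1/2) * √(-m₁^4 - m₂^4 - m₃^4 + 2*m₁^2*m₂^2 + 2*m₁^2*m₃^2 + 2*m₂^2*m₃^2)) :
    0 < σ ∧ 4*σ^2 = heron (m₁^2) (m₂^2) (m₃^2) := by
  have hpos := heron_sq_pos h₁ h₂ h₃
  have hσ' : σ = √(heron (m₁^2) (m₂^2) (m₃^2)) / 2 := by rw [hσ, heron]; ring_nf
  exact ⟨by rw [hσ']; positivity, by rw [hσ', div_pow, sq_sqrt hpos.le]; ring⟩

theorem div_le_one_of_sq_add_sq_eq {D S R : ℝ} (hR : 0 ≤ R) (h : D^2 + S^2 = R^2) : D / R ≤ 1 :=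
  div_le_one_of_le₀ (abs_le_of_sq_le_sq' (by nlinarith) hR).2 hR

theorem lt_add_of_sq_lt_of_le_one {a b c C : ℝ} (hb : 0 ≤ b) (hc : 0 ≤ c) (hC : C ≤ 1)
    (h : a^2 < b^2 + c^2 + 2*b*c*C) : a < b + c :=
  (abs_lt_of_sq_lt_sq' (by nlinarith [mul_nonneg hb hc]) (by positivity)).2

/-- With `X + iY = R e^{iα}` and `U + iV = M e^{iθ}`, `α, θ ∈ (0, π)`, the hypothesis says
`cos α + cos θ > 0`, i.e. `α + θ < π`, and the conclusion says `R M sin (α + θ) > 0`. -/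
theorem mul_add_mul_pos_of_cos_add_cos_pos {X Y R U V M : ℝ} (hY : 0 < Y) (hV : 0 < V)
    (hR : 0 ≤ R) (hM : 0 ≤ M) (hXY : X^2 + Y^2 = R^2) (hUV : U^2 + V^2 = M^2) (h : 0 < M*X + R*U) :
    0 < X*V + U*Y := by
  have hXU : (X*U)^2 ≤ (R*M)^2 := by
    rw [mul_pow, mul_pow, ← hXY, ← hUV]
    nlinarith [mul_nonneg (sq_nonneg X) (sq_nonneg V), mul_nonneg (sq_nonneg Y) (sq_nonneg U),
      mul_nonneg (sq_nonneg Y) (sq_nonneg V)]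
  have hXU' := (abs_le_of_sq_le_sq' hXU (mul_nonneg hR hM)).2
  have hfactor : (X*V + U*Y)*(M*Y + R*V) = (M*X + R*U)*(R*M - X*U + Y*V) := by
    linear_combination (R*X)*hUV + (M*U)*hXY
  refine pos_of_mul_pos_left (b := M*Y + R*V) ?_ (by positivity)
  rw [hfactor]
  exact mul_pos h (by nlinarith [mul_pos hY hV])

theorem vertex_weight_pos {D S R σ m₁ m₂ m₃ : ℝ} (hm₂ : 0 < m₂) (hm₃ : 0 < m₃) (hS : 0 < S)
    (hσ : 0 < σ) (hR : 0 ≤ R) (hDS : D^2 + S^2 = R^2)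
    (hσ' : 4*σ^2 = heron (m₁^2) (m₂^2) (m₃^2))
    (hW : m₁^2 < m₂^2 + m₃^2 + 2*m₂*m₃*(D/R)) :
    0 < 2*D*σ + (m₂^2 + m₃^2 - m₁^2)*S := by
  have hR' : 0 < R := lt_of_le_of_ne hR fun h => by subst h; nlinarith
  have hW' : 0 < 2*m₂*m₃*D + R*(m₂^2 + m₃^2 - m₁^2) := by
    have := mul_lt_mul_of_pos_right hW hR'
    rw [add_mul, mul_assoc (2*m₂*m₃), div_mul_cancel₀ D hR'.ne'] at this
    linarith
  have := mul_add_mul_pos_of_cos_add_cos_pos hS (by positivity : 0 < 2*σ) hR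
    (by positivity : 0 ≤ 2*m₂*m₃) hDS (by unfold heron at hσ'; linear_combination hσ') hW'
  linarith

theorem weights_pos {D₁ D₂ D₃ R₁ R₂ R₃ S σ m₁ m₂ m₃ : ℝ}
    (hm₁ : 0 < m₁) (hm₂ : 0 < m₂) (hm₃ : 0 < m₃) (hS : 0 < S)
    (hR₁ : 0 ≤ R₁) (hR₂ : 0 ≤ R₂) (hR₃ : 0 ≤ R₃)
    (hL₁ : D₁^2 + S^2 = R₁^2) (hL₂ : D₂^2 + S^2 = R₂^2) (hL₃ : D₃^2 + S^2 = R₃^2)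
    (hσ : σ = (1/2) * √(-m₁^4 - m₂^4 - m₃^4 + 2*m₁^2*m₂^2 + 2*m₁^2*m₃^2 + 2*m₂^2*m₃^2))
    (hW₁ : m₁^2 < m₂^2 + m₃^2 + 2*m₂*m₃*(D₁/R₁))
    (hW₂ : m₂^2 < m₁^2 + m₃^2 + 2*m₁*m₃*(D₂/R₂))
    (hW₃ : m₃^2 < m₁^2 + m₂^2 + 2*m₁*m₂*(D₃/R₃)) :
    0 < σ ∧ 4*σ^2 = heron (m₁^2) (m₂^2) (m₃^2) ∧
      0 < 2*D₁*σ + (m₂^2 + m₃^2 - m₁^2)*S ∧ 0 < 2*D₂*σ + (m₁^2 + m₃^2 - m₂^2)*S ∧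
      0 < 2*D₃*σ + (m₁^2 + m₂^2 - m₃^2)*S := by
  obtain ⟨hσ0, hσsq⟩ := sigma_pos_and_sq
    (lt_add_of_sq_lt_of_le_one hm₂.le hm₃.le (div_le_one_of_sq_add_sq_eq hR₁ hL₁) hW₁)
    (lt_add_of_sq_lt_of_le_one hm₁.le hm₃.le (div_le_one_of_sq_add_sq_eq hR₂ hL₂) hW₂)
    (lt_add_of_sq_lt_of_le_one hm₁.le hm₂.le (div_le_one_of_sq_add_sq_eq hR₃ hL₃) hW₃) hσ
  exact ⟨hσ0, hσsq, vertex_weight_pos hm₂ hm₃ hS hσ0 hR₁ hL₁ hσsq hW₁,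
    vertex_weight_pos hm₁ hm₃ hS hσ0 hR₂ hL₂ (hσsq.trans (heron_swap _ _ _).symm) hW₂,
    vertex_weight_pos hm₁ hm₂ hS hσ0 hR₃ hL₃ (hσsq.trans (heron_rotate _ _ _)) hW₃⟩

section Identities

variable {u v w a b c S σ K₁ K₂ K₃ : ℝ}

theorem pairwise_prod_sum_eq (h : σ^2 * heron u v w = S^2 * heron a b c)
    (hK₁ : K₁ = (u + v - w)*σ + (b + c - a)*S) (hK₂ : K₂ = (w + u - v)*σ + (a + c - b)*S)
    (hK₃ : K₃ = (v + w - u)*σ + (a + b - c)*S) :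
    K₁*K₂ + K₁*K₃ + K₂*K₃ = 2*S*(a*K₁ + b*K₂ + c*K₃) := by
  subst hK₁ hK₂ hK₃
  unfold heron at h
  linear_combination h

/-- For `u, v, w = |P₁P₂|², |P₁P₃|², |P₂P₃|²` the first bracket is `|K₃ (P₂ - P₁) + K₂ (P₃ - P₁)|²`,
and the other two are its analogues at `P₂` and `P₃`. -/
theorem weight_comb_norm_sq_eq (h : σ^2 * heron u v w = S^2 * heron a b c)
    (hK₁ : K₁ = (u + v - w)*σ + (b + c - a)*S) (hK₂ : K₂ = (w + u - v)*σ + (a + c - b)*S)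
    (hK₃ : K₃ = (v + w - u)*σ + (a + b - c)*S) :
    σ*(K₃^2*u + K₂*K₃*(u + v - w) + K₂^2*v) = 2*a*S^2*(a*K₁ + b*K₂ + c*K₃) ∧
    σ*(K₃^2*u + K₁*K₃*(u + w - v) + K₁^2*w) = 2*b*S^2*(a*K₁ + b*K₂ + c*K₃) ∧
    σ*(K₂^2*v + K₁*K₂*(v + w - u) + K₁^2*w) = 2*c*S^2*(a*K₁ + b*K₂ + c*K₃) := by
  subst hK₁ hK₂ hK₃
  unfold heron at h
  refine ⟨?_, ?_, ?_⟩
  · linear_combination (2*a*S + w*σ) * h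
  · linear_combination (2*b*S + v*σ) * h
  · linear_combination (2*c*S + u*σ) * h

end Identities

section Barycenter

variable {x₁ y₁ x₂ y₂ x₃ y₃ K₁ K₂ K₃ xs ys : ℝ}

theorem mul_eq_of_eq_mul_sum_div (hK₁ : K₁ ≠ 0) (hK₂ : K₂ ≠ 0) (hK₃ : K₃ ≠ 0)
    (hN : K₁*K₂ + K₁*K₃ + K₂*K₃ ≠ 0)
    (h : xs = K₁*K₂*K₃/(K₁*K₂ + K₁*K₃ + K₂*K₃) * (x₁/K₁ + x₂/K₂ + x₃/K₃)) :
    (K₁*K₂ + K₁*K₃ + K₂*K₃)*xs = K₂*K₃*x₁ + K₁*K₃*x₂ + K₁*K₂*x₃ := by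
  rw [h, ← mul_assoc, mul_div_cancel₀ _ hN]
  field_simp

theorem sum_mul_sub_div_eq_zero {m₁ m₂ m₃ t : ℝ} (hm₁ : m₁ ≠ 0) (hm₂ : m₂ ≠ 0) (hm₃ : m₃ ≠ 0)
    (hK₁ : K₁ ≠ 0) (hK₂ : K₂ ≠ 0) (hK₃ : K₃ ≠ 0) (ht : t ≠ 0)
    (h : (K₁*K₂ + K₁*K₃ + K₂*K₃)*xs = K₂*K₃*x₁ + K₁*K₃*x₂ + K₁*K₂*x₃) :
    m₁*(xs - x₁)/(t*(m₁*K₁)) + m₂*(xs - x₂)/(t*(m₂*K₂)) + m₃*(xs - x₃)/(t*(m₃*K₃)) = 0 := by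
  field_simp
  linear_combination h

/-- With `P = (xs, ys)` and `N = K₁K₂ + K₁K₃ + K₂K₃`, `hx` and `hy` say
`N (P - P₁) = K₁ (K₃ (P₂ - P₁) + K₂ (P₃ - P₁))`; expand the square using
`2 (P₂ - P₁) ⬝ (P₃ - P₁) = u + v - w`. -/
theorem sq_mul_dist_sq_eq {u v w : ℝ} (hu : u = (x₁ - x₂)^2 + (y₁ - y₂)^2)
    (hv : v = (x₁ - x₃)^2 + (y₁ - y₃)^2) (hw : w = (x₂ - x₃)^2 + (y₂ - y₃)^2)
    (hx : (K₁*K₂ + K₁*K₃ + K₂*K₃)*xs = K₂*K₃*x₁ + K₁*K₃*x₂ + K₁*K₂*x₃)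
    (hy : (K₁*K₂ + K₁*K₃ + K₂*K₃)*ys = K₂*K₃*y₁ + K₁*K₃*y₂ + K₁*K₂*y₃) :
    (K₁*K₂ + K₁*K₃ + K₂*K₃)^2 * ((xs - x₁)^2 + (ys - y₁)^2)
      = K₁^2 * (K₃^2*u + K₂*K₃*(u + v - w) + K₂^2*v) ∧
    (K₁*K₂ + K₁*K₃ + K₂*K₃)^2 * ((xs - x₂)^2 + (ys - y₂)^2)
      = K₂^2 * (K₃^2*u + K₁*K₃*(u + w - v) + K₁^2*w) ∧
    (K₁*K₂ + K₁*K₃ + K₂*K₃)^2 * ((xs - x₃)^2 + (ys - y₃)^2)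
      = K₃^2 * (K₂^2*v + K₁*K₂*(v + w - u) + K₁^2*w) := by
  subst hu hv hw
  set N := K₁*K₂ + K₁*K₃ + K₂*K₃
  refine ⟨?_, ?_, ?_⟩
  · linear_combination (N*(xs - x₁) + K₁*(K₃*(x₂ - x₁) + K₂*(x₃ - x₁))) * hx
      + (N*(ys - y₁) + K₁*(K₃*(y₂ - y₁) + K₂*(y₃ - y₁))) * hy
  · linear_combination (N*(xs - x₂) + K₂*(K₃*(x₁ - x₂) + K₁*(x₃ - x₂))) * hx
      + (N*(ys - y₂) + K₂*(K₃*(y₁ - y₂) + K₁*(y₃ - y₂))) * hy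
  · linear_combination (N*(xs - x₃) + K₃*(K₂*(x₁ - x₃) + K₁*(x₂ - x₃))) * hx
      + (N*(ys - y₃) + K₃*(K₂*(y₁ - y₃) + K₁*(y₂ - y₃))) * hy

end Barycenter

theorem sqrt_eq_inv_sqrt_mul {ρ Q K m S σ T : ℝ} (hS : 0 < S) (hσ : 0 < σ) (hT : 0 < T)
    (hK : 0 < K) (hm : 0 < m) (hQ : σ*Q = 2*m^2*S^2*T) (hρ : (2*S*T)^2*ρ = K^2*Q) :
    √ρ = (√(2*σ*T))⁻¹ * (m*K) := by
  have hρ' : ρ = (m*K)^2 / (2*σ*T) := by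
    rw [eq_div_iff (by positivity)]
    refine mul_left_cancel₀ (by positivity : 2*S^2*T ≠ 0) ?_
    linear_combination σ*hρ + K^2*hQ
  rw [hρ', sqrt_div' _ (by positivity), sqrt_sq (by positivity), div_eq_inv_mul]

/-- The point `P* = (x*, y*)` given by the explicit formulas is a stationary
point of `F`. -/
theorem explicit_point_is_stationary
        (x1 y1 x2 y2 x3 y3 m1 m2 m3 : ℝ)
    (hm1 : 0 < m1) (hm2 : 0 < m2) (hm3 : 0 < m3)
    (hnd : x1*y2 + x2*y3 + x3*y1 - x1*y3 - x3*y2 - x2*y1 ≠ 0)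
    (r12 r13 r23 S σ K1 K2 K3 : ℝ)
    (hr12 : r12 = Real.sqrt ((x1-x2)^2 + (y1-y2)^2))
    (hr13 : r13 = Real.sqrt ((x1-x3)^2 + (y1-y3)^2))
    (hr23 : r23 = Real.sqrt ((x2-x3)^2 + (y2-y3)^2))
    (hS : S = |x1*y2 + x2*y3 + x3*y1 - x1*y3 - x3*y2 - x2*y1|)
    (hσ : σ = (1/2) * Real.sqrt
        (-m1^4 - m2^4 - m3^4 + 2*m1^2*m2^2 + 2*m1^2*m3^2 + 2*m2^2*m3^2))
    (hK1 : K1 = (r12^2 + r13^2 - r23^2)*σ + (m2^2 + m3^2 - m1^2)*S)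
    (hK2 : K2 = (r23^2 + r12^2 - r13^2)*σ + (m1^2 + m3^2 - m2^2)*S)
    (hK3 : K3 = (r13^2 + r23^2 - r12^2)*σ + (m1^2 + m2^2 - m3^2)*S)
    (cosα1 cosα2 cosα3 : ℝ)
    (hc1 : cosα1 = ((x2-x1)*(x3-x1) + (y2-y1)*(y3-y1)) / (r12 * r13))
    (hc2 : cosα2 = ((x1-x2)*(x3-x2) + (y1-y2)*(y3-y2)) / (r12 * r23))
    (hc3 : cosα3 = ((x1-x3)*(x2-x3) + (y1-y3)*(y2-y3)) / (r13 * r23))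
    (hW1 : m1^2 < m2^2 + m3^2 + 2*m2*m3*cosα1)
    (hW2 : m2^2 < m1^2 + m3^2 + 2*m1*m3*cosα2)
    (hW3 : m3^2 < m1^2 + m2^2 + 2*m1*m2*cosα3)
    (d : ℝ)
    (hd : d = (m1^2*K1 + m2^2*K2 + m3^2*K3) / (2*σ))
    (xs ys : ℝ)
    (hxs : xs = (K1*K2*K3/(4*S*σ*d)) * (x1/K1 + x2/K2 + x3/K3))
    (hys : ys = (K1*K2*K3/(4*S*σ*d)) * (y1/K1 + y2/K2 + y3/K3)) :
    (m1*(xs-x1)/Real.sqrt ((xs-x1)^2 + (ys-y1)^2)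
      + m2*(xs-x2)/Real.sqrt ((xs-x2)^2 + (ys-y2)^2)
      + m3*(xs-x3)/Real.sqrt ((xs-x3)^2 + (ys-y3)^2) = 0) ∧
    (m1*(ys-y1)/Real.sqrt ((xs-x1)^2 + (ys-y1)^2)
      + m2*(ys-y2)/Real.sqrt ((xs-x2)^2 + (ys-y2)^2)
      + m3*(ys-y3)/Real.sqrt ((xs-x3)^2 + (ys-y3)^2) = 0) := by
  subst hc1 hc2 hc3
  have hS0 : 0 < S := hS ▸ abs_pos.2 hnd
  have hSsq : S^2 = (x1*y2 + x2*y3 + x3*y1 - x1*y3 - x3*y2 - x2*y1)^2 := hS ▸ sq_abs _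
  have hu : r12^2 = (x1-x2)^2 + (y1-y2)^2 := hr12 ▸ sq_sqrt (by positivity)
  have hv : r13^2 = (x1-x3)^2 + (y1-y3)^2 := hr13 ▸ sq_sqrt (by positivity)
  have hw : r23^2 = (x2-x3)^2 + (y2-y3)^2 := hr23 ▸ sq_sqrt (by positivity)
  have h₁₂ : 0 ≤ r12 := hr12 ▸ sqrt_nonneg _
  have h₁₃ : 0 ≤ r13 := hr13 ▸ sqrt_nonneg _
  have h₂₃ : 0 ≤ r23 := hr23 ▸ sqrt_nonneg _
  have hL₁ : ((x2-x1)*(x3-x1) + (y2-y1)*(y3-y1))^2 + S^2 = (r12*r13)^2 := by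
    rw [mul_pow, hu, hv, hSsq]; ring
  have hL₂ : ((x1-x2)*(x3-x2) + (y1-y2)*(y3-y2))^2 + S^2 = (r12*r23)^2 := by
    rw [mul_pow, hu, hw, hSsq]; ring
  have hL₃ : ((x1-x3)*(x2-x3) + (y1-y3)*(y2-y3))^2 + S^2 = (r13*r23)^2 := by
    rw [mul_pow, hv, hw, hSsq]; ring
  obtain ⟨hσ0, hσsq, hK₁, hK₂, hK₃⟩ := weights_pos hm1 hm2 hm3 hS0 (mul_nonneg h₁₂ h₁₃)
    (mul_nonneg h₁₂ h₂₃) (mul_nonneg h₁₃ h₂₃) hL₁ hL₂ hL₃ hσ hW1 hW2 hW3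
  replace hK₁ : 0 < K1 := by rw [hK1, hu, hv, hw]; linear_combination hK₁
  replace hK₂ : 0 < K2 := by rw [hK2, hu, hv, hw]; linear_combination hK₂
  replace hK₃ : 0 < K3 := by rw [hK3, hu, hv, hw]; linear_combination hK₃
  have hprop : σ^2 * heron (r12^2) (r13^2) (r23^2) = S^2 * heron (m1^2) (m2^2) (m3^2) := by
    rw [← hσsq, hu, hv, hw, hSsq, heron]; ring
  have hT : 0 < m1^2*K1 + m2^2*K2 + m3^2*K3 := by positivity
  have hN := pairwise_prod_sum_eq hprop hK1 hK2 hK3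
  have hd' : 4*S*σ*d = K1*K2 + K1*K3 + K2*K3 := by rw [hN, hd]; field_simp; ring
  rw [hd'] at hxs hys
  have hx := mul_eq_of_eq_mul_sum_div hK₁.ne' hK₂.ne' hK₃.ne' (by positivity) hxs
  have hy := mul_eq_of_eq_mul_sum_div hK₁.ne' hK₂.ne' hK₃.ne' (by positivity) hys
  obtain ⟨hρ₁, hρ₂, hρ₃⟩ := sq_mul_dist_sq_eq hu hv hw hx hy
  obtain ⟨hQ₁, hQ₂, hQ₃⟩ := weight_comb_norm_sq_eq hprop hK1 hK2 hK3
  rw [hN] at hρ₁ hρ₂ hρ₃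
  rw [sqrt_eq_inv_sqrt_mul hS0 hσ0 hT hK₁ hm1 hQ₁ hρ₁,
    sqrt_eq_inv_sqrt_mul hS0 hσ0 hT hK₂ hm2 hQ₂ hρ₂,
    sqrt_eq_inv_sqrt_mul hS0 hσ0 hT hK₃ hm3 hQ₃ hρ₃]
  have ht : (√(2*σ*(m1^2*K1 + m2^2*K2 + m3^2*K3)))⁻¹ ≠ 0 := by positivity
  exact ⟨sum_mul_sub_div_eq_zero hm1.ne' hm2.ne' hm3.ne' hK₁.ne' hK₂.ne' hK₃.ne' ht hx,
    sum_mul_sub_div_eq_zero hm1.ne' hm2.ne' hm3.ne' hK₁.ne' hK₂.ne' hK₃.ne' ht hy⟩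
end

section
/- If the triangle P1P2P3 is nondegenerate and the weight conditions (W) hold, then the minimum value of F over ℝ² equals √d, and it is attained at the point P* = (x*, y*) with x* = (K1K2K3/(4 S σ d))·(x1/K1 + x2/K2 + x3/K3) and y* = (K1K2K3/(4 S σ d))·(y1/K1 + y2/K2 + y3/K3); that is, F(x*, y*) = √d and F(x,y) ≥ √d for all (x,y) ∈ ℝ². -/
/-!
Write `D_i` for the inner product `(P_j - P_i) · (P_k - P_i)` at the vertex `P_i`, so that
`S² = D₁D₂ + D₂D₃ + D₃D₁`, `r_ij² = D_i + D_j` and `K_i = 2σ D_i + (m_j² + m_k² - m_i²) S`.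
Since `cos α_i ≤ 1`, (W) forces the strict triangle inequalities on `m₁, m₂, m₃`, so `σ > 0`.
With `D_i = S cot α_i` and `m_j² + m_k² - m_i² = 2σ cot β_i`, where the `β_i` are the angles of
the triangle with sides `m₁, m₂, m₃`, one gets `K_i = 2σS (cot α_i + cot β_i)`; condition (W)
says `α_i + β_i < π`, so every `K_i` is positive.

As `4Sσd = K₁K₂ + K₁K₃ + K₂K₃`, the point `P*` is the barycentre of the `P_i` with weights
`K_j K_k`, and polynomial identities in the `D_i` give `|P* - P_i| = m_i K_i / (2σ√d)`, hence
`F(P*) = √d`. The coefficients `c_i = 2σ√d / K_i` then satisfy `Σ c_i (P* - P_i) = 0` and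
`c_i |P* - P_i| = m_i`, and summing `m_i |X - P_i| ≥ c_i (P* - P_i) · (X - P_i)` over `i`
(Cauchy–Schwarz) gives `F(X) ≥ F(P*)`.
-/

open Finset Real

theorem sum_mul_norm_sub_le_of_sum_smul_eq_zero {ι E : Type*} [NormedAddCommGroup E]
    [InnerProductSpace ℝ E] (s : Finset ι) (p : ι → E) (m c : ι → ℝ) (z : E)
    (hc : ∀ i ∈ s, 0 ≤ c i) (hm : ∀ i ∈ s, c i * ‖z - p i‖ = m i)
    (hz : ∑ i ∈ s, c i • (z - p i) = 0) (x : E) :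
    ∑ i ∈ s, m i * ‖z - p i‖ ≤ ∑ i ∈ s, m i * ‖x - p i‖ := by
  have hterm : ∀ i ∈ s,
      inner ℝ (c i • (z - p i)) (x - z) + m i * ‖z - p i‖ ≤ m i * ‖x - p i‖ := by
    intro i hi
    calc inner ℝ (c i • (z - p i)) (x - z) + m i * ‖z - p i‖
        = c i * inner ℝ (z - p i) (x - p i) := by
          rw [← hm i hi, real_inner_smul_left, show x - p i = (x - z) + (z - p i) by abel,
            inner_add_right, real_inner_self_eq_norm_sq]
          ring
      _ ≤ c i * (‖z - p i‖ * ‖x - p i‖) :=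
          mul_le_mul_of_nonneg_left (real_inner_le_norm _ _) (hc i hi)
      _ = m i * ‖x - p i‖ := by rw [← hm i hi, mul_assoc]
  calc ∑ i ∈ s, m i * ‖z - p i‖
      = ∑ i ∈ s, (inner ℝ (c i • (z - p i)) (x - z) + m i * ‖z - p i‖) := by
        rw [sum_add_distrib, ← sum_inner, hz, inner_zero_left, zero_add]
    _ ≤ ∑ i ∈ s, m i * ‖x - p i‖ := sum_le_sum hterm

theorem EuclideanSpace.norm_sub_vec₂ (a b c d : ℝ) :
    ‖!₂[a, b] - !₂[c, d]‖ = √((a - c)^2 + (b - d)^2) := by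
  simp [EuclideanSpace.norm_eq, Fin.sum_univ_two]

theorem sum_mul_dist_le_of_balance {x1 y1 x2 y2 x3 y3 m1 m2 m3 c1 c2 c3 xs ys : ℝ}
    (hc1 : 0 ≤ c1) (hc2 : 0 ≤ c2) (hc3 : 0 ≤ c3)
    (hm1 : c1 * √((xs - x1)^2 + (ys - y1)^2) = m1)
    (hm2 : c2 * √((xs - x2)^2 + (ys - y2)^2) = m2)
    (hm3 : c3 * √((xs - x3)^2 + (ys - y3)^2) = m3)
    (hx : c1 * (xs - x1) + c2 * (xs - x2) + c3 * (xs - x3) = 0)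
    (hy : c1 * (ys - y1) + c2 * (ys - y2) + c3 * (ys - y3) = 0) (x y : ℝ) :
    m1 * √((xs - x1)^2 + (ys - y1)^2) + m2 * √((xs - x2)^2 + (ys - y2)^2)
        + m3 * √((xs - x3)^2 + (ys - y3)^2)
      ≤ m1 * √((x - x1)^2 + (y - y1)^2) + m2 * √((x - x2)^2 + (y - y2)^2)
        + m3 * √((x - x3)^2 + (y - y3)^2) := by
  have h := sum_mul_norm_sub_le_of_sum_smul_eq_zero univ ![!₂[x1, y1], !₂[x2, y2], !₂[x3, y3]]
    ![m1, m2, m3] ![c1, c2, c3] !₂[xs, ys] ?_ ?_ ?_ !₂[x, y]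
  · simpa [Fin.sum_univ_three, EuclideanSpace.norm_sub_vec₂, add_assoc] using h
  · simp [Fin.forall_fin_succ, hc1, hc2, hc3]
  · simp [Fin.forall_fin_succ, EuclideanSpace.norm_sub_vec₂, hm1, hm2, hm3]
  · ext i
    fin_cases i <;> simp [Fin.sum_univ_three] <;> linarith

/- With `(a, b) = R (cos α, sin α)` and `(c, s) = M (cos β, sin β)`, `α, β ∈ (0, π)`:
`cos α + cos β > 0` forces `α + β < π`, i.e. `sin (α + β) > 0`. -/
theorem mul_add_mul_pos_of_mul_add_mul_pos {a b c s R M : ℝ} (hb : 0 < b) (hs : 0 < s)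
    (hR : 0 ≤ R) (hM : 0 ≤ M) (hab : a^2 + b^2 = R^2) (hcs : c^2 + s^2 = M^2)
    (h : 0 < a * M + c * R) : 0 < a * s + b * c := by
  have haR : |a| < R := abs_lt_of_sq_lt_sq (by nlinarith) hR
  have hcM : |c| < M := abs_lt_of_sq_lt_sq (by nlinarith) hM
  have hac : a * c < R * M := by
    calc a * c ≤ |a| * |c| := by rw [← abs_mul]; exact le_abs_self _
      _ < R * M := mul_lt_mul'' haR hcM (abs_nonneg a) (abs_nonneg c)
  have key : (a * s + b * c) * (b * M + s * R) = (a * M + c * R) * (R * M - a * c + b * s) := by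
    linear_combination c * M * hab + a * R * hcs
  refine pos_of_mul_pos_left (key ▸ mul_pos h ?_) (by positivity)
  nlinarith [mul_pos hb hs]

theorem pos_of_sq_add_sq_eq {D S r : ℝ} (hS : S ≠ 0) (hr : 0 ≤ r) (h : D^2 + S^2 = r^2) :
    0 < r :=
  lt_of_le_of_ne hr (by rintro rfl; nlinarith [sq_pos_of_ne_zero hS])

theorem lt_add_of_weight_condition {D S r m1 m2 m3 : ℝ} (hS : S ≠ 0) (hm2 : 0 < m2)
    (hm3 : 0 < m3) (hr : 0 ≤ r) (hDS : D^2 + S^2 = r^2)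
    (hW : m1^2 < m2^2 + m3^2 + 2 * m2 * m3 * (D / r)) : m1 < m2 + m3 := by
  have hr' : 0 < r := pos_of_sq_add_sq_eq hS hr hDS
  have hcos : D / r ≤ 1 :=
    (div_le_one hr').mpr ((le_abs_self D).trans (abs_le_of_sq_le_sq (by nlinarith) hr))
  have : m1^2 < (m2 + m3)^2 := by nlinarith [mul_pos hm2 hm3]
  exact lt_of_abs_lt (abs_lt_of_sq_lt_sq this (by positivity))

theorem weight_pos_of_weight_condition {D S T r m1 m2 m3 : ℝ} (hS : 0 < S) (hT : 0 < T)
    (hm2 : 0 < m2) (hm3 : 0 < m3) (hr : 0 ≤ r) (hDS : D^2 + S^2 = r^2)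
    (hT2 : (m2^2 + m3^2 - m1^2)^2 + T^2 = (2 * m2 * m3)^2)
    (hW : m1^2 < m2^2 + m3^2 + 2 * m2 * m3 * (D / r)) :
    0 < T * D + (m2^2 + m3^2 - m1^2) * S := by
  have hr' : 0 < r := pos_of_sq_add_sq_eq hS.ne' hr hDS
  have h : 0 < D * (2 * m2 * m3) + (m2^2 + m3^2 - m1^2) * r := by
    have := mul_lt_mul_of_pos_right hW hr'
    rw [add_mul, mul_assoc _ (D / r), div_mul_cancel₀ D hr'.ne'] at this
    linarith
  have := mul_add_mul_pos_of_mul_add_mul_pos hS hT hr (by positivity) hDS hT2 h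
  linarith

theorem heron_pos_s9 {m1 m2 m3 : ℝ} (h1 : m1 < m2 + m3) (h2 : m2 < m1 + m3) (h3 : m3 < m1 + m2) :
    0 < -m1^4 - m2^4 - m3^4 + 2*m1^2*m2^2 + 2*m1^2*m3^2 + 2*m2^2*m3^2 := by
  have hpos : 0 < (m1 + m2 + m3) * (m2 + m3 - m1) * (m1 + m3 - m2) * (m1 + m2 - m3) := by
    have : 0 < m1 + m2 + m3 := by linarith
    have := sub_pos.mpr h1; have := sub_pos.mpr h2; have := sub_pos.mpr h3
    positivity
  linarith [show (m1 + m2 + m3) * (m2 + m3 - m1) * (m1 + m3 - m2) * (m1 + m2 - m3)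
    = -m1^4 - m2^4 - m3^4 + 2*m1^2*m2^2 + 2*m1^2*m3^2 + 2*m2^2*m3^2 by ring]

section WeightIdentities

variable {D1 D2 D3 S T m1 m2 m3 K1 K2 K3 : ℝ}

theorem sum_pair_mul_weights_eq (hS : S^2 = D1*D2 + D2*D3 + D3*D1)
    (hT : T^2 = -m1^4 - m2^4 - m3^4 + 2*m1^2*m2^2 + 2*m1^2*m3^2 + 2*m2^2*m3^2)
    (hK1 : K1 = T*D1 + (m2^2 + m3^2 - m1^2)*S) (hK2 : K2 = T*D2 + (m1^2 + m3^2 - m2^2)*S)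
    (hK3 : K3 = T*D3 + (m1^2 + m2^2 - m3^2)*S) :
    K1*K2 + K1*K3 + K2*K3 = 2*S*(m1^2*K1 + m2^2*K2 + m3^2*K3) := by
  subst hK1 hK2 hK3
  linear_combination (-T^2) * hS + S^2 * hT

theorem vertex_weight_identities (hS : S^2 = D1*D2 + D2*D3 + D3*D1)
    (hT : T^2 = -m1^4 - m2^4 - m3^4 + 2*m1^2*m2^2 + 2*m1^2*m3^2 + 2*m2^2*m3^2)
    (hK1 : K1 = T*D1 + (m2^2 + m3^2 - m1^2)*S) (hK2 : K2 = T*D2 + (m1^2 + m3^2 - m2^2)*S)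
    (hK3 : K3 = T*D3 + (m1^2 + m2^2 - m3^2)*S) :
    T*(D1*(K2+K3)^2 + D2*K3^2 + D3*K2^2) = 4*S^2*m1^2*(m1^2*K1 + m2^2*K2 + m3^2*K3) ∧
    T*(D2*(K1+K3)^2 + D1*K3^2 + D3*K1^2) = 4*S^2*m2^2*(m1^2*K1 + m2^2*K2 + m3^2*K3) ∧
    T*(D3*(K1+K2)^2 + D1*K2^2 + D2*K1^2) = 4*S^2*m3^2*(m1^2*K1 + m2^2*K2 + m3^2*K3) := by
  subst hK1 hK2 hK3
  refine ⟨?_, ?_, ?_⟩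
  · linear_combination (-T^2*(T*(D2+D3) + 4*m1^2*S)) * hS + S^2*(T*(D2+D3) + 4*m1^2*S) * hT
  · linear_combination (-T^2*(T*(D1+D3) + 4*m2^2*S)) * hS + S^2*(T*(D1+D3) + 4*m2^2*S) * hT
  · linear_combination (-T^2*(T*(D1+D2) + 4*m3^2*S)) * hS + S^2*(T*(D1+D2) + 4*m3^2*S) * hT

end WeightIdentities

theorem sqrt_sq_add_sq_eq_of_offset {u v P Q K m S T d : ℝ} (hS : S ≠ 0) (hT : 0 < T)
    (hd : 0 < d) (hK : 0 ≤ K) (hm : 0 ≤ m) (hu : 2*S*T*d*u = K*P) (hv : 2*S*T*d*v = K*Q)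
    (hE : T*(P^2 + Q^2) = 4*S^2*m^2*(T*d)) :
    √(u^2 + v^2) = m*K / (T*√d) := by
  have hsq : (T*√d)^2 * (u^2 + v^2) = (m*K)^2 := by
    rw [mul_pow, sq_sqrt hd.le]
    apply mul_left_cancel₀ (show 4*S^2*T*d ≠ 0 by positivity)
    linear_combination T*(2*S*T*d*u + K*P)*hu + T*(2*S*T*d*v + K*Q)*hv + K^2*hE
  have hTd : 0 < T*√d := by positivity
  rw [show u^2 + v^2 = (m*K / (T*√d))^2 by field_simp; linear_combination hsq,
    sqrt_sq (by positivity)]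

theorem fermatPoint_of_weights_pos {x1 y1 x2 y2 x3 y3 m1 m2 m3 D1 D2 D3 S σ K1 K2 K3 d xs ys : ℝ}
    {F : ℝ → ℝ → ℝ} (hm1 : 0 < m1) (hm2 : 0 < m2) (hm3 : 0 < m3) (hS : 0 < S) (hσ : 0 < σ)
    (hK1 : 0 < K1) (hK2 : 0 < K2) (hK3 : 0 < K3)
    (hD1 : D1 = (x2-x1)*(x3-x1) + (y2-y1)*(y3-y1))
    (hD2 : D2 = (x1-x2)*(x3-x2) + (y1-y2)*(y3-y2))
    (hD3 : D3 = (x1-x3)*(x2-x3) + (y1-y3)*(y2-y3))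
    (hS2 : S^2 = D1*D2 + D2*D3 + D3*D1)
    (hσ2 : (2*σ)^2 = -m1^4 - m2^4 - m3^4 + 2*m1^2*m2^2 + 2*m1^2*m3^2 + 2*m2^2*m3^2)
    (hK1e : K1 = 2*σ*D1 + (m2^2 + m3^2 - m1^2)*S) (hK2e : K2 = 2*σ*D2 + (m1^2 + m3^2 - m2^2)*S)
    (hK3e : K3 = 2*σ*D3 + (m1^2 + m2^2 - m3^2)*S)
    (hd : d = (m1^2*K1 + m2^2*K2 + m3^2*K3) / (2*σ))
    (hxs : xs = (K1*K2*K3/(4*S*σ*d)) * (x1/K1 + x2/K2 + x3/K3))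
    (hys : ys = (K1*K2*K3/(4*S*σ*d)) * (y1/K1 + y2/K2 + y3/K3))
    (hF : ∀ x y, F x y =
        m1 * √((x-x1)^2 + (y-y1)^2) + m2 * √((x-x2)^2 + (y-y2)^2)
      + m3 * √((x-x3)^2 + (y-y3)^2)) :
    F xs ys = √d ∧ ∀ x y : ℝ, √d ≤ F x y := by
  have hd0 : 0 < d := by rw [hd]; positivity
  have hσd : 2*σ*d = m1^2*K1 + m2^2*K2 + m3^2*K3 := by rw [hd]; field_simp
  have hN : 2*S*(2*σ)*d = K1*K2 + K1*K3 + K2*K3 := by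
    rw [sum_pair_mul_weights_eq hS2 hσ2 hK1e hK2e hK3e, ← hσd]; ring
  have hxN : 2*S*(2*σ)*d*xs = K2*K3*x1 + K1*K3*x2 + K1*K2*x3 := by
    rw [hxs]; field_simp; ring
  have hyN : 2*S*(2*σ)*d*ys = K2*K3*y1 + K1*K3*y2 + K1*K2*y3 := by
    rw [hys]; field_simp; ring
  obtain ⟨hE1, hE2, hE3⟩ := vertex_weight_identities hS2 hσ2 hK1e hK2e hK3e
  subst hD1 hD2 hD3
  have hT : 0 < 2*σ := by positivity
  have hdist1 : √((xs-x1)^2 + (ys-y1)^2) = m1*K1 / (2*σ*√d) :=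
    sqrt_sq_add_sq_eq_of_offset (P := K3*(x2-x1) + K2*(x3-x1)) (Q := K3*(y2-y1) + K2*(y3-y1))
      hS.ne' hT hd0 hK1.le hm1.le (by linear_combination hxN - x1*hN)
      (by linear_combination hyN - y1*hN) (by linear_combination hE1 - 4*S^2*m1^2*hσd)
  have hdist2 : √((xs-x2)^2 + (ys-y2)^2) = m2*K2 / (2*σ*√d) :=
    sqrt_sq_add_sq_eq_of_offset (P := K3*(x1-x2) + K1*(x3-x2)) (Q := K3*(y1-y2) + K1*(y3-y2))
      hS.ne' hT hd0 hK2.le hm2.le (by linear_combination hxN - x2*hN)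
      (by linear_combination hyN - y2*hN) (by linear_combination hE2 - 4*S^2*m2^2*hσd)
  have hdist3 : √((xs-x3)^2 + (ys-y3)^2) = m3*K3 / (2*σ*√d) :=
    sqrt_sq_add_sq_eq_of_offset (P := K2*(x1-x3) + K1*(x2-x3)) (Q := K2*(y1-y3) + K1*(y2-y3))
      hS.ne' hT hd0 hK3.le hm3.le (by linear_combination hxN - x3*hN)
      (by linear_combination hyN - y3*hN) (by linear_combination hE3 - 4*S^2*m3^2*hσd)
  have hsd : 0 < √d := sqrt_pos.mpr hd0
  have hbalance : ∀ a1 a2 a3 a : ℝ, 2*S*(2*σ)*d*a = K2*K3*a1 + K1*K3*a2 + K1*K2*a3 →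
      2*σ*√d/K1 * (a-a1) + 2*σ*√d/K2 * (a-a2) + 2*σ*√d/K3 * (a-a3) = 0 := by
    intro a1 a2 a3 a ha
    field_simp
    linear_combination 2*σ*√d*(ha - a*hN)
  have hvalue : F xs ys = √d := by
    rw [hF, hdist1, hdist2, hdist3]
    field_simp
    linear_combination -hσd - 2*σ*(mul_self_sqrt hd0.le)
  refine ⟨hvalue, fun x y => hvalue ▸ ?_⟩
  rw [hF, hF]
  refine sum_mul_dist_le_of_balance (c1 := 2*σ*√d/K1) (c2 := 2*σ*√d/K2) (c3 := 2*σ*√d/K3)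
    (by positivity) (by positivity) (by positivity) ?_ ?_ ?_
    (hbalance x1 x2 x3 xs hxN) (hbalance y1 y2 y3 ys hyN) x y
  all_goals first | rw [hdist1] | rw [hdist2] | rw [hdist3]
  all_goals field_simp

/-- The minimum value of `F` over `ℝ²` equals `√d`, attained at the explicit
point `P* = (x*, y*)`. -/
theorem min_value_sqrt_d
        (x1 y1 x2 y2 x3 y3 m1 m2 m3 : ℝ)
    (hm1 : 0 < m1) (hm2 : 0 < m2) (hm3 : 0 < m3)
    (hnd : x1*y2 + x2*y3 + x3*y1 - x1*y3 - x3*y2 - x2*y1 ≠ 0)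
    (r12 r13 r23 S σ K1 K2 K3 : ℝ)
    (hr12 : r12 = Real.sqrt ((x1-x2)^2 + (y1-y2)^2))
    (hr13 : r13 = Real.sqrt ((x1-x3)^2 + (y1-y3)^2))
    (hr23 : r23 = Real.sqrt ((x2-x3)^2 + (y2-y3)^2))
    (hS : S = |x1*y2 + x2*y3 + x3*y1 - x1*y3 - x3*y2 - x2*y1|)
    (hσ : σ = (1/2) * Real.sqrt
        (-m1^4 - m2^4 - m3^4 + 2*m1^2*m2^2 + 2*m1^2*m3^2 + 2*m2^2*m3^2))
    (hK1 : K1 = (r12^2 + r13^2 - r23^2)*σ + (m2^2 + m3^2 - m1^2)*S)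
    (hK2 : K2 = (r23^2 + r12^2 - r13^2)*σ + (m1^2 + m3^2 - m2^2)*S)
    (hK3 : K3 = (r13^2 + r23^2 - r12^2)*σ + (m1^2 + m2^2 - m3^2)*S)
    (cosα1 cosα2 cosα3 : ℝ)
    (hc1 : cosα1 = ((x2-x1)*(x3-x1) + (y2-y1)*(y3-y1)) / (r12 * r13))
    (hc2 : cosα2 = ((x1-x2)*(x3-x2) + (y1-y2)*(y3-y2)) / (r12 * r23))
    (hc3 : cosα3 = ((x1-x3)*(x2-x3) + (y1-y3)*(y2-y3)) / (r13 * r23))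
    (hW1 : m1^2 < m2^2 + m3^2 + 2*m2*m3*cosα1)
    (hW2 : m2^2 < m1^2 + m3^2 + 2*m1*m3*cosα2)
    (hW3 : m3^2 < m1^2 + m2^2 + 2*m1*m2*cosα3)
    (d : ℝ)
    (hd : d = (m1^2*K1 + m2^2*K2 + m3^2*K3) / (2*σ))
    (xs ys : ℝ)
    (hxs : xs = (K1*K2*K3/(4*S*σ*d)) * (x1/K1 + x2/K2 + x3/K3))
    (hys : ys = (K1*K2*K3/(4*S*σ*d)) * (y1/K1 + y2/K2 + y3/K3))
    (F : ℝ → ℝ → ℝ)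
    (hF : ∀ x y, F x y =
        m1 * Real.sqrt ((x-x1)^2 + (y-y1)^2)
      + m2 * Real.sqrt ((x-x2)^2 + (y-y2)^2)
      + m3 * Real.sqrt ((x-x3)^2 + (y-y3)^2)) :
    F xs ys = Real.sqrt d ∧ ∀ x y : ℝ, Real.sqrt d ≤ F x y := by
  set D1 := (x2-x1)*(x3-x1) + (y2-y1)*(y3-y1) with hD1
  set D2 := (x1-x2)*(x3-x2) + (y1-y2)*(y3-y2) with hD2
  set D3 := (x1-x3)*(x2-x3) + (y1-y3)*(y2-y3) with hD3
  subst hc1 hc2 hc3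
  have h12 : r12^2 = D1 + D2 := by rw [hr12, sq_sqrt (by positivity), hD1, hD2]; ring
  have h13 : r13^2 = D1 + D3 := by rw [hr13, sq_sqrt (by positivity), hD1, hD3]; ring
  have h23 : r23^2 = D2 + D3 := by rw [hr23, sq_sqrt (by positivity), hD2, hD3]; ring
  have hS2 : S^2 = D1*D2 + D2*D3 + D3*D1 := by rw [hS, sq_abs, hD1, hD2, hD3]; ring
  have hSpos : 0 < S := hS ▸ abs_pos.mpr hnd
  have hr1 : D1^2 + S^2 = (r12*r13)^2 := by rw [mul_pow, h12, h13, hS2]; ring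
  have hr2 : D2^2 + S^2 = (r12*r23)^2 := by rw [mul_pow, h12, h23, hS2]; ring
  have hr3 : D3^2 + S^2 = (r13*r23)^2 := by rw [mul_pow, h13, h23, hS2]; ring
  have hr12' : 0 ≤ r12 := hr12 ▸ sqrt_nonneg _
  have hr13' : 0 ≤ r13 := hr13 ▸ sqrt_nonneg _
  have hr23' : 0 ≤ r23 := hr23 ▸ sqrt_nonneg _
  have hQ := heron_pos_s9 (lt_add_of_weight_condition hSpos.ne' hm2 hm3 (by positivity) hr1 hW1)
    (lt_add_of_weight_condition hSpos.ne' hm1 hm3 (by positivity) hr2 hW2)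
    (lt_add_of_weight_condition hSpos.ne' hm1 hm2 (by positivity) hr3 hW3)
  have hσpos : 0 < σ := by rw [hσ]; positivity
  have hσ2 : (2*σ)^2 = -m1^4 - m2^4 - m3^4 + 2*m1^2*m2^2 + 2*m1^2*m3^2 + 2*m2^2*m3^2 := by
    rw [hσ, ← mul_assoc, mul_one_div_cancel two_ne_zero, one_mul, sq_sqrt hQ.le]
  have hK1e : K1 = 2*σ*D1 + (m2^2 + m3^2 - m1^2)*S := by rw [hK1, h12, h13, h23]; ring
  have hK2e : K2 = 2*σ*D2 + (m1^2 + m3^2 - m2^2)*S := by rw [hK2, h12, h13, h23]; ring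
  have hK3e : K3 = 2*σ*D3 + (m1^2 + m2^2 - m3^2)*S := by rw [hK3, h12, h13, h23]; ring
  have hT : 0 < 2*σ := by positivity
  refine fermatPoint_of_weights_pos hm1 hm2 hm3 hSpos hσpos ?_ ?_ ?_ hD1 hD2 hD3 hS2 hσ2
    hK1e hK2e hK3e hd hxs hys hF
  · exact hK1e ▸ weight_pos_of_weight_condition hSpos hT hm2 hm3 (by positivity) hr1
      (by linear_combination hσ2) hW1
  · exact hK2e ▸ weight_pos_of_weight_condition hSpos hT hm1 hm3 (by positivity) hr2
      (by linear_combination hσ2) hW2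
  · exact hK3e ▸ weight_pos_of_weight_condition hSpos hT hm1 hm2 (by positivity) hr3
      (by linear_combination hσ2) hW3
end

section
/- If all three angle conditions r12² + r13² + r12·r13 − r23² > 0, r23² + r12² + r12·r23 − r13² > 0, r13² + r23² + r13·r23 − r12² > 0 hold (equivalently, all angles of the nondegenerate triangle P1P2P3 are less than 2π/3), then the point P* = (x*, y*) with x* = (k1k2k3/(2√3 S d))·(x1/k1 + x2/k2 + x3/k3) and y* = (k1k2k3/(2√3 S d))·(y1/k1 + y2/k2 + y3/k3) minimizes G(x,y) = Σ_{j=1}^3 √((x−x_j)² + (y−y_j)²) over ℝ², with minimum value G(x*, y*) = √d, where d = (k1 + k2 + k3)/√3 = (r12² + r13² + r23²)/2 + √3·S. -/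
/-!
Under the angle conditions the weights `kⱼ` are positive, and `P*` is the barycentre of the
vertices with weights `1 / kⱼ`. The law of cosines and Heron's formula turn `|Pⱼ P*|²` into a
polynomial identity in the squared side lengths, giving `|Pⱼ P*| = kⱼ / √(3d)`. Hence the unit
vectors from `P*` towards the vertices are proportional to `(Pⱼ - P*) / kⱼ` and sum to zero.
Whenever unit vectors `uⱼ` from `q` towards `pⱼ` sum to zero, `q` minimises `∑ ‖pⱼ - x‖`:
`‖pⱼ - x‖ ≥ ⟪pⱼ - x, uⱼ⟫`, and the right-hand sides sum to `∑ ‖pⱼ - q‖` for every `x`.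
-/

open Finset RealInnerProductSpace

theorem heron_det (x₁ y₁ x₂ y₂ x₃ y₃ a b c : ℝ) (ha : a = (x₁ - x₂) ^ 2 + (y₁ - y₂) ^ 2)
    (hb : b = (x₁ - x₃) ^ 2 + (y₁ - y₃) ^ 2) (hc : c = (x₂ - x₃) ^ 2 + (y₂ - y₃) ^ 2) :
    4 * (x₁ * y₂ + x₂ * y₃ + x₃ * y₁ - x₁ * y₃ - x₃ * y₂ - x₂ * y₁) ^ 2
      = 2 * (a * b + a * c + b * c) - a ^ 2 - b ^ 2 - c ^ 2 := by
  subst ha hb hc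
  ring

theorem fermat_weight_pos {S r₁ r₂ r₃ : ℝ} (hS : 0 < S)
    (heron : 4 * S ^ 2 = 2 * (r₁ ^ 2 * r₂ ^ 2 + r₁ ^ 2 * r₃ ^ 2 + r₂ ^ 2 * r₃ ^ 2)
      - (r₁ ^ 2) ^ 2 - (r₂ ^ 2) ^ 2 - (r₃ ^ 2) ^ 2)
    (hangle : 0 < r₁ ^ 2 + r₂ ^ 2 + r₁ * r₂ - r₃ ^ 2) :
    0 < √3 / 2 * (r₁ ^ 2 + r₂ ^ 2 - r₃ ^ 2) + S := by
  set m := r₁ ^ 2 + r₂ ^ 2 - r₃ ^ 2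
  rcases le_or_gt 0 m with hm | hm
  · positivity
  have hsq : (√3 * m) ^ 2 < (2 * S) ^ 2 := by
    have hfactor : 4 * S ^ 2 - 3 * m ^ 2 = 4 * (r₁ * r₂ + m) * (r₁ * r₂ - m) := by
      linear_combination heron
    have : 0 < (r₁ * r₂ + m) * (r₁ * r₂ - m) := mul_pos (by linarith) (by linarith)
    rw [mul_pow, Real.sq_sqrt (by norm_num)]
    nlinarith
  linarith [(abs_lt_of_sq_lt_sq' hsq (by positivity)).1]

section WeightIdentities

variable {S a b c k₁ k₂ k₃ : ℝ}

theorem fermat_weights_mul_sum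
    (heron : 4 * S ^ 2 = 2 * (a * b + a * c + b * c) - a ^ 2 - b ^ 2 - c ^ 2)
    (hk₁ : k₁ = √3 / 2 * (a + b - c) + S) (hk₂ : k₂ = √3 / 2 * (c + a - b) + S)
    (hk₃ : k₃ = √3 / 2 * (b + c - a) + S) :
    k₁ * k₂ + k₁ * k₃ + k₂ * k₃ = 2 * S * (k₁ + k₂ + k₃) := by
  have hs : √3 ^ 2 = 3 := Real.sq_sqrt (by norm_num)
  subst hk₁ hk₂ hk₃
  linear_combination ((a + b - c) * (c + a - b) + (a + b - c) * (b + c - a)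
    + (c + a - b) * (b + c - a)) / 4 * hs - 3 / 4 * heron

theorem fermat_weights_vertex
    (heron : 4 * S ^ 2 = 2 * (a * b + a * c + b * c) - a ^ 2 - b ^ 2 - c ^ 2)
    (hk₁ : k₁ = √3 / 2 * (a + b - c) + S) (hk₂ : k₂ = √3 / 2 * (c + a - b) + S)
    (hk₃ : k₃ = √3 / 2 * (b + c - a) + S) :
    √3 * (k₂ ^ 2 * b + k₃ ^ 2 * a + k₂ * k₃ * (a + b - c)) = 4 * S ^ 2 * (k₁ + k₂ + k₃) := by
  have hs : √3 ^ 2 = 3 := Real.sq_sqrt (by norm_num)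
  subst hk₁ hk₂ hk₃
  linear_combination (√3 * ((c + a - b) ^ 2 * b + (b + c - a) ^ 2 * a
      + (a + b - c) * (c + a - b) * (b + c - a)) / 4
    + S * ((a + b - c) * c + (c + a - b) * b + (b + c - a) * a)) * hs
    - (3 * √3 * c + 12 * S) / 4 * heron

end WeightIdentities

theorem smul_sub_add_eq_zero_of_eq_inv_weighted_mean {V : Type*} [AddCommGroup V]
    [Module ℝ V] {k₁ k₂ k₃ m : ℝ} {v₁ v₂ v₃ v : V} (hm : k₁ * k₂ + k₁ * k₃ + k₂ * k₃ = m)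
    (hm₀ : m ≠ 0) (hk₁ : k₁ ≠ 0) (hk₂ : k₂ ≠ 0) (hk₃ : k₃ ≠ 0)
    (hv : v = (k₁ * k₂ * k₃ / m) • (k₁⁻¹ • v₁ + k₂⁻¹ • v₂ + k₃⁻¹ • v₃)) :
    (k₂ * k₃) • (v₁ - v) + (k₁ * k₃) • (v₂ - v) + (k₁ * k₂) • (v₃ - v) = 0 := by
  subst hv
  match_scalars <;> field_simp <;> rw [← hm] <;> ring

section

variable {ι E : Type*} [NormedAddCommGroup E] [InnerProductSpace ℝ E]

theorem sum_norm_sub_le_of_sum_smul_eq_zero (s : Finset ι) (p : ι → E) (q : E)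
    (h : ∑ i ∈ s, ‖p i - q‖⁻¹ • (p i - q) = 0) (x : E) :
    ∑ i ∈ s, ‖p i - q‖ ≤ ∑ i ∈ s, ‖p i - x‖ := by
  set u : ι → E := fun i ↦ ‖p i - q‖⁻¹ • (p i - q)
  have hu : ∀ i, ‖u i‖ ≤ 1 := fun i ↦ by
    simpa [u, norm_smul] using inv_mul_le_one_of_le₀ le_rfl (norm_nonneg (p i - q))
  have key : ∀ i, ‖p i - q‖ + ⟪q - x, u i⟫ ≤ ‖p i - x‖ := fun i ↦ by
    have hpq : ⟪p i - q, u i⟫ = ‖p i - q‖ := by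
      rw [inner_smul_right, real_inner_self_eq_norm_sq]
      rcases (norm_nonneg (p i - q)).eq_or_lt with h0 | h0
      · simp [← h0]
      · field_simp
    calc ‖p i - q‖ + ⟪q - x, u i⟫ = ⟪p i - x, u i⟫ := by
          rw [← hpq, ← inner_add_left, sub_add_sub_cancel]
      _ ≤ ‖p i - x‖ * ‖u i‖ := real_inner_le_norm _ _
      _ ≤ ‖p i - x‖ := mul_le_of_le_one_right (norm_nonneg _) (hu i)
  calc ∑ i ∈ s, ‖p i - q‖ = ∑ i ∈ s, (‖p i - q‖ + ⟪q - x, u i⟫) := by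
        rw [sum_add_distrib, ← inner_sum, h, inner_zero_right, add_zero]
    _ ≤ ∑ i ∈ s, ‖p i - x‖ := sum_le_sum fun i _ ↦ key i

theorem sum_norm_sub_le_of_norm_sub_eq_mul (s : Finset ι) (p : ι → E) (q : E) (w : ι → ℝ)
    (c : ℝ) (hdist : ∀ i ∈ s, ‖p i - q‖ = c * w i) (hbal : ∑ i ∈ s, (w i)⁻¹ • (p i - q) = 0)
    (x : E) : ∑ i ∈ s, ‖p i - q‖ ≤ ∑ i ∈ s, ‖p i - x‖ := by
  refine sum_norm_sub_le_of_sum_smul_eq_zero s p q ?_ x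
  rw [sum_congr rfl fun i hi ↦ by rw [hdist i hi, mul_inv, mul_smul], ← smul_sum, hbal,
    smul_zero]

theorem norm_smul_add_smul_sq (α β : ℝ) (u v : E) :
    ‖α • u + β • v‖ ^ 2 = α ^ 2 * ‖u‖ ^ 2 + β ^ 2 * ‖v‖ ^ 2
      + α * β * (‖u‖ ^ 2 + ‖v‖ ^ 2 - ‖u - v‖ ^ 2) := by
  rw [norm_add_sq_real, norm_sub_sq_real, norm_smul, norm_smul, inner_smul_left,
    inner_smul_right, Real.norm_eq_abs, Real.norm_eq_abs, mul_pow, mul_pow, sq_abs, sq_abs]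
  simp only [conj_trivial]
  ring

variable {p₁ p₂ p₃ q : E} {S a b c k₁ k₂ k₃ d : ℝ}

theorem fermat_norm_sub_eq (hS : S ≠ 0) (hd : 0 < d)
    (ha : ‖p₁ - p₂‖ ^ 2 = a) (hb : ‖p₁ - p₃‖ ^ 2 = b) (hc : ‖p₂ - p₃‖ ^ 2 = c)
    (heron : 4 * S ^ 2 = 2 * (a * b + a * c + b * c) - a ^ 2 - b ^ 2 - c ^ 2)
    (hk₁ : k₁ = √3 / 2 * (a + b - c) + S) (hk₂ : k₂ = √3 / 2 * (c + a - b) + S)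
    (hk₃ : k₃ = √3 / 2 * (b + c - a) + S) (hk₁₀ : 0 < k₁) (hK : k₁ + k₂ + k₃ = √3 * d)
    (hq : (k₂ * k₃) • (p₁ - q) + (k₁ * k₃) • (p₂ - q) + (k₁ * k₂) • (p₃ - q) = 0) :
    ‖p₁ - q‖ = (√(3 * d))⁻¹ * k₁ := by
  have hs : √3 ^ 2 = 3 := Real.sq_sqrt (by norm_num)
  have hσ := fermat_weights_mul_sum heron hk₁ hk₂ hk₃
  have hvertex := fermat_weights_vertex heron hk₁ hk₂ hk₃
  have hlin : (k₁ * k₂ + k₁ * k₃ + k₂ * k₃) • (p₁ - q)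
      = k₁ • (k₂ • (p₁ - p₃) + k₃ • (p₁ - p₂)) := by
    linear_combination (norm := module) hq
  have hnorm : (k₁ * k₂ + k₁ * k₃ + k₂ * k₃) ^ 2 * ‖p₁ - q‖ ^ 2
      = k₁ ^ 2 * (k₂ ^ 2 * b + k₃ ^ 2 * a + k₂ * k₃ * (a + b - c)) := by
    have := congrArg (‖·‖ ^ 2) hlin
    simp only [norm_smul, mul_pow, Real.norm_eq_abs, sq_abs] at this
    rw [this, norm_smul_add_smul_sq, sub_sub_sub_cancel_left, ha, hb, hc]
    ring
  -- `hσ` and `hK` make the left factor `2√3 S d`, and `hvertex` makes the bracket `4 S² d`.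
  have hsq : 3 * d * ‖p₁ - q‖ ^ 2 = k₁ ^ 2 := by
    refine mul_left_cancel₀ (by positivity : 4 * S ^ 2 * d ≠ 0) ?_
    linear_combination hnorm
      - ‖p₁ - q‖ ^ 2 * ((k₁ * k₂ + k₁ * k₃ + k₂ * k₃ + 2 * S * (k₁ + k₂ + k₃)) * hσ
        + 4 * S ^ 2 * (k₁ + k₂ + k₃ + √3 * d) * hK + 4 * S ^ 2 * d ^ 2 * hs)
      + k₁ ^ 2 / 3 * (√3 * hvertex + 4 * S ^ 2 * √3 * hK
        - (k₂ ^ 2 * b + k₃ ^ 2 * a + k₂ * k₃ * (a + b - c) - 4 * S ^ 2 * d) * hs)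
  rw [eq_inv_mul_iff_mul_eq₀ (by positivity), ← Real.sqrt_sq (norm_nonneg _),
    ← Real.sqrt_mul (by positivity), hsq, Real.sqrt_sq hk₁₀.le]

theorem fermat_point_minimizes (hS : S ≠ 0) (hd : 0 < d)
    (ha : ‖p₁ - p₂‖ ^ 2 = a) (hb : ‖p₁ - p₃‖ ^ 2 = b) (hc : ‖p₂ - p₃‖ ^ 2 = c)
    (heron : 4 * S ^ 2 = 2 * (a * b + a * c + b * c) - a ^ 2 - b ^ 2 - c ^ 2)
    (hk₁ : k₁ = √3 / 2 * (a + b - c) + S) (hk₂ : k₂ = √3 / 2 * (c + a - b) + S)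
    (hk₃ : k₃ = √3 / 2 * (b + c - a) + S) (hk₁₀ : 0 < k₁) (hk₂₀ : 0 < k₂) (hk₃₀ : 0 < k₃)
    (hK : k₁ + k₂ + k₃ = √3 * d)
    (hq : (k₂ * k₃) • (p₁ - q) + (k₁ * k₃) • (p₂ - q) + (k₁ * k₂) • (p₃ - q) = 0) :
    ‖p₁ - q‖ + ‖p₂ - q‖ + ‖p₃ - q‖ = √d ∧
      ∀ x, ‖p₁ - q‖ + ‖p₂ - q‖ + ‖p₃ - q‖ ≤ ‖p₁ - x‖ + ‖p₂ - x‖ + ‖p₃ - x‖ := by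
  have hd₁ := fermat_norm_sub_eq hS hd ha hb hc heron hk₁ hk₂ hk₃ hk₁₀ hK hq
  have hd₂ := fermat_norm_sub_eq (p₁ := p₂) (p₂ := p₃) (p₃ := p₁) (q := q) hS hd hc
    (by rw [norm_sub_rev, ha]) (by rw [norm_sub_rev, hb]) (by linear_combination heron)
    hk₂ hk₃ hk₁ hk₂₀ (by linarith)
    (by linear_combination (norm := module) hq)
  have hd₃ := fermat_norm_sub_eq (p₁ := p₃) (p₂ := p₁) (p₃ := p₂) (q := q) hS hd
    (by rw [norm_sub_rev, hb]) (by rw [norm_sub_rev, hc]) ha (by linear_combination heron)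
    hk₃ hk₁ hk₂ hk₃₀ (by linarith)
    (by linear_combination (norm := module) hq)
  refine ⟨?_, fun x ↦ ?_⟩
  · rw [hd₁, hd₂, hd₃, ← mul_add, ← mul_add, hK, Real.sqrt_mul (by norm_num)]
    nth_rw 2 [← Real.mul_self_sqrt hd.le]
    field_simp
  · have hbal : ∑ i, (![k₁, k₂, k₃] i)⁻¹ • (![p₁, p₂, p₃] i - q) = 0 := by
      calc _ = (k₁ * k₂ * k₃)⁻¹ • ((k₂ * k₃) • (p₁ - q) + (k₁ * k₃) • (p₂ - q)
            + (k₁ * k₂) • (p₃ - q)) := by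
            simp only [Fin.sum_univ_three, Matrix.cons_val_zero, Matrix.cons_val_one,
              Matrix.cons_val_two, Matrix.head_cons, Matrix.tail_cons]
            match_scalars <;> field_simp
        _ = 0 := by rw [hq, smul_zero]
    have := sum_norm_sub_le_of_norm_sub_eq_mul univ ![p₁, p₂, p₃] q ![k₁, k₂, k₃] _
      (fun i _ ↦ by fin_cases i; exacts [hd₁, hd₂, hd₃]) hbal x
    simpa [Fin.sum_univ_three] using this

end

/-- Classical Fermat–Torricelli problem: if all angles of the triangle are less
than `2π/3`, the explicit point `P* = (x*, y*)` minimizes the sum of distances,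
with minimum value `√d`. -/
theorem classical_fermat_torricelli
    (x1 y1 x2 y2 x3 y3 : ℝ)
    (hnd : x1*y2 + x2*y3 + x3*y1 - x1*y3 - x3*y2 - x2*y1 ≠ 0)
    (r12 r13 r23 S k1 k2 k3 d : ℝ)
    (hr12 : r12 = Real.sqrt ((x1-x2)^2 + (y1-y2)^2))
    (hr13 : r13 = Real.sqrt ((x1-x3)^2 + (y1-y3)^2))
    (hr23 : r23 = Real.sqrt ((x2-x3)^2 + (y2-y3)^2))
    (hS : S = |x1*y2 + x2*y3 + x3*y1 - x1*y3 - x3*y2 - x2*y1|)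
    (hk1 : k1 = (Real.sqrt 3/2)*(r12^2 + r13^2 - r23^2) + S)
    (hk2 : k2 = (Real.sqrt 3/2)*(r23^2 + r12^2 - r13^2) + S)
    (hk3 : k3 = (Real.sqrt 3/2)*(r13^2 + r23^2 - r12^2) + S)
    (hd : d = (k1 + k2 + k3) / Real.sqrt 3)
    (hang1 : 0 < r12^2 + r13^2 + r12*r13 - r23^2)
    (hang2 : 0 < r23^2 + r12^2 + r12*r23 - r13^2)
    (hang3 : 0 < r13^2 + r23^2 + r13*r23 - r12^2)
    (G : ℝ → ℝ → ℝ)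
    (hG : ∀ x y, G x y =
        Real.sqrt ((x-x1)^2 + (y-y1)^2)
      + Real.sqrt ((x-x2)^2 + (y-y2)^2)
      + Real.sqrt ((x-x3)^2 + (y-y3)^2))
    (xs ys : ℝ)
    (hxs : xs = (k1*k2*k3/(2*Real.sqrt 3*S*d)) * (x1/k1 + x2/k2 + x3/k3))
    (hys : ys = (k1*k2*k3/(2*Real.sqrt 3*S*d)) * (y1/k1 + y2/k2 + y3/k3)) :
    d = (r12^2 + r13^2 + r23^2)/2 + Real.sqrt 3 * S ∧
    G xs ys = Real.sqrt d ∧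
    ∀ x y : ℝ, G xs ys ≤ G x y := by
  have hs : √3 ^ 2 = 3 := Real.sq_sqrt (by norm_num)
  have hS₀ : 0 < S := hS ▸ abs_pos.2 hnd
  have ha : r12 ^ 2 = (x1 - x2) ^ 2 + (y1 - y2) ^ 2 := hr12 ▸ Real.sq_sqrt (by positivity)
  have hb : r13 ^ 2 = (x1 - x3) ^ 2 + (y1 - y3) ^ 2 := hr13 ▸ Real.sq_sqrt (by positivity)
  have hc : r23 ^ 2 = (x2 - x3) ^ 2 + (y2 - y3) ^ 2 := hr23 ▸ Real.sq_sqrt (by positivity)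
  have heron : 4 * S ^ 2 = 2 * (r12 ^ 2 * r13 ^ 2 + r12 ^ 2 * r23 ^ 2 + r13 ^ 2 * r23 ^ 2)
      - (r12 ^ 2) ^ 2 - (r13 ^ 2) ^ 2 - (r23 ^ 2) ^ 2 := by
    rw [hS, sq_abs]; exact heron_det _ _ _ _ _ _ _ _ _ ha hb hc
  have hk1₀ : 0 < k1 := hk1 ▸ fermat_weight_pos hS₀ heron hang1
  have hk2₀ : 0 < k2 := hk2 ▸ fermat_weight_pos hS₀ (by linear_combination heron) (by linarith)
  have hk3₀ : 0 < k3 := hk3 ▸ fermat_weight_pos hS₀ (by linear_combination heron) hang3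
  have hK : k1 + k2 + k3 = √3 * d := by rw [hd]; field_simp
  have hd₀ : 0 < d := by nlinarith [Real.sqrt_nonneg 3]
  refine ⟨by linear_combination -(√3 / 3) * (hK - hk1 - hk2 - hk3)
    + ((r12 ^ 2 + r13 ^ 2 + r23 ^ 2) / 6 - d / 3) * hs, ?_⟩
  have hside : ∀ u v w z : ℝ, ‖(⟨u, v⟩ - ⟨w, z⟩ : ℂ)‖ = √((u - w) ^ 2 + (v - z) ^ 2) :=
    fun u v w z ↦ by rw [← dist_eq_norm, Complex.dist_mk]
  have hq := smul_sub_add_eq_zero_of_eq_inv_weighted_mean (v₁ := (⟨x1, y1⟩ : ℂ))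
    (v₂ := ⟨x2, y2⟩) (v₃ := ⟨x3, y3⟩) (v := ⟨xs, ys⟩) (m := 2 * √3 * S * d)
    (by rw [fermat_weights_mul_sum heron hk1 hk2 hk3, hK]; ring) (by positivity)
    hk1₀.ne' hk2₀.ne' hk3₀.ne'
    (by apply Complex.ext <;> simp only [Complex.add_re, Complex.add_im, Complex.smul_re,
      Complex.smul_im, smul_eq_mul] <;> [rw [hxs]; rw [hys]] <;> ring)
  obtain ⟨hval, hmin⟩ := fermat_point_minimizes hS₀.ne' hd₀ (by rw [hside, ← hr12])
    (by rw [hside, ← hr13]) (by rw [hside, ← hr23]) heron hk1 hk2 hk3 hk1₀ hk2₀ hk3₀ hK hq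
  have hG' : ∀ x y, G x y = ‖(⟨x1, y1⟩ - ⟨x, y⟩ : ℂ)‖ + ‖(⟨x2, y2⟩ - ⟨x, y⟩ : ℂ)‖
      + ‖(⟨x3, y3⟩ - ⟨x, y⟩ : ℂ)‖ := by
    intro x y
    simp only [hG, ← dist_eq_norm', Complex.dist_mk]
  simp only [hG']
  exact ⟨hval, fun x y ↦ hmin _⟩
end

section
/- Let the vertices of the nondegenerate triangle P1P2P3 be counted counterclockwise and let P* = (x*, y*) be a point distinct from each vertex. Then with the weights m1* = |P*P1|·det[[1,1,1],[x*,x2,x3],[y*,y2,y3]], m2* = |P*P2|·det[[1,1,1],[x1,x*,x3],[y1,y*,y3]], m3* = |P*P3|·det[[1,1,1],[x1,x2,x*],[y1,y2,y*]], the function F(x,y) = Σ_{j=1}^3 m_j* √((x−x_j)² + (y−y_j)²) has a stationary point at P*, i.e. Σ_{j=1}^3 m_j* (x* − x_j)/√((x*−x_j)²+(y*−y_j)²) = 0 and Σ_{j=1}^3 m_j* (y* − y_j)/√((x*−x_j)²+(y*−y_j)²) = 0. -/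
/-!
The determinants `D₁, D₂, D₃` in the weights are Cramer's numerators for the system
`λ₁ + λ₂ + λ₃ = 1`, `λ₁ P₁ + λ₂ P₂ + λ₃ P₃ = P*`, so `∑ Dⱼ (P* - Pⱼ) = 0`. The factor
`|P*Pⱼ|` in `mⱼ*` cancels against the denominator of the `j`-th unit vector, leaving exactly
this sum; where `|P*Pⱼ| = 0` the term is `0 / 0 = 0 = Dⱼ (P* - Pⱼ)` anyway.
-/

open Matrix

theorem Matrix.sum_cramer_mul_sub_eq_zero {n R : Type*} [Fintype n] [DecidableEq n]
    [CommRing R]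
    (A : Matrix n n R) (b : n → R) (i₀ : n) (hA : ∀ j, A i₀ j = 1) (hb : b i₀ = 1) (i : n) :
    ∑ j, A.cramer b j * (b i - A i j) = 0 := by
  have hrow := congrFun (A.mulVec_cramer b) i
  have hsum := congrFun (A.mulVec_cramer b) i₀
  simp only [mulVec, dotProduct, hA, one_mul, Pi.smul_apply, hb, smul_eq_mul, mul_one] at hrow hsum
  calc ∑ j, A.cramer b j * (b i - A i j)
      = (∑ j, A.cramer b j) * b i - ∑ j, A i j * A.cramer b j := by
        simp only [mul_sub, Finset.sum_sub_distrib, Finset.sum_mul, mul_comm (A i _)]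
    _ = 0 := by rw [hsum, hrow, sub_self]

theorem cramer_triangle_vertices (x1 y1 x2 y2 x3 y3 xs ys : ℝ) :
    cramer !![(1:ℝ), 1, 1; x1, x2, x3; y1, y2, y3] ![1, xs, ys] =
      ![det !![(1:ℝ), 1, 1; xs, x2, x3; ys, y2, y3],
        det !![(1:ℝ), 1, 1; x1, xs, x3; y1, ys, y3],
        det !![(1:ℝ), 1, 1; x1, x2, xs; y1, y2, ys]] := by
  ext j
  fin_cases j <;> simp only [cramer_apply] <;> congr 1 <;>
    ext i k <;> fin_cases i <;> fin_cases k <;> rfl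

theorem sum_cramer_triangle_mul_sub_eq_zero (x1 y1 x2 y2 x3 y3 xs ys : ℝ) :
    det !![(1:ℝ), 1, 1; xs, x2, x3; ys, y2, y3] * (xs - x1)
        + det !![(1:ℝ), 1, 1; x1, xs, x3; y1, ys, y3] * (xs - x2)
        + det !![(1:ℝ), 1, 1; x1, x2, xs; y1, y2, ys] * (xs - x3) = 0 ∧
      det !![(1:ℝ), 1, 1; xs, x2, x3; ys, y2, y3] * (ys - y1)
        + det !![(1:ℝ), 1, 1; x1, xs, x3; y1, ys, y3] * (ys - y2)
        + det !![(1:ℝ), 1, 1; x1, x2, xs; y1, y2, ys] * (ys - y3) = 0 := by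
  have h := sum_cramer_mul_sub_eq_zero !![(1:ℝ), 1, 1; x1, x2, x3; y1, y2, y3] ![1, xs, ys] 0
    (fun j => by fin_cases j <;> rfl) rfl
  rw [cramer_triangle_vertices] at h
  exact ⟨by simpa [Fin.sum_univ_three] using h 1, by simpa [Fin.sum_univ_three] using h 2⟩

theorem sqrt_sq_add_sq_mul_mul_div (u v c : ℝ) :
    √(u ^ 2 + v ^ 2) * c * u / √(u ^ 2 + v ^ 2) = c * u ∧
      √(u ^ 2 + v ^ 2) * c * v / √(u ^ 2 + v ^ 2) = c * v := by
  rcases eq_or_ne (√(u ^ 2 + v ^ 2)) 0 with h | h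
  · rw [Real.sqrt_eq_zero (by positivity)] at h
    obtain ⟨hu, hv⟩ := (add_eq_zero_iff_of_nonneg (sq_nonneg u) (sq_nonneg v)).1 h
    simp [pow_eq_zero_iff two_ne_zero |>.1 hu, pow_eq_zero_iff two_ne_zero |>.1 hv]
  · constructor <;> field_simp

theorem inverse_problem_stationary_general
    (x1 y1 x2 y2 x3 y3 xs ys : ℝ)
    (m1 m2 m3 : ℝ)
    (hm1 : m1 = Real.sqrt ((xs-x1)^2 + (ys-y1)^2)
        * Matrix.det !![(1:ℝ), 1, 1; xs, x2, x3; ys, y2, y3])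
    (hm2 : m2 = Real.sqrt ((xs-x2)^2 + (ys-y2)^2)
        * Matrix.det !![(1:ℝ), 1, 1; x1, xs, x3; y1, ys, y3])
    (hm3 : m3 = Real.sqrt ((xs-x3)^2 + (ys-y3)^2)
        * Matrix.det !![(1:ℝ), 1, 1; x1, x2, xs; y1, y2, ys]) :
    (m1*(xs-x1)/Real.sqrt ((xs-x1)^2 + (ys-y1)^2)
      + m2*(xs-x2)/Real.sqrt ((xs-x2)^2 + (ys-y2)^2)
      + m3*(xs-x3)/Real.sqrt ((xs-x3)^2 + (ys-y3)^2) = 0) ∧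
    (m1*(ys-y1)/Real.sqrt ((xs-x1)^2 + (ys-y1)^2)
      + m2*(ys-y2)/Real.sqrt ((xs-x2)^2 + (ys-y2)^2)
      + m3*(ys-y3)/Real.sqrt ((xs-x3)^2 + (ys-y3)^2) = 0) := by
  subst hm1 hm2 hm3
  simp only [sqrt_sq_add_sq_mul_mul_div]
  exact sum_cramer_triangle_mul_sub_eq_zero x1 y1 x2 y2 x3 y3 xs ys

/-- Inverse Fermat–Torricelli problem: with the weights
`m_j* = |P*P_j| · (signed doubled area)`, the function `F` has a stationary
point at `P*`. -/
theorem inverse_problem_stationary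
    (x1 y1 x2 y2 x3 y3 xs ys : ℝ)
    (hccw : 0 < Matrix.det !![(1:ℝ), 1, 1; x1, x2, x3; y1, y2, y3])
    (hne1 : (xs, ys) ≠ (x1, y1))
    (hne2 : (xs, ys) ≠ (x2, y2))
    (hne3 : (xs, ys) ≠ (x3, y3))
    (m1 m2 m3 : ℝ)
    (hm1 : m1 = Real.sqrt ((xs-x1)^2 + (ys-y1)^2)
        * Matrix.det !![(1:ℝ), 1, 1; xs, x2, x3; ys, y2, y3])
    (hm2 : m2 = Real.sqrt ((xs-x2)^2 + (ys-y2)^2)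
        * Matrix.det !![(1:ℝ), 1, 1; x1, xs, x3; y1, ys, y3])
    (hm3 : m3 = Real.sqrt ((xs-x3)^2 + (ys-y3)^2)
        * Matrix.det !![(1:ℝ), 1, 1; x1, x2, xs; y1, y2, ys]) :
    (m1*(xs-x1)/Real.sqrt ((xs-x1)^2 + (ys-y1)^2)
      + m2*(xs-x2)/Real.sqrt ((xs-x2)^2 + (ys-y2)^2)
      + m3*(xs-x3)/Real.sqrt ((xs-x3)^2 + (ys-y3)^2) = 0) ∧
    (m1*(ys-y1)/Real.sqrt ((xs-x1)^2 + (ys-y1)^2)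
      + m2*(ys-y2)/Real.sqrt ((xs-x2)^2 + (ys-y2)^2)
      + m3*(ys-y3)/Real.sqrt ((xs-x3)^2 + (ys-y3)^2) = 0) :=
  inverse_problem_stationary_general x1 y1 x2 y2 x3 y3 xs ys m1 m2 m3 hm1 hm2 hm3
end

section
/- Let the vertices of the nondegenerate triangle P1P2P3 be counted counterclockwise and let P* = (x*, y*) lie strictly inside the triangle P1P2P3. Then the weights m1* = |P*P1|·det[[1,1,1],[x*,x2,x3],[y*,y2,y3]], m2* = |P*P2|·det[[1,1,1],[x1,x*,x3],[y1,y*,y3]], m3* = |P*P3|·det[[1,1,1],[x1,x2,x*],[y1,y2,y*]] are all positive, and the function F(x,y) = Σ_{j=1}^3 m_j* √((x−x_j)² + (y−y_j)²) attains its global minimum at P*, with minimum value F(x*, y*) = det[[1,1,1,1],[x*,x1,x2,x3],[y*,y1,y2,y3],[x*²+y*², x1²+y1², x2²+y2², x3²+y3²]]. -/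
/-!
Write `D` for the orientation determinant of `P1P2P3` and `l_j` for the barycentric coordinates
of `P*`. By Cramer's rule the three sub-determinants are `c_j = l_j D > 0`, so
`F(q) = ∑ c_j |P*P_j| |qP_j|`. By Cauchy–Schwarz `|P*P_j| |qP_j| ≥ ⟪P* - P_j, q - P_j⟫`, and
since `∑ c_j (P* - P_j) = D (P* - ∑ l_j P_j) = 0`, summing gives `F(q) ≥ ∑ c_j |P*P_j|² = F(P*)`.
Expanding the 4×4 determinant identifies this value.
-/

theorem sum_dist_mul_dist_le_of_sum_smul_sub_eq_zero {E ι : Type*} [NormedAddCommGroup E]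
    [InnerProductSpace ℝ E] (s : Finset ι) {c : ι → ℝ} {a : ι → E} {p : E}
    (hc : ∀ i ∈ s, 0 ≤ c i) (hp : ∑ i ∈ s, c i • (p - a i) = 0) (q : E) :
    ∑ i ∈ s, dist p (a i) * c i * dist p (a i)
      ≤ ∑ i ∈ s, dist p (a i) * c i * dist q (a i) := by
  have key : ∀ i ∈ s, c i * inner ℝ (p - a i) (q - p) + dist p (a i) * c i * dist p (a i)
      ≤ dist p (a i) * c i * dist q (a i) := by
    intro i hi
    calc c i * inner ℝ (p - a i) (q - p) + dist p (a i) * c i * dist p (a i)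
        = c i * inner ℝ (p - a i) ((q - p) + (p - a i)) := by
          rw [inner_add_right, real_inner_self_eq_norm_mul_norm, ← dist_eq_norm]; ring
      _ ≤ c i * (dist p (a i) * dist q (a i)) := by
          rw [sub_add_sub_cancel, dist_eq_norm, dist_eq_norm]
          exact mul_le_mul_of_nonneg_left (real_inner_le_norm _ _) (hc i hi)
      _ = dist p (a i) * c i * dist q (a i) := by ring
  have hzero : ∑ i ∈ s, c i * inner ℝ (p - a i) (q - p) = 0 := by
    simp_rw [← real_inner_smul_left, ← sum_inner, hp, inner_zero_left]
  calc _ = ∑ i ∈ s, (c i * inner ℝ (p - a i) (q - p)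
          + dist p (a i) * c i * dist p (a i)) := by
        rw [Finset.sum_add_distrib, hzero, zero_add]
    _ ≤ _ := Finset.sum_le_sum key

theorem dist_eq_sqrt (x y a b : ℝ) :
    dist !₂[x, y] !₂[a, b] = √((x - a) ^ 2 + (y - b) ^ 2) := by
  simp [EuclideanSpace.dist_eq, Fin.sum_univ_two, Real.dist_eq, sq_abs]

theorem mul_self_dist_eq (x y a b : ℝ) :
    dist !₂[x, y] !₂[a, b] * dist !₂[x, y] !₂[a, b] = (x - a) ^ 2 + (y - b) ^ 2 := by
  rw [dist_eq_sqrt, Real.mul_self_sqrt (by positivity)]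

theorem ne_of_det_three_ne_zero {a b c a' b' c' : ℝ}
    (h : Matrix.det !![(1:ℝ), 1, 1; a, b, c; a', b', c'] ≠ 0) :
    !₂[a, a'] ≠ !₂[b, b'] ∧ !₂[b, b'] ≠ !₂[c, c'] := by
  constructor <;> intro he <;> obtain ⟨rfl, rfl⟩ : _ ∧ _ := by simpa using he
  all_goals simp [Matrix.det_fin_three] at h

/-- Cramer's rule for the barycentric coordinates `(l1, l2, l3)` of `(xs, ys)`. -/
theorem det_eq_mul_det_of_barycentric {x1 y1 x2 y2 x3 y3 xs ys l1 l2 l3 : ℝ}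
    (hsum : l1 + l2 + l3 = 1) (hx : xs = l1*x1 + l2*x2 + l3*x3)
    (hy : ys = l1*y1 + l2*y2 + l3*y3) :
    Matrix.det !![(1:ℝ), 1, 1; xs, x2, x3; ys, y2, y3]
        = l1 * Matrix.det !![(1:ℝ), 1, 1; x1, x2, x3; y1, y2, y3] ∧
      Matrix.det !![(1:ℝ), 1, 1; x1, xs, x3; y1, ys, y3]
        = l2 * Matrix.det !![(1:ℝ), 1, 1; x1, x2, x3; y1, y2, y3] ∧
      Matrix.det !![(1:ℝ), 1, 1; x1, x2, xs; y1, y2, ys]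
        = l3 * Matrix.det !![(1:ℝ), 1, 1; x1, x2, x3; y1, y2, y3] := by
  subst hx hy
  simp only [Matrix.det_fin_three, Matrix.of_apply, Matrix.cons_val_zero, Matrix.cons_val_one,
    Matrix.cons_val_two, Matrix.head_cons, Matrix.tail_cons]
  refine ⟨?_, ?_, ?_⟩
  · linear_combination (x3*y2 - x2*y3) * hsum
  · linear_combination (x1*y3 - x3*y1) * hsum
  · linear_combination (x2*y1 - x1*y2) * hsum

theorem det_lift_eq_sum_det_mul_dist_sq (x1 y1 x2 y2 x3 y3 xs ys : ℝ) :
    Matrix.det !![(1:ℝ), 1, 1, 1; xs, x1, x2, x3; ys, y1, y2, y3;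
        xs^2 + ys^2, x1^2 + y1^2, x2^2 + y2^2, x3^2 + y3^2]
    = Matrix.det !![(1:ℝ), 1, 1; xs, x2, x3; ys, y2, y3] * ((xs-x1)^2 + (ys-y1)^2)
    + Matrix.det !![(1:ℝ), 1, 1; x1, xs, x3; y1, ys, y3] * ((xs-x2)^2 + (ys-y2)^2)
    + Matrix.det !![(1:ℝ), 1, 1; x1, x2, xs; y1, y2, ys] * ((xs-x3)^2 + (ys-y3)^2) := by
  simp [Matrix.det_succ_row_zero, Fin.sum_univ_succ, Fin.succAbove]
  ring

/-- Inverse Fermat–Torricelli problem: if `P*` lies strictly inside the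
counterclockwise triangle `P1P2P3`, then the weights `m_j*` are all positive
and `F` attains its global minimum at `P*`, with minimum value given by the
4×4 determinant. -/
theorem inverse_problem_minimum
    (x1 y1 x2 y2 x3 y3 xs ys : ℝ)
    (hccw : 0 < Matrix.det !![(1:ℝ), 1, 1; x1, x2, x3; y1, y2, y3])
    (hint : ∃ l1 l2 l3 : ℝ, 0 < l1 ∧ 0 < l2 ∧ 0 < l3 ∧ l1 + l2 + l3 = 1 ∧
        xs = l1*x1 + l2*x2 + l3*x3 ∧ ys = l1*y1 + l2*y2 + l3*y3)
    (m1 m2 m3 : ℝ)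
    (hm1 : m1 = Real.sqrt ((xs-x1)^2 + (ys-y1)^2)
        * Matrix.det !![(1:ℝ), 1, 1; xs, x2, x3; ys, y2, y3])
    (hm2 : m2 = Real.sqrt ((xs-x2)^2 + (ys-y2)^2)
        * Matrix.det !![(1:ℝ), 1, 1; x1, xs, x3; y1, ys, y3])
    (hm3 : m3 = Real.sqrt ((xs-x3)^2 + (ys-y3)^2)
        * Matrix.det !![(1:ℝ), 1, 1; x1, x2, xs; y1, y2, ys])
    (F : ℝ → ℝ → ℝ)
    (hF : ∀ x y, F x y =
        m1 * Real.sqrt ((x-x1)^2 + (y-y1)^2)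
      + m2 * Real.sqrt ((x-x2)^2 + (y-y2)^2)
      + m3 * Real.sqrt ((x-x3)^2 + (y-y3)^2)) :
    0 < m1 ∧ 0 < m2 ∧ 0 < m3 ∧
    (∀ x y : ℝ, F xs ys ≤ F x y) ∧
    F xs ys = Matrix.det !![(1:ℝ), 1, 1, 1; xs, x1, x2, x3; ys, y1, y2, y3;
        xs^2 + ys^2, x1^2 + y1^2, x2^2 + y2^2, x3^2 + y3^2] := by
  obtain ⟨l1, l2, l3, hl1, hl2, hl3, hsum, hx, hy⟩ := hint
  obtain ⟨hM1, hM2, hM3⟩ := det_eq_mul_det_of_barycentric hsum hx hy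
  obtain ⟨hne1, hne3⟩ := ne_of_det_three_ne_zero (hM2.trans_ne (mul_pos hl2 hccw).ne')
  have hne2 := (ne_of_det_three_ne_zero (hM1.trans_ne (mul_pos hl1 hccw).ne')).1
  rw [det_lift_eq_sum_det_mul_dist_sq, hM1, hM2, hM3]
  rw [hM1] at hm1; rw [hM2] at hm2; rw [hM3] at hm3
  set D := Matrix.det !![(1:ℝ), 1, 1; x1, x2, x3; y1, y2, y3]
  simp only [← dist_eq_sqrt] at hm1 hm2 hm3 hF
  set a : Fin 3 → EuclideanSpace ℝ (Fin 2) := ![!₂[x1, y1], !₂[x2, y2], !₂[x3, y3]]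
  set c : Fin 3 → ℝ := ![l1 * D, l2 * D, l3 * D]
  have hFsum : ∀ x y, F x y = ∑ i, dist !₂[xs, ys] (a i) * c i * dist !₂[x, y] (a i) := by
    simp [hF, hm1, hm2, hm3, Fin.sum_univ_three, a, c]
  refine ⟨hm1 ▸ mul_pos (dist_pos.2 hne1.symm) (mul_pos hl1 hccw),
    hm2 ▸ mul_pos (dist_pos.2 hne2) (mul_pos hl2 hccw),
    hm3 ▸ mul_pos (dist_pos.2 hne3) (mul_pos hl3 hccw), fun x y => ?_, ?_⟩
  · have hbal : ∑ i, c i • (!₂[xs, ys] - a i) = 0 := by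
      ext k; fin_cases k <;> simp [Fin.sum_univ_three, a, c]
      · linear_combination D * (xs * hsum + hx)
      · linear_combination D * (ys * hsum + hy)
    rw [hFsum, hFsum]
    have hc : ∀ i ∈ Finset.univ, 0 ≤ c i := fun i _ => by
      fin_cases i <;> simp [c] <;> positivity
    exact sum_dist_mul_dist_le_of_sum_smul_sub_eq_zero _ hc hbal _
  · rw [hF, hm1, hm2, hm3]
    simp only [mul_right_comm (dist _ _), mul_self_dist_eq]
    ring
end

section
/- Uniqueness of the inverse problem up to a positive multiplier: let P* lie strictly inside the nondegenerate triangle P1P2P3 (vertices counted counterclockwise). If positive weights m1, m2, m3 are such that P* is a stationary point of F(x,y) = Σ_{j=1}^3 m_j √((x−x_j)² + (y−y_j)²) (i.e. both gradient equations Σ_{j=1}^3 m_j (x* − x_j)/|P*P_j| = 0 and Σ_{j=1}^3 m_j (y* − y_j)/|P*P_j| = 0 hold), then there exists t > 0 such that m_j = t·m_j* for j = 1, 2, 3, where m1* = |P*P1|·det[[1,1,1],[x*,x2,x3],[y*,y2,y3]], m2* = |P*P2|·det[[1,1,1],[x1,x*,x3],[y1,y*,y3]], m3* = |P*P3|·det[[1,1,1],[x1,x2,x*],[y1,y2,y*]].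 -/
/-!
With `d_j = |P*P_j|`, stationarity says that `(m_j / d_j)_j` are the coefficients of a vanishing
combination of the three vectors `P* - P_j`, and so are the barycentric coordinates `(l_j)_j` of
`P*`. Any two of these vectors are linearly independent (their cross products are the subtriangle
areas `l_k · det`, which are positive), so such coefficient vectors form a line and
`m_j / d_j = t · l_j`. Since `m_j* = d_j · l_j · det`, this gives `m_j = (t / det) · m_j*`.
-/

lemma exists_proportional_of_cross_ne_zero {u₁ u₂ v₁ v₂ w₁ w₂ a b c a' b' c' : ℝ}
    (huv : u₁ * v₂ - u₂ * v₁ ≠ 0) (hc' : c' ≠ 0)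
    (h₁ : a * u₁ + b * v₁ + c * w₁ = 0) (h₂ : a * u₂ + b * v₂ + c * w₂ = 0)
    (h₁' : a' * u₁ + b' * v₁ + c' * w₁ = 0) (h₂' : a' * u₂ + b' * v₂ + c' * w₂ = 0) :
    ∃ t, a = t * a' ∧ b = t * b' ∧ c = t * c' := by
  have ha : (a * c' - a' * c) * (u₁ * v₂ - u₂ * v₁) = 0 := by
    linear_combination v₂ * c' * h₁ - v₂ * c * h₁' - v₁ * c' * h₂ + v₁ * c * h₂'
  have hb : (b * c' - b' * c) * (u₁ * v₂ - u₂ * v₁) = 0 := by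
    linear_combination u₁ * c' * h₂ - u₁ * c * h₂' - u₂ * c' * h₁ + u₂ * c * h₁'
  have ha' := (mul_eq_zero.mp ha).resolve_right huv
  have hb' := (mul_eq_zero.mp hb).resolve_right huv
  refine ⟨c / c', ?_, ?_, ?_⟩ <;> field_simp
  · linear_combination ha'
  · linear_combination hb'

lemma det_ones_eq_cross (a₁ a₂ a₃ b₁ b₂ b₃ : ℝ) :
    !![(1 : ℝ), 1, 1; a₁, a₂, a₃; b₁, b₂, b₃].det
      = (a₂ - a₁) * (b₃ - b₁) - (a₃ - a₁) * (b₂ - b₁) := by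
  simp [Matrix.det_fin_three]
  ring

lemma det_subtriangle_eq_mul_det {x₁ y₁ x₂ y₂ x₃ y₃ l₁ l₂ l₃ x y : ℝ}
    (hl : l₁ + l₂ + l₃ = 1) (hx : x = l₁ * x₁ + l₂ * x₂ + l₃ * x₃)
    (hy : y = l₁ * y₁ + l₂ * y₂ + l₃ * y₃) :
    !![(1 : ℝ), 1, 1; x, x₂, x₃; y, y₂, y₃].det = l₁ * !![(1 : ℝ), 1, 1; x₁, x₂, x₃; y₁, y₂, y₃].det ∧
    !![(1 : ℝ), 1, 1; x₁, x, x₃; y₁, y, y₃].det = l₂ * !![(1 : ℝ), 1, 1; x₁, x₂, x₃; y₁, y₂, y₃].det ∧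
    !![(1 : ℝ), 1, 1; x₁, x₂, x; y₁, y₂, y].det = l₃ * !![(1 : ℝ), 1, 1; x₁, x₂, x₃; y₁, y₂, y₃].det := by
  obtain rfl : l₁ = 1 - l₂ - l₃ := by linarith
  subst hx hy
  simp only [det_ones_eq_cross]
  refine ⟨?_, ?_, ?_⟩ <;> ring

lemma cross_sub_eq_mul_det {x₁ y₁ x₂ y₂ x₃ y₃ l₁ l₂ l₃ x y : ℝ}
    (hl : l₁ + l₂ + l₃ = 1) (hx : x = l₁ * x₁ + l₂ * x₂ + l₃ * x₃)
    (hy : y = l₁ * y₁ + l₂ * y₂ + l₃ * y₃) :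
    (x - x₂) * (y - y₃) - (y - y₂) * (x - x₃) = l₁ * !![(1 : ℝ), 1, 1; x₁, x₂, x₃; y₁, y₂, y₃].det ∧
    (x - x₃) * (y - y₁) - (y - y₃) * (x - x₁) = l₂ * !![(1 : ℝ), 1, 1; x₁, x₂, x₃; y₁, y₂, y₃].det ∧
    (x - x₁) * (y - y₂) - (y - y₁) * (x - x₂) = l₃ * !![(1 : ℝ), 1, 1; x₁, x₂, x₃; y₁, y₂, y₃].det := by
  obtain rfl : l₁ = 1 - l₂ - l₃ := by linarith
  subst hx hy
  simp only [det_ones_eq_cross]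
  refine ⟨?_, ?_, ?_⟩ <;> ring

lemma sqrt_sq_add_sq_pos_of_cross_ne_zero {u₁ u₂ v₁ v₂ : ℝ} (h : u₁ * v₂ - u₂ * v₁ ≠ 0) :
    0 < √(u₁ ^ 2 + u₂ ^ 2) := by
  refine Real.sqrt_pos.mpr (lt_of_le_of_ne (by positivity) fun h0 => h ?_)
  obtain ⟨rfl, rfl⟩ : u₁ = 0 ∧ u₂ = 0 := by
    constructor <;> nlinarith [sq_nonneg u₁, sq_nonneg u₂]
  ring

theorem inverse_problem_uniqueness_general
    (x1 y1 x2 y2 x3 y3 xs ys : ℝ)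
    (hccw : 0 < Matrix.det !![(1:ℝ), 1, 1; x1, x2, x3; y1, y2, y3])
    (hint : ∃ l1 l2 l3 : ℝ, 0 < l1 ∧ 0 < l2 ∧ 0 < l3 ∧ l1 + l2 + l3 = 1 ∧
        xs = l1*x1 + l2*x2 + l3*x3 ∧ ys = l1*y1 + l2*y2 + l3*y3)
    (m1 m2 m3 : ℝ)
    (hm3 : 0 < m3)
    (hstatx : m1*(xs-x1)/Real.sqrt ((xs-x1)^2 + (ys-y1)^2)
      + m2*(xs-x2)/Real.sqrt ((xs-x2)^2 + (ys-y2)^2)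
      + m3*(xs-x3)/Real.sqrt ((xs-x3)^2 + (ys-y3)^2) = 0)
    (hstaty : m1*(ys-y1)/Real.sqrt ((xs-x1)^2 + (ys-y1)^2)
      + m2*(ys-y2)/Real.sqrt ((xs-x2)^2 + (ys-y2)^2)
      + m3*(ys-y3)/Real.sqrt ((xs-x3)^2 + (ys-y3)^2) = 0)
    (m1s m2s m3s : ℝ)
    (hm1s : m1s = Real.sqrt ((xs-x1)^2 + (ys-y1)^2)
        * Matrix.det !![(1:ℝ), 1, 1; xs, x2, x3; ys, y2, y3])
    (hm2s : m2s = Real.sqrt ((xs-x2)^2 + (ys-y2)^2)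
        * Matrix.det !![(1:ℝ), 1, 1; x1, xs, x3; y1, ys, y3])
    (hm3s : m3s = Real.sqrt ((xs-x3)^2 + (ys-y3)^2)
        * Matrix.det !![(1:ℝ), 1, 1; x1, x2, xs; y1, y2, ys]) :
    ∃ t : ℝ, 0 < t ∧ m1 = t * m1s ∧ m2 = t * m2s ∧ m3 = t * m3s := by
  obtain ⟨l1, l2, l3, hl1, hl2, hl3, hsum, hx, hy⟩ := hint
  set D := Matrix.det !![(1:ℝ), 1, 1; x1, x2, x3; y1, y2, y3]
  obtain ⟨hdet1, hdet2, hdet3⟩ := det_subtriangle_eq_mul_det hsum hx hy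
  obtain ⟨hcross1, hcross2, hcross3⟩ := cross_sub_eq_mul_det hsum hx hy
  have hd1 := sqrt_sq_add_sq_pos_of_cross_ne_zero (by rw [hcross3]; positivity)
  have hd2 := sqrt_sq_add_sq_pos_of_cross_ne_zero (by rw [hcross1]; positivity)
  have hd3 := sqrt_sq_add_sq_pos_of_cross_ne_zero (by rw [hcross2]; positivity)
  obtain ⟨t, ht1, ht2, ht3⟩ := exists_proportional_of_cross_ne_zero (a' := l1) (b' := l2)
    (by rw [hcross3]; positivity) hl3.ne'
    (by simpa only [mul_div_right_comm] using hstatx)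
    (by simpa only [mul_div_right_comm] using hstaty)
    (by linear_combination xs * hsum + hx) (by linear_combination ys * hsum + hy)
  have ht : 0 < t := pos_of_mul_pos_left (ht3 ▸ by positivity) hl3.le
  have rescale {m d l : ℝ} (hd : 0 < d) (h : m / d = t * l) : m = t / D * (d * (l * D)) := by
    rw [div_eq_iff hd.ne'] at h
    field_simp
    linear_combination h
  refine ⟨t / D, div_pos ht hccw, ?_, ?_, ?_⟩
  · rw [hm1s, hdet1]; exact rescale hd1 ht1
  · rw [hm2s, hdet2]; exact rescale hd2 ht2
  · rw [hm3s, hdet3]; exact rescale hd3 ht3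

/-- Uniqueness of the inverse Fermat–Torricelli problem up to a positive
multiplier: any positive weights making `P*` a stationary point of `F` are a
positive multiple of the canonical weights `m_j*`. -/
theorem inverse_problem_uniqueness
    (x1 y1 x2 y2 x3 y3 xs ys : ℝ)
    (hccw : 0 < Matrix.det !![(1:ℝ), 1, 1; x1, x2, x3; y1, y2, y3])
    (hint : ∃ l1 l2 l3 : ℝ, 0 < l1 ∧ 0 < l2 ∧ 0 < l3 ∧ l1 + l2 + l3 = 1 ∧
        xs = l1*x1 + l2*x2 + l3*x3 ∧ ys = l1*y1 + l2*y2 + l3*y3)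
    (m1 m2 m3 : ℝ)
    (hm1 : 0 < m1) (hm2 : 0 < m2) (hm3 : 0 < m3)
    (hstatx : m1*(xs-x1)/Real.sqrt ((xs-x1)^2 + (ys-y1)^2)
      + m2*(xs-x2)/Real.sqrt ((xs-x2)^2 + (ys-y2)^2)
      + m3*(xs-x3)/Real.sqrt ((xs-x3)^2 + (ys-y3)^2) = 0)
    (hstaty : m1*(ys-y1)/Real.sqrt ((xs-x1)^2 + (ys-y1)^2)
      + m2*(ys-y2)/Real.sqrt ((xs-x2)^2 + (ys-y2)^2)
      + m3*(ys-y3)/Real.sqrt ((xs-x3)^2 + (ys-y3)^2) = 0)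
    (m1s m2s m3s : ℝ)
    (hm1s : m1s = Real.sqrt ((xs-x1)^2 + (ys-y1)^2)
        * Matrix.det !![(1:ℝ), 1, 1; xs, x2, x3; ys, y2, y3])
    (hm2s : m2s = Real.sqrt ((xs-x2)^2 + (ys-y2)^2)
        * Matrix.det !![(1:ℝ), 1, 1; x1, xs, x3; y1, ys, y3])
    (hm3s : m3s = Real.sqrt ((xs-x3)^2 + (ys-y3)^2)
        * Matrix.det !![(1:ℝ), 1, 1; x1, x2, xs; y1, y2, ys]) :
    ∃ t : ℝ, 0 < t ∧ m1 = t * m1s ∧ m2 = t * m2s ∧ m3 = t * m3s :=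
  inverse_problem_uniqueness_general x1 y1 x2 y2 x3 y3 xs ys hccw hint m1 m2 m3 hm3 hstatx hstaty
    m1s m2s m3s hm1s hm2s hm3s
end
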